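/- arXiv:2312.12158 — 3 statements merged into one kernel-verified Lean document; each statement's English description precedes it below -/
import Mathlib

section
/- For every odd n≥3, the looped n-cycle with its cyclic symmetry, (LC_n,ψ_n), is C_n-isostatic in ℝ². -/
open Finset
open scoped Classical

/-- A looped simple graph `G = (V, E, L)`: a finite vertex set `vs`, a finite set `es` of
edges (unordered pairs of distinct vertices of `vs`, no multiple edges) and a finite set `ls`
of loops, each loop `l` being incident to the vertex `loopAt l ∈ vs`. -/
structure LGraph (V L : Type) where
  vs : Finset V
  es : Finset (Sym2 V)
  ls : Finset L
  loopAt : L → V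
  es_not_diag : ∀ e ∈ es, ¬ e.IsDiag
  es_mem : ∀ e ∈ es, ∀ u ∈ e, u ∈ vs
  ls_mem : ∀ l ∈ ls, loopAt l ∈ vs

namespace LGraph

variable {V L : Type}

/-- `i_E(X)`: the number of edges induced by a vertex set `X`. -/
noncomputable def iE (H : LGraph V L) (X : Finset V) : ℕ :=
  (H.es.filter fun e => ∀ u ∈ e, u ∈ X).card

/-- `i_L(X)`: the number of loops induced by a vertex set `X`. -/
noncomputable def iL (H : LGraph V L) (X : Finset V) : ℕ :=
  (H.ls.filter fun l => H.loopAt l ∈ X).card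

/-- `i_{E+L}(X)`: the number of edges and loops induced by a vertex set `X`. -/
noncomputable def iEL (H : LGraph V L) (X : Finset V) : ℕ :=
  H.iE X + H.iL X

/-- `G` is sparse if `|E'| + |L'| ≤ 2|V'|` for all subgraphs and `|E'| ≤ 2|V'| - 3` for all
loopless subgraphs with at least one edge (formulated via induced counts). -/
def Sparse (H : LGraph V L) : Prop :=
  (∀ X ⊆ H.vs, H.iEL X ≤ 2 * X.card) ∧
  (∀ X ⊆ H.vs, 0 < H.iE X → H.iE X + 3 ≤ 2 * X.card)

/-- `G` is tight if it is sparse and `|E| + |L| = 2|V|`. -/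
def Tight (H : LGraph V L) : Prop :=
  H.Sparse ∧ H.es.card + H.ls.card = 2 * H.vs.card

/-- `k_X = 2|X| - i_{E+L}(X)`. -/
noncomputable def kval (H : LGraph V L) (X : Finset V) : ℤ :=
  2 * (X.card : ℤ) - (H.iEL X : ℤ)

/-- `k̄_X = 2|X| - i_E(X)`. -/
noncomputable def kbar (H : LGraph V L) (X : Finset V) : ℤ :=
  2 * (X.card : ℤ) - (H.iE X : ℤ)

/-- `d(A,B)`: the number of edges with one endpoint in `A \ B` and the other in `B \ A`. -/
noncomputable def dAB (H : LGraph V L) (A B : Finset V) : ℕ :=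
  (H.es.filter fun e =>
    ∃ a ∈ e, ∃ b ∈ e, a ≠ b ∧ (a ∈ A ∧ a ∉ B) ∧ (b ∈ B ∧ b ∉ A)).card

/-- `X` is `k`-critical if `i_{E+L}(X) = 2|X| - k`. -/
def kCrit (H : LGraph V L) (k : ℕ) (X : Finset V) : Prop :=
  X ⊆ H.vs ∧ H.iEL X + k = 2 * X.card

/-- `X` is `k`-edge-critical if `i_E(X) = 2|X| - k`. -/
def kEdgeCrit (H : LGraph V L) (k : ℕ) (X : Finset V) : Prop :=
  X ⊆ H.vs ∧ H.iE X + k = 2 * X.card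

/-- The edges incident to a vertex `v`. -/
noncomputable def edgesAt (H : LGraph V L) (v : V) : Finset (Sym2 V) :=
  H.es.filter fun e => v ∈ e

/-- The loops incident to a vertex `v`. -/
noncomputable def loopsAt (H : LGraph V L) (v : V) : Finset L :=
  H.ls.filter fun l => H.loopAt l = v

/-- The set `N(v)` of neighbours of a vertex `v`. -/
noncomputable def nbrs (H : LGraph V L) (v : V) : Finset V :=
  H.vs.filter fun u => s(v, u) ∈ H.es

end LGraph

/-- A `Γ`-symmetric structure on a looped simple graph: an action of `Γ` by automorphisms,
i.e. compatible permutations of vertices and loops preserving edge and loop incidences,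
such that a loop may only be fixed by elements of order at most 2. -/
structure LAction (Γ : Type) [Group Γ] {V L : Type} (H : LGraph V L) where
  toV : Γ →* Equiv.Perm V
  toL : Γ →* Equiv.Perm L
  vs_inv : ∀ (γ : Γ), ∀ u ∈ H.vs, toV γ u ∈ H.vs
  es_inv : ∀ (γ : Γ), ∀ e ∈ H.es, Sym2.map (toV γ) e ∈ H.es
  ls_inv : ∀ (γ : Γ), ∀ l ∈ H.ls, toL γ l ∈ H.ls
  loop_compat : ∀ (γ : Γ), ∀ l ∈ H.ls, H.loopAt (toL γ l) = toV γ (H.loopAt l)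
  loop_fix_order : ∀ (γ : Γ), ∀ l ∈ H.ls, toL γ l = l → γ * γ = 1

section Symmetry

variable {Γ V L : Type} [Group Γ] {H : LGraph V L}

/-- The vertices fixed by the group element `γ`. -/
noncomputable def fixedV (act : LAction Γ H) (γ : Γ) : Finset V :=
  H.vs.filter fun u => act.toV γ u = u

/-- The edges fixed by the group element `γ`. -/
noncomputable def fixedE (act : LAction Γ H) (γ : Γ) : Finset (Sym2 V) :=
  H.es.filter fun e => Sym2.map (act.toV γ) e = e

/-- The loops fixed by the group element `γ`. -/
noncomputable def fixedL (act : LAction Γ H) (γ : Γ) : Finset L :=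
  H.ls.filter fun l => act.toL γ l = l

/-- No vertex, edge or loop is fixed by any non-identity element. -/
def NoFixAll (act : LAction Γ H) : Prop :=
  ∀ γ : Γ, γ ≠ 1 → fixedV act γ = ∅ ∧ fixedE act γ = ∅ ∧ fixedL act γ = ∅

/-- The fixed-element condition for the group `C₂`: either nothing is fixed by the
non-trivial element, or exactly one vertex, no edge and exactly two loops are fixed. -/
def C2Cond (act : LAction Γ H) : Prop :=
  NoFixAll act ∨
    ∀ γ : Γ, γ ≠ 1 →
      (fixedV act γ).card = 1 ∧ fixedE act γ = ∅ ∧ (fixedL act γ).card = 2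

/-- The fixed-element condition for the group `C₄` with generator `g`. -/
def C4Cond (act : LAction Γ H) (g : Γ) : Prop :=
  NoFixAll act ∨
    ((H.vs.filter fun u => ∀ γ : Γ, act.toV γ u = u).card = 1 ∧
      (∀ γ : Γ, γ ≠ 1 → fixedE act γ = ∅) ∧
      (fixedL act (g * g)).card = 2 ∧
      fixedL act g = ∅ ∧ fixedL act (g * g * g) = ∅)

/-- `(G,φ)` is `C₂`-tight. -/
def C2Tight (act : LAction Γ H) : Prop :=
  H.Tight ∧ C2Cond act

/-- `(G,φ)` is `Cₙ`-tight for `n ≥ 3`, `n ≠ 4`: tight and nothing is fixed by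
non-identity elements. -/
def CnTightOdd (act : LAction Γ H) : Prop :=
  H.Tight ∧ NoFixAll act

/-- `(G,φ)` is `Cₙ`-tight, where `g` is a generator of the cyclic group `Γ` of order `n`. -/
def CnTightFull (n : ℕ) (act : LAction Γ H) (g : Γ) : Prop :=
  H.Tight ∧ (n = 2 → C2Cond act) ∧ (n = 4 → C4Cond act g) ∧
    (n ≠ 2 → n ≠ 4 → NoFixAll act)

end Symmetry
section Framework

variable {Γ V L : Type} [Group Γ]

/-- The rigidity matrix `R(G,p,q)` of a linearly constrained framework in the plane:
rows are indexed by edges and loops, columns by (vertex, coordinate) pairs.  The row of an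
edge `uv` has `p u - p v` in the two columns of `u` and `p v - p u` in the two columns of
`v`; the row of a loop `l` has `q l` in the two columns of the vertex incident to `l`. -/
noncomputable def rigidityMatrix (H : LGraph V L)
    (p : V → Fin 2 → ℝ) (q : L → Fin 2 → ℝ) :
    Matrix (↥H.es ⊕ ↥H.ls) (↥H.vs × Fin 2) ℝ :=
  fun r c =>
    Sum.elim
      (fun e : ↥H.es =>
        Sym2.lift
          ⟨fun a b =>
            (if (c.1 : V) = a then p a c.2 - p b c.2 else 0) +
            (if (c.1 : V) = b then p b c.2 - p a c.2 else 0),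
           fun a b => add_comm _ _⟩ (e : Sym2 V))
      (fun l : ↥H.ls => if (c.1 : V) = H.loopAt (l : L) then q (l : L) c.2 else 0) r

/-- A linearly constrained framework is isostatic if it is infinitesimally rigid
(`rank R(G,p,q) = 2|V|`) and independent (the rows of `R(G,p,q)` are linearly
independent). -/
def IsIsostatic (H : LGraph V L) (p : V → Fin 2 → ℝ) (q : L → Fin 2 → ℝ) : Prop :=
  (rigidityMatrix H p q).rank = 2 * H.vs.card ∧
    LinearIndependent ℝ (fun r => rigidityMatrix H p q r)

/-- The framework `(G,p,q)` is `Γ`-symmetric with respect to the action `act` (i.e. `φ`)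
and the orthogonal representation `τ`. -/
def IsSymFramework {H : LGraph V L} (act : LAction Γ H)
    (τ : Γ →* Matrix (Fin 2) (Fin 2) ℝ)
    (p : V → Fin 2 → ℝ) (q : L → Fin 2 → ℝ) : Prop :=
  (∀ (γ : Γ), ∀ v ∈ H.vs, (τ γ).mulVec (p v) = p (act.toV γ v)) ∧
  (∀ (γ : Γ), orderOf γ ≠ 2 → ∀ l ∈ H.ls, (τ γ).mulVec (q l) = q (act.toL γ l)) ∧
  (∀ (γ : Γ), τ γ = -1 → ∀ l ∈ H.ls, act.toL γ l = l →
      (τ γ).mulVec (q l) = - q (act.toL γ l)) ∧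
  (∀ (γ : Γ), (τ γ).det = -1 → ∀ l ∈ H.ls, act.toL γ l = l →
      ((τ γ).mulVec (q l) = q (act.toL γ l) ∨ (τ γ).mulVec (q l) = - q (act.toL γ l)))

/-- `(G,φ)` is `τ(Γ)`-isostatic: some `Γ`-symmetric framework `(G,p,q)` is isostatic. -/
def IsTGIsostatic {H : LGraph V L} (act : LAction Γ H)
    (τ : Γ →* Matrix (Fin 2) (Fin 2) ℝ) : Prop :=
  ∃ (p : V → Fin 2 → ℝ) (q : L → Fin 2 → ℝ),
    Set.InjOn p ↑H.vs ∧ IsSymFramework act τ p q ∧ IsIsostatic H p q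

/-- The matrix of the rotation `cₙ` by `2π/n` about the origin. -/
noncomputable def rotMat (n : ℕ) : Matrix (Fin 2) (Fin 2) ℝ :=
  !![Real.cos (2 * Real.pi / n), - Real.sin (2 * Real.pi / n);
     Real.sin (2 * Real.pi / n), Real.cos (2 * Real.pi / n)]

end Framework

/-! Place the vertex `γ v₀` at `τ γ e₁` on the unit circle and let its loop be tangent to the
circle there. A loop row then forces the velocity of its vertex to be radial, `s γ` times its
position, and since consecutive vertices are distinct points of the circle, the edge row between
them forces `s (g γ) = - s γ`. Around a cycle of odd length this gives `s = 0`, so the framework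
is infinitesimally rigid; as `|E| + |L| = 2|V|`, its square rigidity matrix is then also
independent. -/

open Matrix Real Function

noncomputable def rot (a : ℝ) : Matrix (Fin 2) (Fin 2) ℝ :=
  !![cos a, -sin a; sin a, cos a]

lemma rotMat_eq_rot (n : ℕ) : rotMat n = rot (2 * π / n) := rfl

lemma rot_mul_rot (a b : ℝ) : rot a * rot b = rot (a + b) := by
  ext i j
  fin_cases i <;> fin_cases j <;>
    simp [rot, Matrix.mul_apply, Fin.sum_univ_two, cos_add, sin_add] <;> ring

lemma rot_pow (a : ℝ) (k : ℕ) : rot a ^ k = rot (k * a) := by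
  induction k with
  | zero => ext i j; fin_cases i <;> fin_cases j <;> simp [rot]
  | succ k ih => rw [pow_succ, ih, rot_mul_rot]; push_cast; ring_nf

lemma rot_mulVec_e₁ (a : ℝ) : rot a *ᵥ ![1, 0] = ![cos a, sin a] := by
  ext i; fin_cases i <;> simp [rot]

lemma rot_mulVec_e₂ (a : ℝ) : rot a *ᵥ ![0, -1] = ![sin a, -cos a] := by
  ext i; fin_cases i <;> simp [rot]

lemma eq_smul_of_dotProduct_normal_eq_zero {a : ℝ} {m : Fin 2 → ℝ}
    (h : ![sin a, -cos a] ⬝ᵥ m = 0) : m = (![cos a, sin a] ⬝ᵥ m) • ![cos a, sin a] := by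
  simp only [dotProduct, Fin.sum_univ_two, Matrix.cons_val_zero, Matrix.cons_val_one] at h ⊢
  ext i; fin_cases i
  · simp only [Fin.zero_eta, Pi.smul_apply, cons_val_zero, smul_eq_mul]
    linear_combination sin a * h - m 0 * sin_sq_add_cos_sq a
  · simp only [Fin.mk_one, Pi.smul_apply, cons_val_one, cons_val_fin_one, smul_eq_mul]
    linear_combination -cos a * h - m 1 * sin_sq_add_cos_sq a

lemma dotProduct_add_dotProduct_eq_zero_of_chord {a b : ℝ} {m m' : Fin 2 → ℝ}
    (hab : cos (b - a) ≠ 1) (h : ![sin a, -cos a] ⬝ᵥ m = 0) (h' : ![sin b, -cos b] ⬝ᵥ m' = 0)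
    (hchord : (![cos a, sin a] - ![cos b, sin b]) ⬝ᵥ (m - m') = 0) :
    ![cos a, sin a] ⬝ᵥ m + ![cos b, sin b] ⬝ᵥ m' = 0 := by
  have hm := eq_smul_of_dotProduct_normal_eq_zero h
  have hm' := eq_smul_of_dotProduct_normal_eq_zero h'
  set s := ![cos a, sin a] ⬝ᵥ m
  set s' := ![cos b, sin b] ⬝ᵥ m'
  rw [hm, hm'] at hchord
  -- for unit vectors `u, u'`: `(u - u') ⬝ᵥ (s • u - s' • u') = (s + s') * (1 - u ⬝ᵥ u')`
  have key : (s + s') * (1 - cos (b - a)) = 0 := by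
    simp only [dotProduct, Fin.sum_univ_two, Pi.sub_apply, smul_cons, smul_eq_mul,
      Matrix.smul_empty, cons_val_zero, cons_val_one, cons_val_fin_one] at hchord
    rw [cos_sub]
    linear_combination hchord - s * sin_sq_add_cos_sq a - s' * sin_sq_add_cos_sq b
  exact (mul_eq_zero.mp key).resolve_right (sub_ne_zero.mpr (Ne.symm hab))

lemma eq_zero_of_apply_mul_eq_neg {M G : Type*} [Monoid M] [AddGroup G] [IsAddTorsionFree G]
    {g : M} (hg : Odd (orderOf g)) {s : M → G} (h : ∀ x, s (g * x) = -s x) (x : M) :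
    s x = 0 := by
  have hpow : ∀ k : ℕ, s (g ^ k * x) = (-1 : ℤ) ^ k • s x := by
    intro k
    induction k with
    | zero => simp
    | succ k ih => rw [pow_succ', mul_assoc, h, ih, pow_succ, mul_neg_one, neg_zsmul]
  have := hpow (orderOf g)
  rw [pow_orderOf_eq_one, one_mul, hg.neg_one_pow, neg_one_zsmul] at this
  exact self_eq_neg.mp this

lemma eq_zero_of_cos_mul_two_pi_div_eq_one {k n : ℕ} (hk : k < n)
    (h : cos (k * (2 * π / n)) = 1) : k = 0 := by
  have hn : (0 : ℝ) < n := by exact_mod_cast (Nat.zero_le k).trans_lt hk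
  have hθ : 0 < 2 * π / n := div_pos Real.two_pi_pos hn
  have hlt : k * (2 * π / n) < 2 * π := by
    rw [mul_div_assoc', div_lt_iff₀ hn, mul_comm (2 * π)]
    exact mul_lt_mul_of_pos_right (Nat.cast_lt.mpr hk) Real.two_pi_pos
  have h0 := (cos_eq_one_iff_of_lt_of_lt (by nlinarith [pi_pos]) hlt).mp h
  exact_mod_cast (mul_eq_zero.mp h0).resolve_right hθ.ne'

theorem Matrix.rank_eq_and_linearIndependent_row_of_injective {m n K : Type*} [Fintype m]
    [Fintype n] [Field K] {M : Matrix m n K} (hcard : Fintype.card m = Fintype.card n)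
    (hM : Injective M.mulVec) : M.rank = Fintype.card n ∧ LinearIndependent K M.row := by
  have hrank : M.rank = Fintype.card n := by
    rw [rank_eq_finrank_span_cols, finrank_span_eq_card (mulVec_injective_iff.mp hM)]
  refine ⟨hrank, linearIndependent_iff_card_eq_finrank_span.mpr ?_⟩
  rw [Set.finrank, ← rank_eq_finrank_span_row, hrank, hcard]

section RigidityMatrix

variable {Γ V L : Type} [Group Γ] {H : LGraph V L}

lemma rigidityMatrix_mulVec_inr (p : V → Fin 2 → ℝ) (q : L → Fin 2 → ℝ)
    (m : ↥H.vs × Fin 2 → ℝ) {l : ↥H.ls} {v : ↥H.vs} (hv : H.loopAt l = v) :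
    (rigidityMatrix H p q *ᵥ m) (Sum.inr l) = q l ⬝ᵥ curry m v := by
  have hv' (x : ↥H.vs) : (x : V) = H.loopAt l ↔ x = v := hv ▸ Subtype.coe_inj
  simp only [rigidityMatrix, mulVec, dotProduct, Fintype.sum_prod_type, Sum.elim_inr, hv']
  simp [Fin.sum_univ_two]

lemma rigidityMatrix_mulVec_inl (p : V → Fin 2 → ℝ) (q : L → Fin 2 → ℝ)
    (m : ↥H.vs × Fin 2 → ℝ) {a b : V} (ha : a ∈ H.vs) (hb : b ∈ H.vs) (he : s(a, b) ∈ H.es) :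
    (rigidityMatrix H p q *ᵥ m) (Sum.inl ⟨_, he⟩) =
      (p a - p b) ⬝ᵥ (curry m ⟨a, ha⟩ - curry m ⟨b, hb⟩) := by
  have ha' (x : ↥H.vs) : (x : V) = a ↔ x = ⟨a, ha⟩ := Subtype.ext_iff (a2 := ⟨a, ha⟩) |>.symm
  have hb' (x : ↥H.vs) : (x : V) = b ↔ x = ⟨b, hb⟩ := Subtype.ext_iff (a2 := ⟨b, hb⟩) |>.symm
  simp only [rigidityMatrix, mulVec, dotProduct, Fintype.sum_prod_type, Sum.elim_inl, Sym2.lift_mk,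
    ha', hb']
  simp only [Fin.sum_univ_two, add_mul, ite_mul, zero_mul, sum_add_distrib, sum_ite_irrel,
    sum_const_zero, sum_ite_eq', mem_univ, if_true, Pi.sub_apply, curry_apply]
  ring

lemma isIsostatic_of_mulVec_eq_zero {p : V → Fin 2 → ℝ} {q : L → Fin 2 → ℝ}
    (hcount : H.es.card + H.ls.card = 2 * H.vs.card)
    (hrigid : ∀ m, rigidityMatrix H p q *ᵥ m = 0 → m = 0) : IsIsostatic H p q := by
  have hcard : Fintype.card (↥H.es ⊕ ↥H.ls) = Fintype.card (↥H.vs × Fin 2) := by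
    simp [hcount, mul_comm]
  obtain ⟨hrank, hrows⟩ := rank_eq_and_linearIndependent_row_of_injective hcard
    ((injective_iff_map_eq_zero (mulVecLin (rigidityMatrix H p q))).mpr hrigid)
  exact ⟨by simpa [mul_comm] using hrank, hrows⟩

lemma isSymFramework_of_equivariant (act : LAction Γ H) (τ : Γ →* Matrix (Fin 2) (Fin 2) ℝ)
    {p : V → Fin 2 → ℝ} {q : L → Fin 2 → ℝ}
    (hp : ∀ γ, ∀ v ∈ H.vs, τ γ *ᵥ p v = p (act.toV γ v))
    (hq : ∀ γ, ∀ l ∈ H.ls, τ γ *ᵥ q l = q (act.toL γ l)) : IsSymFramework act τ p q :=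
  ⟨hp, fun γ _ => hq γ, fun γ hγ l _ hfix => by rw [hγ, hfix, neg_mulVec, one_mulVec],
    fun γ _ l hl _ => .inl (hq γ l hl)⟩

end RigidityMatrix

section OrbitFramework

variable {Γ V L : Type} [Group Γ]

noncomputable def orbitExtend (σ : Γ →* Equiv.Perm V) (v₀ : V)
    (τ : Γ →* Matrix (Fin 2) (Fin 2) ℝ) (x : Fin 2 → ℝ) : V → Fin 2 → ℝ :=
  extend (fun γ => σ γ v₀) (fun γ => τ γ *ᵥ x) 0

noncomputable def cyclePos {H : LGraph V L} (act : LAction Γ H) (v₀ : V)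
    (τ : Γ →* Matrix (Fin 2) (Fin 2) ℝ) : V → Fin 2 → ℝ :=
  orbitExtend act.toV v₀ τ ![1, 0]

noncomputable def cycleLoopDir {H : LGraph V L} (act : LAction Γ H) (v₀ : V)
    (τ : Γ →* Matrix (Fin 2) (Fin 2) ℝ) : L → Fin 2 → ℝ :=
  orbitExtend act.toV v₀ τ ![0, -1] ∘ H.loopAt

variable {σ : Γ →* Equiv.Perm V} {v₀ : V} (τ : Γ →* Matrix (Fin 2) (Fin 2) ℝ)

lemma orbitExtend_apply (hfree : Injective fun γ => σ γ v₀) (x : Fin 2 → ℝ) (γ : Γ) :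
    orbitExtend σ v₀ τ x (σ γ v₀) = τ γ *ᵥ x :=
  hfree.extend_apply _ _ γ

lemma mulVec_orbitExtend (hfree : Injective fun γ => σ γ v₀) (x : Fin 2 → ℝ) (γ δ : Γ) :
    τ γ *ᵥ orbitExtend σ v₀ τ x (σ δ v₀) = orbitExtend σ v₀ τ x (σ γ (σ δ v₀)) := by
  rw [← Equiv.Perm.mul_apply, ← map_mul, orbitExtend_apply τ hfree, orbitExtend_apply τ hfree,
    mulVec_mulVec, map_mul]

variable {H : LGraph V L} {act : LAction Γ H}

lemma isSymFramework_cycle (hfree : Injective fun γ => act.toV γ v₀)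
    (hvs : ∀ v ∈ H.vs, ∃ γ, act.toV γ v₀ = v) :
    IsSymFramework act τ (cyclePos act v₀ τ) (cycleLoopDir act v₀ τ) := by
  refine isSymFramework_of_equivariant act τ (fun γ v hv => ?_) (fun γ l hl => ?_)
  · obtain ⟨δ, rfl⟩ := hvs v hv
    exact mulVec_orbitExtend τ hfree _ γ δ
  · obtain ⟨δ, hδ⟩ := hvs _ (H.ls_mem l hl)
    simp only [cycleLoopDir, Function.comp_apply, act.loop_compat γ l hl, ← hδ]
    exact mulVec_orbitExtend τ hfree _ γ δ

lemma eq_zero_of_rigidityMatrix_cycle_mulVec_eq_zero {g : Γ} {θ : ℝ}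
    (hodd : Odd (orderOf g)) (hθ : cos θ ≠ 1) (hτg : τ g = rot θ)
    (hrot : ∀ γ, ∃ a, τ γ = rot a) (hfree : Injective fun γ => act.toV γ v₀)
    (hvs : ∀ v ∈ H.vs, ∃ γ, act.toV γ v₀ = v)
    (hes : ∀ γ, s(act.toV γ v₀, act.toV (g * γ) v₀) ∈ H.es)
    (hls : ∀ γ, ∃ l ∈ H.ls, H.loopAt l = act.toV γ v₀) (m : ↥H.vs × Fin 2 → ℝ)
    (hm : rigidityMatrix H (cyclePos act v₀ τ) (cycleLoopDir act v₀ τ) *ᵥ m = 0) : m = 0 := by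
  have hmem γ : act.toV γ v₀ ∈ H.vs := H.es_mem _ (hes γ) _ (Sym2.mem_mk_left _ _)
  set w : Γ → Fin 2 → ℝ := fun γ => curry m ⟨act.toV γ v₀, hmem γ⟩
  have hpos γ a (ha : τ γ = rot a) : cyclePos act v₀ τ (act.toV γ v₀) = ![cos a, sin a] := by
    rw [cyclePos, orbitExtend_apply τ hfree, ha, rot_mulVec_e₁]
  have hrot_mul γ a (ha : τ γ = rot a) : τ (g * γ) = rot (θ + a) := by
    rw [map_mul, hτg, ha, rot_mul_rot]
  have hnormal γ a (ha : τ γ = rot a) : ![sin a, -cos a] ⬝ᵥ w γ = 0 := by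
    obtain ⟨l, hl, hla⟩ := hls γ
    have h := congrFun hm (Sum.inr ⟨l, hl⟩)
    rwa [rigidityMatrix_mulVec_inr _ _ m (v := ⟨_, hmem γ⟩) hla, cycleLoopDir,
      Function.comp_apply, hla, orbitExtend_apply τ hfree, ha, rot_mulVec_e₂] at h
  have hchord γ a (ha : τ γ = rot a) :
      (![cos a, sin a] - ![cos (θ + a), sin (θ + a)]) ⬝ᵥ (w γ - w (g * γ)) = 0 := by
    have h := congrFun hm (Sum.inl ⟨_, hes γ⟩)
    rwa [rigidityMatrix_mulVec_inl _ _ m (hmem γ) (hmem (g * γ)), hpos γ a ha,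
      hpos _ _ (hrot_mul γ a ha)] at h
  set s : Γ → ℝ := fun γ => cyclePos act v₀ τ (act.toV γ v₀) ⬝ᵥ w γ
  have hs γ : s (g * γ) = -s γ := by
    obtain ⟨a, ha⟩ := hrot γ
    have hga := hrot_mul γ a ha
    simp only [s, hpos γ a ha, hpos _ _ hga]
    refine eq_neg_of_add_eq_zero_right (dotProduct_add_dotProduct_eq_zero_of_chord ?_
      (hnormal γ a ha) (hnormal _ _ hga) (hchord γ a ha))
    rwa [add_sub_cancel_right]
  have hw γ : w γ = 0 := by
    obtain ⟨a, ha⟩ := hrot γ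
    have h0 := eq_zero_of_apply_mul_eq_neg hodd hs γ
    simp only [s, hpos γ a ha] at h0
    rw [eq_smul_of_dotProduct_normal_eq_zero (hnormal γ a ha), h0, zero_smul]
  funext ⟨⟨v, hv⟩, i⟩
  obtain ⟨γ, rfl⟩ := hvs v hv
  exact congrFun (hw γ) i

lemma injOn_cyclePos (hfree : Injective fun γ => act.toV γ v₀)
    (hvs : ∀ v ∈ H.vs, ∃ γ, act.toV γ v₀ = v)
    (hfix : ∀ δ, τ δ *ᵥ ![1, 0] = ![1, 0] → δ = 1) : Set.InjOn (cyclePos act v₀ τ) H.vs := by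
  rintro _ hv _ hv' h
  obtain ⟨γ, rfl⟩ := hvs _ hv
  obtain ⟨γ', rfl⟩ := hvs _ hv'
  simp only [cyclePos, orbitExtend_apply τ hfree] at h
  have : γ'⁻¹ * γ = 1 := hfix _ (by
    rw [map_mul, ← mulVec_mulVec, h, mulVec_mulVec, ← map_mul, inv_mul_cancel, map_one,
      one_mulVec])
  rw [inv_mul_eq_one.mp this]

lemma injective_orbit_edge (hfree : Injective fun γ => σ γ v₀) {g : Γ} (hg : g * g ≠ 1) :
    Injective fun γ => s(σ γ v₀, σ (g * γ) v₀) := by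
  intro γ γ' h
  rcases Sym2.eq_iff.mp h with ⟨h₁, -⟩ | ⟨h₁, h₂⟩
  · exact hfree h₁
  · have h₁ : γ = g * γ' := hfree h₁
    have h₂ : g * γ = γ' := hfree h₂
    refine absurd (mul_right_cancel (b := γ) ?_) hg
    rw [mul_assoc, h₂, ← h₁, one_mul]

lemma LGraph.card_ls_eq_card_vs (h : ∀ v ∈ H.vs, (H.loopsAt v).card = 1) :
    H.ls.card = H.vs.card := by
  rw [card_eq_sum_card_fiberwise H.ls_mem, card_eq_sum_ones H.vs]
  exact sum_congr rfl h

lemma card_es_add_card_ls_of_cycle [Fintype Γ] {g : Γ} (hfree : Injective fun γ => act.toV γ v₀)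
    (hg : g * g ≠ 1) (hvs : H.vs = image (fun γ => act.toV γ v₀) univ)
    (hes : H.es = image (fun γ => s(act.toV γ v₀, act.toV (g * γ) v₀)) univ)
    (hls : ∀ v ∈ H.vs, (H.loopsAt v).card = 1) : H.es.card + H.ls.card = 2 * H.vs.card := by
  rw [LGraph.card_ls_eq_card_vs hls, hvs, hes, card_image_of_injective _ hfree,
    card_image_of_injective _ (injective_orbit_edge hfree hg)]
  ring

end OrbitFramework

section CyclicRotation

variable {Γ : Type} [Group Γ] {τ : Γ →* Matrix (Fin 2) (Fin 2) ℝ} {g : Γ}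

lemma map_pow_of_eq_rotMat {n : ℕ} (hτg : τ g = rotMat n) (k : ℕ) :
    τ (g ^ k) = rot (k * (2 * π / n)) := by
  rw [map_pow, hτg, rotMat_eq_rot, rot_pow]

lemma eq_one_of_mulVec_e₁_eq [Finite Γ] (hgen : ∀ x : Γ, x ∈ Subgroup.zpowers g)
    (hτg : τ g = rotMat (orderOf g)) {δ : Γ} (h : τ δ *ᵥ ![1, 0] = ![1, 0]) : δ = 1 := by
  obtain ⟨k, hk, rfl⟩ : ∃ k < orderOf g, g ^ k = δ := by
    simpa using mem_zpowers_iff_mem_range_orderOf.mp (hgen δ)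
  rw [map_pow_of_eq_rotMat hτg, rot_mulVec_e₁] at h
  rw [eq_zero_of_cos_mul_two_pi_div_eq_one hk (by simpa using congrFun h 0), pow_zero]

end CyclicRotation

theorem statement7_general {Γ V L : Type} [Group Γ] [Fintype Γ] (n : ℕ) (hn : 3 ≤ n) (hodd : Odd n)
    (g : Γ) (hord : orderOf g = n) (hgen : ∀ x : Γ, x ∈ Subgroup.zpowers g)
    (H : LGraph V L) (act : LAction Γ H) (v₀ : V)
    (hfree : Function.Injective (fun γ : Γ => act.toV γ v₀))
    (hvs : H.vs = Finset.image (fun γ : Γ => act.toV γ v₀) Finset.univ)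
    (hes : H.es = Finset.image (fun γ : Γ => s(act.toV γ v₀, act.toV (g * γ) v₀)) Finset.univ)
    (hls : ∀ v ∈ H.vs, (H.ls.filter fun l => H.loopAt l = v).card = 1)
    (τ : Γ →* Matrix (Fin 2) (Fin 2) ℝ)
    (hτg : τ g = rotMat n) :
    IsTGIsostatic act τ := by
  have hvs' : ∀ v ∈ H.vs, ∃ γ, act.toV γ v₀ = v := by simp [hvs]
  have hes' γ : s(act.toV γ v₀, act.toV (g * γ) v₀) ∈ H.es := by
    rw [hes]; exact mem_image_of_mem _ (mem_univ γ)
  have hls' γ : ∃ l ∈ H.ls, H.loopAt l = act.toV γ v₀ := by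
    simpa [Finset.card_pos, Finset.Nonempty] using (hls _ (by simp [hvs])).ge
  have hrot γ : ∃ a, τ γ = rot a := by
    obtain ⟨k, rfl⟩ := (mem_powers_iff_mem_zpowers.mpr (hgen γ) : γ ∈ Submonoid.powers g)
    exact ⟨_, map_pow_of_eq_rotMat hτg k⟩
  have hθ : cos (2 * π / n) ≠ 1 := fun h => one_ne_zero <|
    eq_zero_of_cos_mul_two_pi_div_eq_one (k := 1) (n := n) (by omega) (by simpa using h)
  have hg2 : g * g ≠ 1 := by
    rw [← pow_two]; exact pow_ne_one_of_lt_orderOf two_ne_zero (by omega)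
  exact ⟨cyclePos act v₀ τ, cycleLoopDir act v₀ τ,
    injOn_cyclePos τ hfree hvs' fun _ => eq_one_of_mulVec_e₁_eq hgen (hord ▸ hτg),
    isSymFramework_cycle τ hfree hvs',
    isIsostatic_of_mulVec_eq_zero (card_es_add_card_ls_of_cycle hfree hg2 hvs hes hls)
      (eq_zero_of_rigidityMatrix_cycle_mulVec_eq_zero τ (hord ▸ hodd) hθ
        (by rw [hτg, rotMat_eq_rot]) hrot hfree hvs' hes' hls')⟩

/-- for every odd `n ≥ 3`, the looped `n`-cycle with its cyclic symmetry,
`(LCₙ, ψₙ)`, is `Cₙ`-isostatic in the plane. -/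
theorem statement7 {Γ V L : Type} [Group Γ] [Fintype Γ] (n : ℕ) (hn : 3 ≤ n) (hodd : Odd n)
    (g : Γ) (hord : orderOf g = n) (hgen : ∀ x : Γ, x ∈ Subgroup.zpowers g)
    (H : LGraph V L) (act : LAction Γ H) (v₀ : V) (hv₀ : v₀ ∈ H.vs)
    (hfree : Function.Injective (fun γ : Γ => act.toV γ v₀))
    (hvs : H.vs = Finset.image (fun γ : Γ => act.toV γ v₀) Finset.univ)
    (hes : H.es = Finset.image (fun γ : Γ => s(act.toV γ v₀, act.toV (g * γ) v₀)) Finset.univ)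
    (hls : ∀ v ∈ H.vs, (H.ls.filter fun l => H.loopAt l = v).card = 1)
    (τ : Γ →* Matrix (Fin 2) (Fin 2) ℝ)
    (hτO : ∀ γ : Γ, τ γ ∈ Matrix.orthogonalGroup (Fin 2) ℝ)
    (hτg : τ g = rotMat n) :
    IsTGIsostatic act τ :=
  statement7_general n hn hodd g hord hgen H act v₀ hfree hvs hes hls τ hτg
end

section
/- Let (G,φ) be a C_2-tight graph containing a vertex v that is incident to exactly two elements of E∪L, i.e. either two edges, or one edge and one loop. Let v'=φ(γ)v for the non-trivial element γ. Then the graph G∖{v,v'} obtained by deleting v and v' together with all incident edges and loops, with the induced ℤ/2ℤ-action, is C_2-tight. -/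
open Finset
open scoped Classical

/-- in a `C₂`-tight graph, deleting the orbit `{v, v'}` of a vertex `v`
incident to exactly two elements of `E ∪ L` gives a `C₂`-tight graph with the induced
action. -/
theorem statement9 {Γ V L : Type} [Group Γ] (g : Γ)
    (hg1 : g ≠ 1) (hgg : g * g = 1) (hall : ∀ x : Γ, x = 1 ∨ x = g)
    (H : LGraph V L) (act : LAction Γ H) (htight : C2Tight act)
    (v : V) (hv : v ∈ H.vs)
    (hdeg : ((H.edgesAt v).card = 2 ∧ (H.loopsAt v).card = 0) ∨
            ((H.edgesAt v).card = 1 ∧ (H.loopsAt v).card = 1)) :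
    ∃ H' : LGraph V L,
      H'.vs = H.vs \ {v, act.toV g v} ∧
      H'.es = (H.es.filter fun e => ∀ u ∈ e, u ≠ v ∧ u ≠ act.toV g v) ∧
      H'.ls = (H.ls.filter fun l => H.loopAt l ≠ v ∧ H.loopAt l ≠ act.toV g v) ∧
      (∀ l ∈ H'.ls, H'.loopAt l = H.loopAt l) ∧
      ∃ act' : LAction Γ H', act'.toV = act.toV ∧ act'.toL = act.toL ∧ C2Tight act' := by
  classical
  obtain ⟨⟨⟨hsp1, hsp2⟩, hcount⟩, hc2⟩ := htight
  have hinvV : ∀ u : V, act.toV g (act.toV g u) = u := by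
    intro u
    have h : act.toV (g * g) u = u := by rw [hgg]; simp
    rw [map_mul] at h; exact h
  have hinvL : ∀ l : L, act.toL g (act.toL g l) = l := by
    intro l
    have h : act.toL (g * g) l = l := by rw [hgg]; simp
    rw [map_mul] at h; exact h
  set v' := act.toV g v with hv'def
  have hv'vs : v' ∈ H.vs := act.vs_inv g v hv
  have hlv : (H.loopsAt v).card ≤ 1 := by rcases hdeg with ⟨_, h⟩ | ⟨_, h⟩ <;> omega
  have hfixE : fixedE act g = ∅ := by
    rcases hc2 with h | h
    · exact (h g hg1).2.1
    · exact (h g hg1).2.1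
  have hfixloop : ∀ l ∈ fixedL act g, H.loopAt l ∈ fixedV act g := by
    intro l hl
    rw [fixedL, Finset.mem_filter] at hl
    rw [fixedV, Finset.mem_filter]
    refine ⟨H.ls_mem l hl.1, ?_⟩
    have h := act.loop_compat g l hl.1
    rw [hl.2] at h
    exact h.symm
  have hfixVv : v ∉ fixedV act g := by
    intro hmem
    rcases hc2 with h | h
    · rw [(h g hg1).1] at hmem; exact absurd hmem (Finset.notMem_empty v)
    · obtain ⟨h1, _, h3⟩ := h g hg1
      obtain ⟨w, hw⟩ := Finset.card_eq_one.mp h1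
      have hwv : w = v := by rw [hw] at hmem; exact (Finset.mem_singleton.mp hmem).symm
      have hsub : fixedL act g ⊆ H.loopsAt v := by
        intro l hl
        have hlf := hfixloop l hl
        rw [hw, Finset.mem_singleton] at hlf
        rw [fixedL, Finset.mem_filter] at hl
        rw [LGraph.loopsAt, Finset.mem_filter]
        exact ⟨hl.1, by rw [hlf, hwv]⟩
      have := Finset.card_le_card hsub
      omega
  have hvv' : v ≠ v' := by
    intro h
    exact hfixVv (Finset.mem_filter.mpr ⟨hv, h.symm⟩)
  have hfixVv' : v' ∉ fixedV act g := by
    intro hmem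
    rw [fixedV, Finset.mem_filter] at hmem
    have h : act.toV g v' = v := hinvV v
    exact hvv' (h.symm.trans hmem.2)
  have hnoedge : s(v, v') ∉ H.es := by
    intro h
    have hfix : Sym2.map (act.toV g) s(v, v') = s(v, v') := by
      rw [Sym2.map_pair_eq]
      have h2 : act.toV g v' = v := hinvV v
      rw [h2, ← hv'def, Sym2.eq_swap]
    have hmem : s(v, v') ∈ fixedE act g := Finset.mem_filter.mpr ⟨h, hfix⟩
    rw [hfixE] at hmem
    exact absurd hmem (Finset.notMem_empty _)
  have hinvS : ∀ z : Sym2 V, Sym2.map (act.toV g) (Sym2.map (act.toV g) z) = z := by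
    intro z
    induction z using Sym2.ind with
    | _ x y => rw [Sym2.map_pair_eq, Sym2.map_pair_eq, hinvV, hinvV]
  -- edges/loops at v'
  have hEv' : H.edgesAt v' = (H.edgesAt v).image (Sym2.map (act.toV g)) := by
    ext e
    simp only [Finset.mem_image, LGraph.edgesAt, Finset.mem_filter]
    constructor
    · rintro ⟨he, hve⟩
      refine ⟨Sym2.map (act.toV g) e, ⟨act.es_inv g e he, ?_⟩, hinvS e⟩
      rw [Sym2.mem_map]
      exact ⟨v', hve, hinvV v⟩
    · rintro ⟨e', ⟨he', hve'⟩, rfl⟩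
      refine ⟨act.es_inv g e' he', ?_⟩
      rw [Sym2.mem_map]
      exact ⟨v, hve', rfl⟩
  have hdegv' : (H.edgesAt v').card = (H.edgesAt v).card := by
    rw [hEv']
    exact Finset.card_image_of_injective _ (Sym2.map.injective (act.toV g).injective)
  have hLv' : H.loopsAt v' = (H.loopsAt v).image (act.toL g) := by
    ext l
    simp only [Finset.mem_image, LGraph.loopsAt, Finset.mem_filter]
    constructor
    · rintro ⟨hl, hla⟩
      refine ⟨act.toL g l, ⟨act.ls_inv g l hl, ?_⟩, hinvL l⟩
      rw [act.loop_compat g l hl, hla]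
      exact hinvV v
    · rintro ⟨l', ⟨hl', hla'⟩, rfl⟩
      exact ⟨act.ls_inv g l' hl', by rw [act.loop_compat g l' hl', hla']⟩
  have hlpv' : (H.loopsAt v').card = (H.loopsAt v).card := by
    rw [hLv']
    exact Finset.card_image_of_injective _ (act.toL g).injective
  -- vertex counts
  have hpairsub : ({v, v'} : Finset V) ⊆ H.vs := by
    intro u hu
    rcases Finset.mem_insert.mp hu with rfl | hu
    · exact hv
    · rw [Finset.mem_singleton.mp hu]; exact hv'vs
  have hpaircard : ({v, v'} : Finset V).card = 2 := by
    rw [Finset.card_insert_of_notMem (by simpa using hvv'), Finset.card_singleton]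
  have hvs2 : 2 ≤ H.vs.card := hpaircard ▸ Finset.card_le_card hpairsub
  have hvs' : (H.vs \ {v, v'}).card = H.vs.card - 2 := by
    rw [Finset.card_sdiff_of_subset hpairsub, hpaircard]
  -- edge partition
  have hEpart : (H.es.filter fun e => ∀ u ∈ e, u ≠ v ∧ u ≠ v').card
      + ((H.edgesAt v).card + (H.edgesAt v').card) = H.es.card := by
    have hneg : (H.es.filter fun e => ¬ ∀ u ∈ e, u ≠ v ∧ u ≠ v')
        = H.edgesAt v ∪ H.edgesAt v' := by
      ext e
      simp only [Finset.mem_filter, Finset.mem_union, LGraph.edgesAt]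
      constructor
      · rintro ⟨he, hne⟩
        push_neg at hne
        obtain ⟨u, hu, hcase⟩ := hne
        by_cases huv : u = v
        · exact Or.inl ⟨he, huv ▸ hu⟩
        · exact Or.inr ⟨he, (hcase huv) ▸ hu⟩
      · rintro (he | he)
        · exact ⟨he.1, fun hall' => (hall' v he.2).1 rfl⟩
        · exact ⟨he.1, fun hall' => (hall' v' he.2).2 rfl⟩
    have hdisj : Disjoint (H.edgesAt v) (H.edgesAt v') := by
      rw [Finset.disjoint_left]
      intro e he1 he2
      rw [LGraph.edgesAt, Finset.mem_filter] at he1 he2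
      have he : e = s(v, v') := (Sym2.mem_and_mem_iff hvv').mp ⟨he1.2, he2.2⟩
      exact hnoedge (he ▸ he1.1)
    have hmain := Finset.card_filter_add_card_filter_not
      (s := H.es) (p := fun e => ∀ u ∈ e, u ≠ v ∧ u ≠ v')
    rw [hneg, Finset.card_union_of_disjoint hdisj] at hmain
    exact hmain
  -- loop partition
  have hLpart : (H.ls.filter fun l => H.loopAt l ≠ v ∧ H.loopAt l ≠ v').card
      + ((H.loopsAt v).card + (H.loopsAt v').card) = H.ls.card := by
    have hneg : (H.ls.filter fun l => ¬ (H.loopAt l ≠ v ∧ H.loopAt l ≠ v'))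
        = H.loopsAt v ∪ H.loopsAt v' := by
      ext l
      simp only [Finset.mem_filter, Finset.mem_union, LGraph.loopsAt, not_and_or, not_not]
      tauto
    have hdisj : Disjoint (H.loopsAt v) (H.loopsAt v') := by
      rw [Finset.disjoint_left]
      intro l hl1 hl2
      rw [LGraph.loopsAt, Finset.mem_filter] at hl1 hl2
      exact hvv' (hl1.2.symm.trans hl2.2)
    have hmain := Finset.card_filter_add_card_filter_not
      (s := H.ls) (p := fun l => H.loopAt l ≠ v ∧ H.loopAt l ≠ v')
    rw [hneg, Finset.card_union_of_disjoint hdisj] at hmain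
    exact hmain
  -- induced counts agree on subsets avoiding v, v'
  have hXout : ∀ X ⊆ H.vs \ {v, v'}, ∀ u ∈ X, u ≠ v ∧ u ≠ v' := by
    intro X hX u hu
    have h := hX hu
    rw [Finset.mem_sdiff] at h
    simp only [Finset.mem_insert, Finset.mem_singleton, not_or] at h
    exact h.2
  have hiEeq : ∀ X ⊆ H.vs \ {v, v'},
      ((H.es.filter fun e => ∀ u ∈ e, u ≠ v ∧ u ≠ v').filter fun e => ∀ u ∈ e, u ∈ X)
        = H.es.filter fun e => ∀ u ∈ e, u ∈ X := by
    intro X hX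
    rw [Finset.filter_filter]
    apply Finset.filter_congr
    intro e _
    constructor
    · exact fun h => h.2
    · exact fun h => ⟨fun u hu => hXout X hX u (h u hu), h⟩
  have hiLeq : ∀ X ⊆ H.vs \ {v, v'},
      ((H.ls.filter fun l => H.loopAt l ≠ v ∧ H.loopAt l ≠ v').filter
          fun l => H.loopAt l ∈ X)
        = H.ls.filter fun l => H.loopAt l ∈ X := by
    intro X hX
    rw [Finset.filter_filter]
    apply Finset.filter_congr
    intro l _
    constructor
    · exact fun h => h.2
    · exact fun h => ⟨hXout X hX _ h, h⟩
  -- fixed-set comparisons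
  have hVsub : ∀ γ : Γ, ((H.vs \ {v, v'}).filter fun u => act.toV γ u = u) ⊆ fixedV act γ :=
    fun γ => Finset.filter_subset_filter _ Finset.sdiff_subset
  have hEsub : ∀ γ : Γ,
      ((H.es.filter fun e => ∀ u ∈ e, u ≠ v ∧ u ≠ v').filter
        fun e => Sym2.map (act.toV γ) e = e) ⊆ fixedE act γ :=
    fun γ => Finset.filter_subset_filter _ (Finset.filter_subset _ _)
  have hLsub : ∀ γ : Γ,
      ((H.ls.filter fun l => H.loopAt l ≠ v ∧ H.loopAt l ≠ v').filter
        fun l => act.toL γ l = l) ⊆ fixedL act γ :=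
    fun γ => Finset.filter_subset_filter _ (Finset.filter_subset _ _)
  have hV2 : ((H.vs \ {v, v'}).filter fun u => act.toV g u = u) = fixedV act g := by
    apply Finset.Subset.antisymm (hVsub g)
    intro u hu
    have hu' := hu
    rw [fixedV, Finset.mem_filter] at hu'
    rw [Finset.mem_filter, Finset.mem_sdiff]
    refine ⟨⟨hu'.1, ?_⟩, hu'.2⟩
    simp only [Finset.mem_insert, Finset.mem_singleton, not_or]
    constructor
    · rintro rfl; exact hfixVv hu
    · rintro rfl; exact hfixVv' hu
  have hL2 : ((H.ls.filter fun l => H.loopAt l ≠ v ∧ H.loopAt l ≠ v').filter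
      fun l => act.toL g l = l) = fixedL act g := by
    apply Finset.Subset.antisymm (hLsub g)
    intro l hl
    have hlf := hfixloop l hl
    rw [fixedL, Finset.mem_filter] at hl
    rw [Finset.mem_filter, Finset.mem_filter]
    refine ⟨⟨hl.1, ?_, ?_⟩, hl.2⟩
    · rintro h; rw [h] at hlf; exact hfixVv hlf
    · rintro h; rw [h] at hlf; exact hfixVv' hlf
  -- images avoid v, v'
  have hne_vv' : ∀ (γ : Γ) (u : V), u ≠ v → u ≠ v' → act.toV γ u ≠ v ∧ act.toV γ u ≠ v' := by
    intro γ u h1 h2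
    rcases hall γ with rfl | rfl
    · simpa using ⟨h1, h2⟩
    · constructor
      · intro h
        have h' := congrArg (act.toV γ) h
        rw [hinvV] at h'
        exact h2 h'
      · intro h
        have h' := congrArg (act.toV γ) h
        rw [hinvV] at h'
        exact h1 (h'.trans (hinvV v))
  -- build the graph
  have pf1 : ∀ e ∈ H.es.filter fun e => ∀ u ∈ e, u ≠ v ∧ u ≠ v', ¬ e.IsDiag :=
    fun e he => H.es_not_diag e (Finset.mem_filter.mp he).1
  have pf2 : ∀ e ∈ H.es.filter fun e => ∀ u ∈ e, u ≠ v ∧ u ≠ v',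
      ∀ u ∈ e, u ∈ H.vs \ {v, v'} := by
    intro e he u hu
    rw [Finset.mem_filter] at he
    rw [Finset.mem_sdiff]
    refine ⟨H.es_mem e he.1 u hu, ?_⟩
    have h := he.2 u hu
    simp [h.1, h.2]
  have pf3 : ∀ l ∈ H.ls.filter fun l => H.loopAt l ≠ v ∧ H.loopAt l ≠ v',
      H.loopAt l ∈ H.vs \ {v, v'} := by
    intro l hl
    rw [Finset.mem_filter] at hl
    rw [Finset.mem_sdiff]
    exact ⟨H.ls_mem l hl.1, by simp [hl.2.1, hl.2.2]⟩
  refine ⟨⟨H.vs \ {v, v'}, H.es.filter fun e => ∀ u ∈ e, u ≠ v ∧ u ≠ v',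
      H.ls.filter fun l => H.loopAt l ≠ v ∧ H.loopAt l ≠ v', H.loopAt, pf1, pf2, pf3⟩,
      rfl, rfl, rfl, fun l _ => rfl, ?_⟩
  refine ⟨⟨act.toV, act.toL, ?_, ?_, ?_, ?_, ?_⟩, rfl, rfl, ?_, ?_⟩
  · -- vs_inv
    intro γ u hu
    rw [Finset.mem_sdiff] at hu ⊢
    refine ⟨act.vs_inv γ u hu.1, ?_⟩
    have hu2 := hu.2
    simp only [Finset.mem_insert, Finset.mem_singleton, not_or] at hu2 ⊢
    exact hne_vv' γ u hu2.1 hu2.2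
  · -- es_inv
    intro γ e he
    rw [Finset.mem_filter] at he ⊢
    refine ⟨act.es_inv γ e he.1, ?_⟩
    intro u hu
    rw [Sym2.mem_map] at hu
    obtain ⟨a, ha, rfl⟩ := hu
    exact hne_vv' γ a (he.2 a ha).1 (he.2 a ha).2
  · -- ls_inv
    intro γ l hl
    rw [Finset.mem_filter] at hl ⊢
    refine ⟨act.ls_inv γ l hl.1, ?_⟩
    rw [act.loop_compat γ l hl.1]
    exact hne_vv' γ (H.loopAt l) hl.2.1 hl.2.2
  · -- loop_compat
    intro γ l hl
    exact act.loop_compat γ l (Finset.mem_filter.mp hl).1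
  · -- loop_fix_order
    intro γ l hl
    exact act.loop_fix_order γ l (Finset.mem_filter.mp hl).1
  · -- Tight
    refine ⟨⟨?_, ?_⟩, ?_⟩
    · intro X hX
      have hX' : X ⊆ H.vs \ {v, v'} := hX
      show ((H.es.filter fun e => ∀ u ∈ e, u ≠ v ∧ u ≠ v').filter
            fun e => ∀ u ∈ e, u ∈ X).card
          + ((H.ls.filter fun l => H.loopAt l ≠ v ∧ H.loopAt l ≠ v').filter
            fun l => H.loopAt l ∈ X).card ≤ 2 * X.card
      rw [hiEeq X hX', hiLeq X hX']
      exact hsp1 X (hX'.trans Finset.sdiff_subset)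
    · intro X hX hpos
      have hX' : X ⊆ H.vs \ {v, v'} := hX
      have hpos' : 0 < H.iE X := by
        rw [LGraph.iE, ← hiEeq X hX']
        exact hpos
      show ((H.es.filter fun e => ∀ u ∈ e, u ≠ v ∧ u ≠ v').filter
            fun e => ∀ u ∈ e, u ∈ X).card + 3 ≤ 2 * X.card
      rw [hiEeq X hX']
      exact hsp2 X (hX'.trans Finset.sdiff_subset) hpos'
    · show (H.es.filter fun e => ∀ u ∈ e, u ≠ v ∧ u ≠ v').card
          + (H.ls.filter fun l => H.loopAt l ≠ v ∧ H.loopAt l ≠ v').card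
          = 2 * (H.vs \ {v, v'}).card
      rw [hvs']
      rcases hdeg with ⟨h1, h2⟩ | ⟨h1, h2⟩ <;> omega
  · -- C2Cond
    rcases hc2 with h | h
    · left
      intro γ hγ
      obtain ⟨h1, h2, h3⟩ := h γ hγ
      refine ⟨?_, ?_, ?_⟩
      · apply Finset.subset_empty.mp
        rw [← h1]
        exact hVsub γ
      · apply Finset.subset_empty.mp
        rw [← h2]
        exact hEsub γ
      · apply Finset.subset_empty.mp
        rw [← h3]
        exact hLsub γ
    · right
      intro γ hγ
      have hγg : γ = g := (hall γ).resolve_left hγ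
      subst hγg
      obtain ⟨h1, h2, h3⟩ := h γ hg1
      refine ⟨?_, ?_, ?_⟩
      · show ((H.vs \ {v, v'}).filter fun u => act.toV γ u = u).card = 1
        rw [hV2]
        exact h1
      · apply Finset.subset_empty.mp
        rw [← h2]
        exact hEsub γ
      · show ((H.ls.filter fun l => H.loopAt l ≠ v ∧ H.loopAt l ≠ v').filter
            fun l => act.toL γ l = l).card = 2
        rw [hL2]
        exact h3
end

section
/- Let (G,φ) be a C_2-tight graph containing a vertex v of degree 3 with three distinct neighbours and no incident loop, and write v'=φ(γ)v, x'=φ(γ)x for the non-trivial element γ. Then there exist x_1,x_2∈N(v) such that the graph G∖{v,v'} + {x_1x_2, x_1'x_2'}, obtained by deleting v and v' (with all incident edges) and adding the edges x_1x_2 and x_1'x_2', with the induced ℤ/2ℤ-action, is C_2-tight. -/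
open Finset
open scoped Classical
set_option maxHeartbeats 1000000

section Parity

lemma even_card_of_invol {α : Type} [DecidableEq α] (f : α → α) :
    ∀ (s : Finset α), (∀ a ∈ s, f a ∈ s) → (∀ a ∈ s, f (f a) = a) → (∀ a ∈ s, f a ≠ a) →
      Even s.card := by
  intro s
  induction s using Finset.strongInduction with
  | _ s ih =>
    intro hmem hinv hne
    rcases s.eq_empty_or_nonempty with rfl | ⟨a, ha⟩
    · simp
    · have hfa : f a ∈ s := hmem a ha
      have hne' : f a ≠ a := hne a ha
      have hpair : ({a, f a} : Finset α) ⊆ s := by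
        intro u hu
        rcases Finset.mem_insert.1 hu with rfl | hu
        · exact ha
        · rcases Finset.mem_singleton.1 hu with rfl
          exact hfa
      have hss : s \ {a, f a} ⊂ s :=
        Finset.sdiff_ssubset hpair ⟨a, Finset.mem_insert_self _ _⟩
      have hmem2 : ∀ b ∈ s \ {a, f a}, f b ∈ s \ {a, f a} := by
        intro b hb
        obtain ⟨hbs, hbn⟩ := Finset.mem_sdiff.1 hb
        simp only [Finset.mem_insert, Finset.mem_singleton, not_or] at hbn
        refine Finset.mem_sdiff.2 ⟨hmem b hbs, ?_⟩
        simp only [Finset.mem_insert, Finset.mem_singleton, not_or]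
        constructor
        · intro h
          exact hbn.2 (by rw [← h, hinv b hbs])
        · intro h
          have : f (f b) = f (f a) := by rw [h]
          rw [hinv b hbs, hinv a ha] at this
          exact hbn.1 this
      have hinv2 : ∀ b ∈ s \ {a, f a}, f (f b) = b := fun b hb =>
        hinv b (Finset.mem_sdiff.1 hb).1
      have hne2 : ∀ b ∈ s \ {a, f a}, f b ≠ b := fun b hb =>
        hne b (Finset.mem_sdiff.1 hb).1
      obtain ⟨k, hk⟩ := ih _ hss hmem2 hinv2 hne2
      have hcard2 : ({a, f a} : Finset α).card = 2 := by
        rw [Finset.card_insert_of_notMem (by simp [Ne.symm hne']), Finset.card_singleton]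
      have : s.card = (s \ {a, f a}).card + 2 := by
        rw [Finset.card_sdiff_of_subset hpair, hcard2]
        have : 2 ≤ s.card := hcard2 ▸ Finset.card_le_card hpair
        omega
      exact ⟨k + 1, by omega⟩

end Parity

namespace LGraph

variable {V L : Type} {H : LGraph V L}

lemma edge_ne_fst {a b : V} (he : s(a,b) ∈ H.es) : a ≠ b := by
  intro h
  exact H.es_not_diag _ he (by simp [h])

lemma edge_eq_of_pair {a b : V} (hab : a ≠ b) {e : Sym2 V} (he : e ∈ H.es)
    (h : ∀ u ∈ e, u = a ∨ u = b) : e = s(a, b) := by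
  induction e using Sym2.ind with
  | _ p q =>
    have hd : p ≠ q := by
      intro hpq
      exact H.es_not_diag _ he (by simp [hpq])
    have hp := h p (by simp)
    have hq := h q (by simp)
    rw [Sym2.eq_iff]
    rcases hp with hp | hp <;> rcases hq with hq | hq <;> simp_all

lemma filter_ind_inter (H : LGraph V L) (A B : Finset V) :
    (H.es.filter fun e => ∀ u ∈ e, u ∈ A ∩ B)
      = (H.es.filter fun e => ∀ u ∈ e, u ∈ A) ∩ (H.es.filter fun e => ∀ u ∈ e, u ∈ B) := by
  ext e
  simp only [Finset.mem_filter, Finset.mem_inter]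
  constructor
  · rintro ⟨he, h⟩
    exact ⟨⟨he, fun u hu => (h u hu).1⟩,
           ⟨he, fun u hu => (h u hu).2⟩⟩
  · rintro ⟨⟨he, h1⟩, _, h2⟩
    exact ⟨he, fun u hu => ⟨h1 u hu, h2 u hu⟩⟩

lemma iE_union_inter (H : LGraph V L) (A B : Finset V) :
    H.iE (A ∪ B) + H.iE (A ∩ B) = H.iE A + H.iE B + H.dAB A B := by
  classical
  set EA := H.es.filter fun e => ∀ u ∈ e, u ∈ A with hEA
  set EB := H.es.filter fun e => ∀ u ∈ e, u ∈ B with hEB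
  set EC := H.es.filter (fun e =>
    ∃ a ∈ e, ∃ b ∈ e, a ≠ b ∧ (a ∈ A ∧ a ∉ B) ∧ (b ∈ B ∧ b ∉ A)) with hEC
  have hEU : (H.es.filter fun e => ∀ u ∈ e, u ∈ A ∪ B) = (EA ∪ EB) ∪ EC := by
    ext e
    simp only [hEA, hEB, hEC, Finset.mem_union, Finset.mem_filter]
    constructor
    · rintro ⟨he, h⟩
      by_cases hA : ∀ u ∈ e, u ∈ A
      · exact Or.inl (Or.inl ⟨he, hA⟩)
      by_cases hB : ∀ u ∈ e, u ∈ B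
      · exact Or.inl (Or.inr ⟨he, hB⟩)
      push_neg at hA hB
      obtain ⟨p, hp, hpA⟩ := hA
      obtain ⟨q, hq, hqB⟩ := hB
      have hpB : p ∈ B := (h p hp).resolve_left hpA
      have hqA : q ∈ A := (h q hq).resolve_right hqB
      have hpq : q ≠ p := by rintro rfl; exact hpA hqA
      exact Or.inr ⟨he, q, hq, p, hp, hpq, ⟨hqA, hqB⟩, ⟨hpB, hpA⟩⟩
    · rintro ((⟨he, h⟩ | ⟨he, h⟩) | ⟨he, a, ha, b, hb, hab, ⟨haA, _⟩, ⟨hbB, _⟩⟩)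
      · exact ⟨he, fun u hu => Or.inl (h u hu)⟩
      · exact ⟨he, fun u hu => Or.inr (h u hu)⟩
      · refine ⟨he, fun u hu => ?_⟩
        have he2 : e = s(a, b) := Sym2.eq_of_ne_mem hab ha hb (by simp) (by simp)
        rw [he2, Sym2.mem_iff] at hu
        rcases hu with rfl | rfl
        · exact Or.inl haA
        · exact Or.inr hbB
  have hdisj : Disjoint (EA ∪ EB) EC := by
    rw [Finset.disjoint_right]
    intro e he
    simp only [hEC, Finset.mem_filter] at he
    obtain ⟨_, a, ha, b, hb, hab, ⟨_, haB⟩, ⟨_, hbA⟩⟩ := he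
    simp only [hEA, hEB, Finset.mem_union, Finset.mem_filter, not_or]
    constructor
    · rintro ⟨_, h⟩; exact hbA (h b hb)
    · rintro ⟨_, h⟩; exact haB (h a ha)
  have h3 : (EA ∪ EB).card + (EA ∩ EB).card = EA.card + EB.card :=
    Finset.card_union_add_card_inter _ _
  have h4 : H.iE (A ∪ B) = (EA ∪ EB).card + EC.card := by
    rw [iE, hEU, Finset.card_union_of_disjoint hdisj]
  have h5 : H.iE (A ∩ B) = (EA ∩ EB).card := by
    rw [iE, H.filter_ind_inter]
  have hA : H.iE A = EA.card := rfl
  have hB : H.iE B = EB.card := rfl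
  have hC : H.dAB A B = EC.card := rfl
  rw [h4, h5, hA, hB, hC]
  omega

lemma iL_union_inter (H : LGraph V L) (A B : Finset V) :
    H.iL (A ∪ B) + H.iL (A ∩ B) = H.iL A + H.iL B := by
  classical
  have h1 : (H.ls.filter fun l => H.loopAt l ∈ A ∪ B)
      = (H.ls.filter fun l => H.loopAt l ∈ A) ∪ (H.ls.filter fun l => H.loopAt l ∈ B) := by
    ext l
    simp only [Finset.mem_filter, Finset.mem_union]
    tauto
  have h2 : (H.ls.filter fun l => H.loopAt l ∈ A ∩ B)
      = (H.ls.filter fun l => H.loopAt l ∈ A) ∩ (H.ls.filter fun l => H.loopAt l ∈ B) := by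
    ext l
    simp only [Finset.mem_filter, Finset.mem_inter]
    tauto
  rw [iL, iL, h1, h2]
  exact Finset.card_union_add_card_inter _ _

lemma kbar_union_inter (H : LGraph V L) (A B : Finset V) :
    H.kbar (A ∪ B) + H.kbar (A ∩ B) + (H.dAB A B : ℤ) = H.kbar A + H.kbar B := by
  have h1 := H.iE_union_inter A B
  have h2 := Finset.card_union_add_card_inter A B
  unfold kbar
  push_cast
  omega

lemma kval_union_inter (H : LGraph V L) (A B : Finset V) :
    H.kval (A ∪ B) + H.kval (A ∩ B) + (H.dAB A B : ℤ) = H.kval A + H.kval B := by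
  have h1 := H.iE_union_inter A B
  have h1' := H.iL_union_inter A B
  have h2 := Finset.card_union_add_card_inter A B
  unfold kval iEL
  push_cast
  omega

lemma iE_mono (H : LGraph V L) {A B : Finset V} (h : A ⊆ B) : H.iE A ≤ H.iE B := by
  apply Finset.card_le_card
  intro e he
  obtain ⟨h1, h2⟩ := Finset.mem_filter.1 he
  exact Finset.mem_filter.2 ⟨h1, fun u hu => h (h2 u hu)⟩

lemma iL_mono (H : LGraph V L) {A B : Finset V} (h : A ⊆ B) : H.iL A ≤ H.iL B := by
  apply Finset.card_le_card
  intro l hl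
  obtain ⟨h1, h2⟩ := Finset.mem_filter.1 hl
  exact Finset.mem_filter.2 ⟨h1, h (by exact h2)⟩

lemma kval_union_le_mixed (H : LGraph V L) (A B : Finset V) :
    H.kval (A ∪ B) ≤ H.kval A + H.kbar B - H.kbar (A ∩ B) := by
  have h1 := H.iE_union_inter A B
  have h2 : H.iL A ≤ H.iL (A ∪ B) := H.iL_mono Finset.subset_union_left
  have h3 := Finset.card_union_add_card_inter A B
  unfold kval kbar iEL
  push_cast
  omega

lemma iE_add_card_le (H : LGraph V L) {S T : Finset V} (hST : S ⊆ T) {F : Finset (Sym2 V)}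
    (hsub : F ⊆ H.es) (hT : ∀ e ∈ F, ∀ u ∈ e, u ∈ T) (hS : ∀ e ∈ F, ¬ ∀ u ∈ e, u ∈ S) :
    H.iE S + F.card ≤ H.iE T := by
  classical
  have hdisj : Disjoint (H.es.filter fun e => ∀ u ∈ e, u ∈ S) F := by
    rw [Finset.disjoint_right]
    intro e heF heS
    exact hS e heF ((Finset.mem_filter.1 heS).2)
  have hsub2 : (H.es.filter fun e => ∀ u ∈ e, u ∈ S) ∪ F
      ⊆ H.es.filter fun e => ∀ u ∈ e, u ∈ T := by
    intro e he
    rcases Finset.mem_union.1 he with h | h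
    · obtain ⟨ha, hb⟩ := Finset.mem_filter.1 h
      exact Finset.mem_filter.2 ⟨ha, fun u hu => hST (hb u hu)⟩
    · exact Finset.mem_filter.2 ⟨hsub h, hT e h⟩
  calc H.iE S + F.card = ((H.es.filter fun e => ∀ u ∈ e, u ∈ S) ∪ F).card :=
        (Finset.card_union_of_disjoint hdisj).symm
    _ ≤ _ := Finset.card_le_card hsub2

lemma kval_le_kbar (H : LGraph V L) (X : Finset V) : H.kval X ≤ H.kbar X := by
  unfold kval kbar iEL
  push_cast
  omega

lemma iE_eq_zero (H : LGraph V L) {X : Finset V}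
    (h : ∀ e ∈ H.es, ¬ ∀ u ∈ e, u ∈ X) : H.iE X = 0 := by
  rw [iE, Finset.card_eq_zero, Finset.filter_eq_empty_iff]
  exact h

section SparseFacts

variable (hsp : H.Sparse)
include hsp

lemma kval_nonneg {X : Finset V} (hX : X ⊆ H.vs) : 0 ≤ H.kval X := by
  have := hsp.1 X hX
  unfold kval
  push_cast
  omega

lemma kbar_ge_three {X : Finset V} (hX : X ⊆ H.vs) (h : 0 < H.iE X) : 3 ≤ H.kbar X := by
  have := hsp.2 X hX h
  unfold kbar
  push_cast
  omega

lemma kbar_ge_two {X : Finset V} (hX : X ⊆ H.vs) (hne : X.Nonempty) : 2 ≤ H.kbar X := by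
  rcases Nat.eq_zero_or_pos (H.iE X) with h | h
  · have hc : 1 ≤ X.card := Finset.card_pos.2 hne
    unfold kbar
    rw [h]
    push_cast
    omega
  · linarith [kbar_ge_three hsp hX h]

lemma small_of_kbar_le_two {X : Finset V} (hX : X ⊆ H.vs) (h : H.kbar X ≤ 2) :
    X.card ≤ 1 ∧ H.iE X = 0 := by
  rcases Nat.eq_zero_or_pos (H.iE X) with h0 | h0
  · constructor
    · unfold kbar at h
      rw [h0] at h
      push_cast at h
      omega
    · exact h0
  · exfalso
    linarith [kbar_ge_three hsp hX h0]

end SparseFacts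

end LGraph
/-! ## Context setup -/

structure Setup (Γ V L : Type) [Group Γ] where
  g : Γ
  hg1 : g ≠ 1
  hgg : g * g = 1
  hall : ∀ γ : Γ, γ = 1 ∨ γ = g
  H : LGraph V L
  act : LAction Γ H
  htight : C2Tight act
  v : V
  hv : v ∈ H.vs
  x : V
  y : V
  z : V
  hxy : x ≠ y
  hxz : x ≠ z
  hyz : y ≠ z
  hN : H.nbrs v = {x, y, z}
  hdeg : (H.edgesAt v).card = 3
  hloops : (H.loopsAt v).card = 0

namespace Setup

variable {Γ V L : Type} [Group Γ] (C : Setup Γ V L)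

/-- the vertex involution -/
def sg : V → V := C.act.toV C.g

/-- the loop involution -/
def tl : L → L := C.act.toL C.g

lemma hsp : C.H.Sparse := C.htight.1.1

lemma hcount : C.H.es.card + C.H.ls.card = 2 * C.H.vs.card := C.htight.1.2

lemma sg_sg (u : V) : C.sg (C.sg u) = u := by
  have h1 : C.act.toV C.g * C.act.toV C.g = C.act.toV (C.g * C.g) :=
    (C.act.toV.map_mul C.g C.g).symm
  have h2 : C.act.toV (C.g * C.g) = 1 := by rw [C.hgg, map_one]
  have := congrArg (fun p => p u) (h1.trans h2)
  simpa [sg, Equiv.Perm.mul_apply] using this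

lemma sg_comp : C.sg ∘ C.sg = id := funext C.sg_sg

lemma map_sg_sg (e : Sym2 V) : Sym2.map C.sg (Sym2.map C.sg e) = e := by
  rw [Sym2.map_map, C.sg_comp, Sym2.map_id, id_eq]

lemma sg_inj : Function.Injective C.sg := by
  intro a b h
  have := congrArg C.sg h
  rwa [C.sg_sg, C.sg_sg] at this

lemma tl_tl (l : L) : C.tl (C.tl l) = l := by
  have h1 : C.act.toL C.g * C.act.toL C.g = C.act.toL (C.g * C.g) :=
    (C.act.toL.map_mul C.g C.g).symm
  have h2 : C.act.toL (C.g * C.g) = 1 := by rw [C.hgg, map_one]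
  have := congrArg (fun p => p l) (h1.trans h2)
  simpa [tl, Equiv.Perm.mul_apply] using this

lemma fixedE_empty : fixedE C.act C.g = ∅ := by
  rcases C.htight.2 with h | h
  · exact (h C.g C.hg1).2.1
  · exact (h C.g C.hg1).2.1

lemma map_ne {e : Sym2 V} (he : e ∈ C.H.es) : Sym2.map C.sg e ≠ e := by
  intro h
  have : e ∈ fixedE C.act C.g := Finset.mem_filter.2 ⟨he, h⟩
  rw [C.fixedE_empty] at this
  exact absurd this (Finset.notMem_empty e)

lemma fix_unique {u w : V} (hu : u ∈ C.H.vs) (hw : w ∈ C.H.vs)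
    (h1 : C.sg u = u) (h2 : C.sg w = w) : u = w := by
  have hu' : u ∈ fixedV C.act C.g := Finset.mem_filter.2 ⟨hu, h1⟩
  have hw' : w ∈ fixedV C.act C.g := Finset.mem_filter.2 ⟨hw, h2⟩
  rcases C.htight.2 with h | h
  · exfalso
    rw [(h C.g C.hg1).1] at hu'
    exact absurd hu' (Finset.notMem_empty u)
  · obtain ⟨w0, hw0⟩ := Finset.card_eq_one.1 (h C.g C.hg1).1
    rw [hw0, Finset.mem_singleton] at hu' hw'
    rw [hu', hw']

lemma mem_vs_sg {u : V} (hu : u ∈ C.H.vs) : C.sg u ∈ C.H.vs :=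
  C.act.vs_inv C.g u hu

lemma mem_vs_sg_iff {u : V} : C.sg u ∈ C.H.vs ↔ u ∈ C.H.vs := by
  constructor
  · intro h
    have := C.mem_vs_sg h
    rwa [C.sg_sg] at this
  · exact C.mem_vs_sg

lemma es_sg {e : Sym2 V} (he : e ∈ C.H.es) : Sym2.map C.sg e ∈ C.H.es :=
  C.act.es_inv C.g e he

lemma es_sg_iff {e : Sym2 V} : Sym2.map C.sg e ∈ C.H.es ↔ e ∈ C.H.es := by
  constructor
  · intro h
    have := C.es_sg h
    rwa [C.map_sg_sg] at this
  · exact C.es_sg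

lemma edge_sg {a b : V} (he : s(a, b) ∈ C.H.es) : s(C.sg a, C.sg b) ∈ C.H.es := by
  have := C.es_sg he
  rwa [Sym2.map_pair_eq] at this

lemma edge_sg_iff {a b : V} : s(C.sg a, C.sg b) ∈ C.H.es ↔ s(a, b) ∈ C.H.es := by
  rw [← Sym2.map_pair_eq]
  exact C.es_sg_iff

lemma no_self_edge (u : V) : s(u, C.sg u) ∉ C.H.es := by
  intro h
  apply C.map_ne h
  rw [Sym2.map_pair_eq, C.sg_sg, Sym2.eq_swap]

/-- the three edges at `v` -/
lemma edge_vx : s(C.v, C.x) ∈ C.H.es := by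
  have : C.x ∈ C.H.nbrs C.v := by rw [C.hN]; simp
  exact (Finset.mem_filter.1 this).2

lemma edge_vy : s(C.v, C.y) ∈ C.H.es := by
  have : C.y ∈ C.H.nbrs C.v := by rw [C.hN]; simp
  exact (Finset.mem_filter.1 this).2

lemma edge_vz : s(C.v, C.z) ∈ C.H.es := by
  have : C.z ∈ C.H.nbrs C.v := by rw [C.hN]; simp
  exact (Finset.mem_filter.1 this).2

lemma nbr_iff {u : V} : s(C.v, u) ∈ C.H.es ↔ (u = C.x ∨ u = C.y ∨ u = C.z) := by
  constructor
  · intro h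
    have hu : u ∈ C.H.vs := C.H.es_mem _ h u (by simp)
    have : u ∈ C.H.nbrs C.v := Finset.mem_filter.2 ⟨hu, h⟩
    rw [C.hN] at this
    simpa using this
  · rintro (rfl | rfl | rfl)
    · exact C.edge_vx
    · exact C.edge_vy
    · exact C.edge_vz

lemma vp_ne_v : C.sg C.v ≠ C.v := by
  intro hfix
  have hmem : ∀ a ∈ ({C.x, C.y, C.z} : Finset V), C.sg a ∈ ({C.x, C.y, C.z} : Finset V) := by
    intro a ha
    simp only [Finset.mem_insert, Finset.mem_singleton] at ha ⊢
    rw [← C.nbr_iff] at ha ⊢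
    have := C.edge_sg ha
    rwa [hfix] at this
  have hne : ∀ a ∈ ({C.x, C.y, C.z} : Finset V), C.sg a ≠ a := by
    intro a ha h
    apply C.map_ne (show s(C.v, a) ∈ C.H.es from ?_)
    · rw [Sym2.map_pair_eq, hfix, h]
    · simp only [Finset.mem_insert, Finset.mem_singleton] at ha
      exact C.nbr_iff.2 ha
  have hinv : ∀ a ∈ ({C.x, C.y, C.z} : Finset V), C.sg (C.sg a) = a := fun a _ => C.sg_sg a
  have heven := even_card_of_invol C.sg _ hmem hinv hne
  have hcard : ({C.x, C.y, C.z} : Finset V).card = 3 := by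
    rw [Finset.card_insert_of_notMem (by simp [C.hxy, C.hxz]),
        Finset.card_insert_of_notMem (by simp [C.hyz]), Finset.card_singleton]
  rw [hcard] at heven
  exact (Nat.not_even_iff_odd.2 (by decide)) heven

lemma vp_not_nbr : s(C.v, C.sg C.v) ∉ C.H.es := C.no_self_edge C.v

lemma vp_mem : C.sg C.v ∈ C.H.vs := C.mem_vs_sg C.hv

lemma nbr_ne_v {u : V} (h : s(C.v, u) ∈ C.H.es) : u ≠ C.v :=
  fun hh => C.H.es_not_diag _ h (by simp [hh])

lemma nbr_ne_vp {u : V} (h : s(C.v, u) ∈ C.H.es) : u ≠ C.sg C.v := by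
  rintro rfl
  exact C.vp_not_nbr h

/-! ### image of a vertex set -/

noncomputable def gs (S : Finset V) : Finset V := S.image C.sg

lemma mem_gs {S : Finset V} {u : V} : u ∈ C.gs S ↔ C.sg u ∈ S := by
  simp only [gs, Finset.mem_image]
  constructor
  · rintro ⟨w, hw, rfl⟩
    rwa [C.sg_sg]
  · intro h
    exact ⟨C.sg u, h, C.sg_sg u⟩

lemma card_gs (S : Finset V) : (C.gs S).card = S.card :=
  Finset.card_image_of_injective _ C.sg_inj

lemma gs_union (A B : Finset V) : C.gs (A ∪ B) = C.gs A ∪ C.gs B := by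
  simp [gs, Finset.image_union]

lemma gs_inter (A B : Finset V) : C.gs (A ∩ B) = C.gs A ∩ C.gs B := by
  simp [gs, Finset.image_inter _ _ C.sg_inj]

lemma gs_subset_vs {S : Finset V} (h : S ⊆ C.H.vs) : C.gs S ⊆ C.H.vs := by
  intro u hu
  rw [C.mem_gs] at hu
  rw [← C.sg_sg u]
  exact C.mem_vs_sg (h hu)

/-- invariance of a vertex set -/
def Inv (S : Finset V) : Prop := ∀ u ∈ S, C.sg u ∈ S

lemma gs_eq_of_inv {S : Finset V} (h : C.Inv S) : C.gs S = S := by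
  apply Finset.eq_of_subset_of_card_le
  · intro u hu
    rw [C.mem_gs] at hu
    have := h _ hu
    rwa [C.sg_sg] at this
  · rw [C.card_gs]

lemma inv_gs (S : Finset V) : C.Inv (S ∪ C.gs S) := by
  intro u hu
  rcases Finset.mem_union.1 hu with h | h
  · exact Finset.mem_union.2 (Or.inr (C.mem_gs.2 (by rwa [C.sg_sg])))
  · exact Finset.mem_union.2 (Or.inl (C.mem_gs.1 h))

lemma inv_gs_inter (S : Finset V) : C.Inv (S ∩ C.gs S) := by
  intro u hu
  obtain ⟨h1, h2⟩ := Finset.mem_inter.1 hu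
  exact Finset.mem_inter.2 ⟨C.mem_gs.1 h2, C.mem_gs.2 (by rwa [C.sg_sg])⟩

lemma inv_union {A B : Finset V} (hA : C.Inv A) (hB : C.Inv B) : C.Inv (A ∪ B) := by
  intro u hu
  rcases Finset.mem_union.1 hu with h | h
  · exact Finset.mem_union.2 (Or.inl (hA u h))
  · exact Finset.mem_union.2 (Or.inr (hB u h))

lemma inv_inter {A B : Finset V} (hA : C.Inv A) (hB : C.Inv B) : C.Inv (A ∩ B) := by
  intro u hu
  obtain ⟨h1, h2⟩ := Finset.mem_inter.1 hu
  exact Finset.mem_inter.2 ⟨hA u h1, hB u h2⟩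

lemma iE_gs (S : Finset V) : C.H.iE (C.gs S) = C.H.iE S := by
  classical
  have himg : (C.H.es.filter fun e => ∀ u ∈ e, u ∈ C.gs S)
      = (C.H.es.filter fun e => ∀ u ∈ e, u ∈ S).image (Sym2.map C.sg) := by
    ext e
    simp only [Finset.mem_filter, Finset.mem_image]
    constructor
    · rintro ⟨he, h⟩
      refine ⟨Sym2.map C.sg e, ⟨C.es_sg_iff.1 (by rwa [C.map_sg_sg]), ?_⟩, C.map_sg_sg e⟩
      intro u hu
      rw [Sym2.mem_map] at hu
      obtain ⟨w, hw, rfl⟩ := hu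
      exact C.mem_gs.1 (h w hw)
    · rintro ⟨f, ⟨hf, hfS⟩, rfl⟩
      refine ⟨C.es_sg hf, ?_⟩
      intro u hu
      rw [Sym2.mem_map] at hu
      obtain ⟨w, hw, rfl⟩ := hu
      exact C.mem_gs.2 (by rw [C.sg_sg]; exact hfS w hw)
  rw [LGraph.iE, LGraph.iE, himg, Finset.card_image_of_injective]
  intro e f h
  have := congrArg (Sym2.map C.sg) h
  rwa [C.map_sg_sg, C.map_sg_sg] at this

lemma iL_gs (S : Finset V) : C.H.iL (C.gs S) = C.H.iL S := by
  classical
  have himg : (C.H.ls.filter fun l => C.H.loopAt l ∈ C.gs S)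
      = (C.H.ls.filter fun l => C.H.loopAt l ∈ S).image C.tl := by
    ext l
    simp only [Finset.mem_filter, Finset.mem_image]
    constructor
    · rintro ⟨hl, h⟩
      have hl2 : C.tl l ∈ C.H.ls := C.act.ls_inv C.g l hl
      refine ⟨C.tl l, ⟨hl2, ?_⟩, C.tl_tl l⟩
      have := C.act.loop_compat C.g l hl
      rw [show C.act.toL C.g l = C.tl l from rfl] at this
      rw [this]
      exact C.mem_gs.1 h
    · rintro ⟨m, ⟨hm, hmS⟩, rfl⟩
      refine ⟨C.act.ls_inv C.g m hm, ?_⟩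
      have := C.act.loop_compat C.g m hm
      rw [show C.act.toL C.g m = C.tl m from rfl] at this
      rw [this]
      exact C.mem_gs.2 (by
        rw [show (C.act.toV C.g) (C.H.loopAt m) = C.sg (C.H.loopAt m) from rfl, C.sg_sg]
        exact hmS)
  rw [LGraph.iL, LGraph.iL, himg, Finset.card_image_of_injective]
  intro l m h
  have := congrArg C.tl h
  rwa [C.tl_tl, C.tl_tl] at this

lemma kbar_gs (S : Finset V) : C.H.kbar (C.gs S) = C.H.kbar S := by
  unfold LGraph.kbar
  rw [C.iE_gs, C.card_gs]

lemma kval_gs (S : Finset V) : C.H.kval (C.gs S) = C.H.kval S := by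
  unfold LGraph.kval LGraph.iEL
  rw [C.iE_gs, C.iL_gs, C.card_gs]

/-! ### parity -/

lemma even_iE_of_inv {S : Finset V} (h : C.Inv S) : Even (C.H.iE S) := by
  classical
  apply even_card_of_invol (Sym2.map C.sg)
  · intro e he
    obtain ⟨h1, h2⟩ := Finset.mem_filter.1 he
    refine Finset.mem_filter.2 ⟨C.es_sg h1, ?_⟩
    intro u hu
    rw [Sym2.mem_map] at hu
    obtain ⟨w, hw, rfl⟩ := hu
    exact h w (h2 w hw)
  · intro e _
    exact C.map_sg_sg e
  · intro e he
    exact C.map_ne (Finset.mem_filter.1 he).1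

lemma even_iL_of_inv {S : Finset V} (h : C.Inv S) : Even (C.H.iL S) := by
  classical
  set t := C.H.ls.filter fun l => C.H.loopAt l ∈ S with ht
  have hmemt : ∀ l ∈ t, C.tl l ∈ t := by
    intro l hl
    obtain ⟨h1, h2⟩ := Finset.mem_filter.1 hl
    refine Finset.mem_filter.2 ⟨C.act.ls_inv C.g l h1, ?_⟩
    have hc := C.act.loop_compat C.g l h1
    rw [show C.act.toL C.g l = C.tl l from rfl] at hc
    rw [hc]
    exact h _ h2
  rcases C.htight.2 with hcond | hcond
  · have hL : fixedL C.act C.g = ∅ := (hcond C.g C.hg1).2.2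
    apply even_card_of_invol C.tl t hmemt (fun l _ => C.tl_tl l)
    intro l hl hfix
    have : l ∈ fixedL C.act C.g :=
      Finset.mem_filter.2 ⟨(Finset.mem_filter.1 hl).1, hfix⟩
    rw [hL] at this
    exact absurd this (Finset.notMem_empty l)
  · obtain ⟨hV1, _, hL2⟩ := hcond C.g C.hg1
    obtain ⟨w, hw⟩ := Finset.card_eq_one.1 hV1
    have hloopw : ∀ l ∈ fixedL C.act C.g, C.H.loopAt l = w := by
      intro l hl
      obtain ⟨h1, h2⟩ := Finset.mem_filter.1 hl
      have hc := C.act.loop_compat C.g l h1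
      rw [h2] at hc
      have : C.H.loopAt l ∈ fixedV C.act C.g :=
        Finset.mem_filter.2 ⟨C.H.ls_mem l h1, hc.symm⟩
      rw [hw, Finset.mem_singleton] at this
      exact this
    have hsplit : t = t.filter (fun l => C.tl l = l) ∪ t.filter (fun l => C.tl l ≠ l) := by
      rw [Finset.filter_union_filter_not_eq]
    have hdisj : Disjoint (t.filter (fun l => C.tl l = l)) (t.filter (fun l => C.tl l ≠ l)) :=
      Finset.disjoint_filter_filter_not t t _
    have heven2 : Even (t.filter (fun l => C.tl l ≠ l)).card := by
      apply even_card_of_invol C.tl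
      · intro l hl
        obtain ⟨h1, h2⟩ := Finset.mem_filter.1 hl
        refine Finset.mem_filter.2 ⟨hmemt l h1, ?_⟩
        rw [C.tl_tl]
        exact fun hh => h2 hh.symm
      · intro l _
        exact C.tl_tl l
      · intro l hl
        exact (Finset.mem_filter.1 hl).2
    have hfixeq : t.filter (fun l => C.tl l = l)
        = if w ∈ S then fixedL C.act C.g else ∅ := by
      ext l
      split_ifs with hwS
      · simp only [Finset.mem_filter, ht]
        constructor
        · rintro ⟨⟨h1, _⟩, h3⟩
          exact Finset.mem_filter.2 ⟨h1, h3⟩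
        · intro hl
          obtain ⟨h1, h2⟩ := Finset.mem_filter.1 hl
          exact ⟨⟨h1, by rw [hloopw l hl]; exact hwS⟩, h2⟩
      · simp only [Finset.mem_filter, ht, Finset.notMem_empty, iff_false]
        rintro ⟨⟨h1, h2⟩, h3⟩
        have : C.H.loopAt l = w := hloopw l (Finset.mem_filter.2 ⟨h1, h3⟩)
        rw [this] at h2
        exact hwS h2
    have heven1 : Even (t.filter (fun l => C.tl l = l)).card := by
      rw [hfixeq]
      split_ifs
      · rw [hL2]; exact ⟨1, rfl⟩
      · simp
    rw [LGraph.iL, ← ht, hsplit, Finset.card_union_of_disjoint hdisj]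
    exact heven1.add heven2

lemma even_kbar_of_inv {S : Finset V} (h : C.Inv S) : Even (C.H.kbar S) := by
  obtain ⟨k, hk⟩ := C.even_iE_of_inv h
  exact ⟨(S.card : ℤ) - k, by unfold LGraph.kbar; rw [hk]; push_cast; ring⟩

lemma even_kval_of_inv {S : Finset V} (h : C.Inv S) : Even (C.H.kval S) := by
  obtain ⟨k, hk⟩ := C.even_iE_of_inv h
  obtain ⟨m, hm⟩ := C.even_iL_of_inv h
  exact ⟨(S.card : ℤ) - k - m, by unfold LGraph.kval LGraph.iEL; rw [hk, hm]; push_cast; ring⟩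

end Setup
namespace Setup

variable {Γ V L : Type} [Group Γ] (C : Setup Γ V L)

/-- admissible region: subsets of `vs` avoiding `v` and `v'` -/
def Ok (S : Finset V) : Prop := S ⊆ C.H.vs ∧ C.v ∉ S ∧ C.sg C.v ∉ S

lemma ok_union {A B : Finset V} (hA : C.Ok A) (hB : C.Ok B) : C.Ok (A ∪ B) := by
  refine ⟨Finset.union_subset hA.1 hB.1, ?_, ?_⟩
  · simp [hA.2.1, hB.2.1]
  · simp [hA.2.2, hB.2.2]

lemma ok_interL {A B : Finset V} (hA : C.Ok A) : C.Ok (A ∩ B) := by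
  refine ⟨(Finset.inter_subset_left).trans hA.1, ?_, ?_⟩
  · simp only [Finset.mem_inter, not_and]
    intro h; exact absurd h hA.2.1
  · simp only [Finset.mem_inter, not_and]
    intro h; exact absurd h hA.2.2

lemma ok_gs {A : Finset V} (hA : C.Ok A) : C.Ok (C.gs A) := by
  refine ⟨C.gs_subset_vs hA.1, ?_, ?_⟩
  · rw [C.mem_gs]
    exact hA.2.2
  · rw [C.mem_gs, C.sg_sg]
    exact hA.2.1

lemma edges_sub {w a b c : V} (ha : s(w, a) ∈ C.H.es) (hb : s(w, b) ∈ C.H.es)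
    (hc : s(w, c) ∈ C.H.es) :
    ({s(w, a), s(w, b), s(w, c)} : Finset (Sym2 V)) ⊆ C.H.es := by
  intro e he
  simp only [Finset.mem_insert, Finset.mem_singleton] at he
  rcases he with rfl | rfl | rfl <;> assumption

lemma card_edges3 {w a b c : V} (hab : a ≠ b) (hac : a ≠ c) (hbc : b ≠ c) :
    ({s(w, a), s(w, b), s(w, c)} : Finset (Sym2 V)).card = 3 := by
  rw [Finset.card_insert_of_notMem, Finset.card_insert_of_notMem, Finset.card_singleton]
  · simp only [Finset.mem_singleton]
    exact fun h => hbc (Sym2.congr_right.1 h)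
  · simp only [Finset.mem_insert, Finset.mem_singleton, not_or]
    exact ⟨fun h => hab (Sym2.congr_right.1 h), fun h => hac (Sym2.congr_right.1 h)⟩

lemma card_edges2 {w a b : V} (hab : a ≠ b) :
    ({s(w, a), s(w, b)} : Finset (Sym2 V)).card = 2 := by
  rw [Finset.card_insert_of_notMem, Finset.card_singleton]
  simp only [Finset.mem_singleton]
  exact fun h => hab (Sym2.congr_right.1 h)

/-- adding a vertex with two edges into `S` -/
lemma step2 {w a b : V} (hw : w ∈ C.H.vs) (ha : s(w, a) ∈ C.H.es) (hb : s(w, b) ∈ C.H.es)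
    (hab : a ≠ b) {S : Finset V} (hS : S ⊆ C.H.vs) (hwS : w ∉ S)
    (haS : a ∈ S) (hbS : b ∈ S) :
    insert w S ⊆ C.H.vs ∧ 0 < C.H.iE (insert w S) ∧
      C.H.kbar (insert w S) ≤ C.H.kbar S ∧ C.H.kval (insert w S) ≤ C.H.kval S := by
  have hsub : insert w S ⊆ C.H.vs := Finset.insert_subset hw hS
  have hiE : C.H.iE S + 2 ≤ C.H.iE (insert w S) := by
    have := C.H.iE_add_card_le (Finset.subset_insert w S)
      (F := {s(w, a), s(w, b)}) ?_ ?_ ?_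
    · rwa [card_edges2 hab] at this
    · intro e he
      simp only [Finset.mem_insert, Finset.mem_singleton] at he
      rcases he with rfl | rfl <;> assumption
    · intro e he
      simp only [Finset.mem_insert, Finset.mem_singleton] at he
      rcases he with rfl | rfl <;>
        · intro u hu
          rw [Sym2.mem_iff] at hu
          rcases hu with rfl | rfl
          · exact Finset.mem_insert_self _ _
          · exact Finset.mem_insert_of_mem (by assumption)
    · intro e he
      simp only [Finset.mem_insert, Finset.mem_singleton] at he
      rcases he with rfl | rfl <;>
        · intro hall2
          exact hwS (hall2 w (by simp))
  have hiL : C.H.iL S ≤ C.H.iL (insert w S) := C.H.iL_mono (Finset.subset_insert w S)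
  have hcard : (insert w S).card = S.card + 1 := Finset.card_insert_of_notMem hwS
  refine ⟨hsub, by omega, ?_, ?_⟩
  · unfold LGraph.kbar
    rw [hcard]
    push_cast
    omega
  · unfold LGraph.kval LGraph.iEL
    rw [hcard]
    push_cast
    omega

/-- adding a vertex with three edges into `S` -/
lemma step3 {w a b c : V} (hw : w ∈ C.H.vs) (ha : s(w, a) ∈ C.H.es) (hb : s(w, b) ∈ C.H.es)
    (hc : s(w, c) ∈ C.H.es) (hab : a ≠ b) (hac : a ≠ c) (hbc : b ≠ c)
    {S : Finset V} (hS : S ⊆ C.H.vs) (hwS : w ∉ S)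
    (haS : a ∈ S) (hbS : b ∈ S) (hcS : c ∈ S) :
    insert w S ⊆ C.H.vs ∧ 0 < C.H.iE (insert w S) ∧
      C.H.kbar (insert w S) + 1 ≤ C.H.kbar S ∧ C.H.kval (insert w S) + 1 ≤ C.H.kval S := by
  have hsub : insert w S ⊆ C.H.vs := Finset.insert_subset hw hS
  have hiE : C.H.iE S + 3 ≤ C.H.iE (insert w S) := by
    have := C.H.iE_add_card_le (Finset.subset_insert w S)
      (F := {s(w, a), s(w, b), s(w, c)}) (C.edges_sub ha hb hc) ?_ ?_
    · rwa [card_edges3 hab hac hbc] at this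
    · intro e he
      simp only [Finset.mem_insert, Finset.mem_singleton] at he
      rcases he with rfl | rfl | rfl <;>
        · intro u hu
          rw [Sym2.mem_iff] at hu
          rcases hu with rfl | rfl
          · exact Finset.mem_insert_self _ _
          · exact Finset.mem_insert_of_mem (by assumption)
    · intro e he
      simp only [Finset.mem_insert, Finset.mem_singleton] at he
      rcases he with rfl | rfl | rfl <;>
        · intro hall2
          exact hwS (hall2 w (by simp))
  have hiL : C.H.iL S ≤ C.H.iL (insert w S) := C.H.iL_mono (Finset.subset_insert w S)
  have hcard : (insert w S).card = S.card + 1 := Finset.card_insert_of_notMem hwS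
  refine ⟨hsub, by omega, ?_, ?_⟩
  · unfold LGraph.kbar
    rw [hcard]
    push_cast
    omega
  · unfold LGraph.kval LGraph.iEL
    rw [hcard]
    push_cast
    omega

/-- two neighbours of a vertex `w` force `kbar ≥ 3`. -/
lemma twoNbrAt {w a b : V} (hw : w ∈ C.H.vs) (ha : s(w, a) ∈ C.H.es) (hb : s(w, b) ∈ C.H.es)
    (hab : a ≠ b) {S : Finset V} (hS : S ⊆ C.H.vs) (hwS : w ∉ S)
    (haS : a ∈ S) (hbS : b ∈ S) : 3 ≤ C.H.kbar S := by
  obtain ⟨hsub, hpos, hkb, _⟩ := C.step2 hw ha hb hab hS hwS haS hbS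
  have := LGraph.kbar_ge_three C.hsp hsub hpos
  linarith

/-- F1: three neighbours of `w` in `S`, `w ∉ S`. -/
lemma F1 {w a b c : V} (hw : w ∈ C.H.vs) (ha : s(w, a) ∈ C.H.es) (hb : s(w, b) ∈ C.H.es)
    (hc : s(w, c) ∈ C.H.es) (hab : a ≠ b) (hac : a ≠ c) (hbc : b ≠ c)
    {S : Finset V} (hS : S ⊆ C.H.vs) (hwS : w ∉ S)
    (haS : a ∈ S) (hbS : b ∈ S) (hcS : c ∈ S) :
    4 ≤ C.H.kbar S ∧ 1 ≤ C.H.kval S := by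
  obtain ⟨hsub, hpos, hkb, hkv⟩ := C.step3 hw ha hb hc hab hac hbc hS hwS haS hbS hcS
  have h3 := LGraph.kbar_ge_three C.hsp hsub hpos
  have h0 := LGraph.kval_nonneg C.hsp hsub
  constructor <;> linarith

/-- F2: `S` avoiding `v, v'` and containing a triple of neighbours of `v`
together with their images. -/
lemma F2 {a b c : V} (ha : s(C.v, a) ∈ C.H.es) (hb : s(C.v, b) ∈ C.H.es)
    (hc : s(C.v, c) ∈ C.H.es) (hab : a ≠ b) (hac : a ≠ c) (hbc : b ≠ c)
    {S : Finset V} (hok : C.Ok S)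
    (haS : a ∈ S) (hbS : b ∈ S) (hcS : c ∈ S)
    (haS' : C.sg a ∈ S) (hbS' : C.sg b ∈ S) (hcS' : C.sg c ∈ S) :
    5 ≤ C.H.kbar S ∧ 2 ≤ C.H.kval S := by
  obtain ⟨hS, hvS, hvS'⟩ := hok
  obtain ⟨hsub, _, hkb, hkv⟩ := C.step3 C.hv ha hb hc hab hac hbc hS hvS haS hbS hcS
  have hF1 := C.F1 (w := C.sg C.v) (a := C.sg a) (b := C.sg b) (c := C.sg c)
    C.vp_mem (C.edge_sg ha) (C.edge_sg hb) (C.edge_sg hc)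
    (fun h => hab (C.sg_inj h)) (fun h => hac (C.sg_inj h)) (fun h => hbc (C.sg_inj h))
    hsub (by
      simp only [Finset.mem_insert, not_or]
      exact ⟨C.vp_ne_v, hvS'⟩)
    (Finset.mem_insert_of_mem haS') (Finset.mem_insert_of_mem hbS')
    (Finset.mem_insert_of_mem hcS')
  constructor <;> linarith [hF1.1, hF1.2]

/-- parity-improved F2 for invariant sets -/
lemma F2inv {a b c : V} (ha : s(C.v, a) ∈ C.H.es) (hb : s(C.v, b) ∈ C.H.es)
    (hc : s(C.v, c) ∈ C.H.es) (hab : a ≠ b) (hac : a ≠ c) (hbc : b ≠ c)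
    {S : Finset V} (hok : C.Ok S) (hinv : C.Inv S)
    (haS : a ∈ S) (hbS : b ∈ S) (hcS : c ∈ S) : 6 ≤ C.H.kbar S := by
  have h5 := (C.F2 ha hb hc hab hac hbc hok haS hbS hcS
    (hinv a haS) (hinv b hbS) (hinv c hcS)).1
  obtain ⟨m, hm⟩ := C.even_kbar_of_inv hinv
  omega

/-- parity-improved two-neighbour bound for invariant sets -/
lemma twoNbrInv {a b : V} (ha : s(C.v, a) ∈ C.H.es) (hb : s(C.v, b) ∈ C.H.es)
    (hab : a ≠ b) {S : Finset V} (hok : C.Ok S) (hinv : C.Inv S)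
    (haS : a ∈ S) (hbS : b ∈ S) : 4 ≤ C.H.kbar S := by
  have h3 := C.twoNbrAt C.hv ha hb hab hok.1 hok.2.1 haS hbS
  obtain ⟨m, hm⟩ := C.even_kbar_of_inv hinv
  omega

end Setup
namespace LGraph

variable {V L : Type} {H : LGraph V L}

lemma iE_empty (H : LGraph V L) : H.iE (∅ : Finset V) = 0 := by
  apply H.iE_eq_zero
  intro e he h
  induction e using Sym2.ind with
  | _ p q => exact absurd (h p (by simp)) (Finset.notMem_empty p)

lemma kbar_empty (H : LGraph V L) : H.kbar (∅ : Finset V) = 0 := by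
  unfold kbar
  simp [H.iE_empty]

lemma iE_pos_of_edge (H : LGraph V L) {p q : V} {S : Finset V} (he : s(p, q) ∈ H.es)
    (hp : p ∈ S) (hq : q ∈ S) : 0 < H.iE S := by
  rw [iE, Finset.card_pos]
  refine ⟨s(p, q), Finset.mem_filter.2 ⟨he, ?_⟩⟩
  intro u hu
  rw [Sym2.mem_iff] at hu
  rcases hu with rfl | rfl <;> assumption

lemma dAB_pos_elim {A B : Finset V} (h : 0 < H.dAB A B) :
    ∃ e ∈ H.es, ∃ p ∈ e, ∃ q ∈ e, p ≠ q ∧ (p ∈ A ∧ p ∉ B) ∧ (q ∈ B ∧ q ∉ A) := by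
  rw [dAB, Finset.card_pos] at h
  obtain ⟨e, he⟩ := h
  obtain ⟨h1, p, hp, q, hq, h2⟩ := Finset.mem_filter.1 he
  exact ⟨e, h1, p, hp, q, hq, h2⟩

lemma dAB_pos_intro {A B : Finset V} {e : Sym2 V} (he : e ∈ H.es) {p q : V}
    (hp : p ∈ e) (hq : q ∈ e) (hpq : p ≠ q) (hpA : p ∈ A) (hpB : p ∉ B)
    (hqB : q ∈ B) (hqA : q ∉ A) : 0 < H.dAB A B := by
  rw [dAB, Finset.card_pos]
  exact ⟨e, Finset.mem_filter.2 ⟨he, p, hp, q, hq, hpq, ⟨hpA, hpB⟩, ⟨hqB, hqA⟩⟩⟩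

lemma edge_in_triple {p q r : V} {e : Sym2 V} (he : e ∈ H.es)
    (h : ∀ u ∈ e, u = p ∨ u = q ∨ u = r) :
    e = s(p, q) ∨ e = s(p, r) ∨ e = s(q, r) := by
  induction e using Sym2.ind with
  | _ i j =>
    have hd : i ≠ j := fun hij => H.es_not_diag _ he (by simp [hij])
    have hi := h i (by simp)
    have hj := h j (by simp)
    rw [Sym2.eq_iff, Sym2.eq_iff, Sym2.eq_iff]
    rcases hi with rfl | rfl | rfl <;> rcases hj with h | h | h <;> tauto

lemma iE_pair_eq_zero {p q : V} (hne : s(p, q) ∉ H.es) : H.iE {p, q} = 0 := by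
  apply H.iE_eq_zero
  intro e he h
  have h2 : ∀ u ∈ e, u = p ∨ u = q := by
    intro u hu
    have := h u hu
    simpa using this
  by_cases hpq : p = q
  · subst hpq
    induction e using Sym2.ind with
    | _ i j =>
      have hd : i ≠ j := fun hij => H.es_not_diag _ he (by simp [hij])
      have hi := h2 i (by simp)
      have hj := h2 j (by simp)
      rcases hi with rfl | rfl <;> rcases hj with rfl | rfl <;> exact hd rfl
  · exact hne (H.edge_eq_of_pair hpq he h2 ▸ he)

lemma kbar_pair {p q : V} (hpq : p ≠ q) (hne : s(p, q) ∉ H.es) : H.kbar {p, q} = 4 := by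
  unfold kbar
  rw [iE_pair_eq_zero hne, Finset.card_insert_of_notMem (by simp [hpq]),
    Finset.card_singleton]
  simp

lemma iE_triple_eq_zero {p q r : V} (h1 : s(p, q) ∉ H.es) (h2 : s(p, r) ∉ H.es)
    (h3 : s(q, r) ∉ H.es) : H.iE {p, q, r} = 0 := by
  apply H.iE_eq_zero
  intro e he h
  have h4 : ∀ u ∈ e, u = p ∨ u = q ∨ u = r := by
    intro u hu
    have := h u hu
    simpa using this
  rcases H.edge_in_triple he h4 with rfl | rfl | rfl
  · exact h1 he
  · exact h2 he
  · exact h3 he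

lemma kbar_triple {p q r : V} (hpq : p ≠ q) (hpr : p ≠ r) (hqr : q ≠ r)
    (h1 : s(p, q) ∉ H.es) (h2 : s(p, r) ∉ H.es) (h3 : s(q, r) ∉ H.es) :
    H.kbar {p, q, r} = 6 := by
  unfold kbar
  rw [iE_triple_eq_zero h1 h2 h3,
    Finset.card_insert_of_notMem (by simp [hpq, hpr]),
    Finset.card_insert_of_notMem (by simp [hqr]), Finset.card_singleton]
  simp

lemma iE_pair_edge {p q : V} (hpq : p ≠ q) (he : s(p, q) ∈ H.es) : H.iE {p, q} = 1 := by
  rw [iE]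
  have : (H.es.filter fun e => ∀ u ∈ e, u ∈ ({p, q} : Finset V)) = {s(p, q)} := by
    ext e
    simp only [Finset.mem_filter, Finset.mem_singleton]
    constructor
    · rintro ⟨he2, h⟩
      apply H.edge_eq_of_pair hpq he2
      intro u hu
      have := h u hu
      simpa using this
    · rintro rfl
      refine ⟨he, ?_⟩
      intro u hu
      rw [Sym2.mem_iff] at hu
      rcases hu with rfl | rfl <;> simp
  rw [this, Finset.card_singleton]

section SparseFacts2

variable (hsp : H.Sparse)
include hsp

lemma eq_singleton_of_kbar_le_two {X : Finset V} (hX : X ⊆ H.vs) (h : H.kbar X ≤ 2)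
    {u : V} (hu : u ∈ X) : X = {u} := by
  obtain ⟨hc, _⟩ := small_of_kbar_le_two hsp hX h
  have : 1 ≤ X.card := Finset.card_pos.2 ⟨u, hu⟩
  have : X.card = 1 := le_antisymm hc this
  obtain ⟨w, hw⟩ := Finset.card_eq_one.1 this
  rw [hw] at hu ⊢
  rw [Finset.mem_singleton] at hu
  rw [hu]

end SparseFacts2

end LGraph
namespace Setup

variable {Γ V L : Type} [Group Γ] (C : Setup Γ V L)

/-- type-V obstacle for the pair `{a,b}` -/
def isV (a b : V) (X : Finset V) : Prop :=
  C.Ok X ∧ C.Inv X ∧ a ∈ X ∧ b ∈ X ∧ C.H.kval X ≤ 0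

/-- type-B3 obstacle for the pair `{a,b}` -/
def isB3 (a b : V) (X : Finset V) : Prop :=
  C.Ok X ∧ a ∈ X ∧ b ∈ X ∧ C.H.kbar X = 3

/-- type-B4 obstacle for the pair `{a,b}` -/
def isB4 (a b : V) (X : Finset V) : Prop :=
  C.Ok X ∧ C.Inv X ∧ a ∈ X ∧ b ∈ X ∧ C.H.kbar X = 4

lemma isV_swap {a b : V} {X : Finset V} (h : C.isV a b X) : C.isV b a X :=
  ⟨h.1, h.2.1, h.2.2.2.1, h.2.2.1, h.2.2.2.2⟩

lemma isB3_swap {a b : V} {X : Finset V} (h : C.isB3 a b X) : C.isB3 b a X :=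
  ⟨h.1, h.2.2.1, h.2.1, h.2.2.2⟩

lemma isB4_swap {a b : V} {X : Finset V} (h : C.isB4 a b X) : C.isB4 b a X :=
  ⟨h.1, h.2.1, h.2.2.2.1, h.2.2.1, h.2.2.2.2⟩

lemma dcast_nonneg (A B : Finset V) : (0 : ℤ) ≤ (C.H.dAB A B : ℤ) := Int.natCast_nonneg _

/-- two V obstacles on pairs sharing `a` -/
lemma LVV {a b c : V} (hab : a ≠ b) (hac : a ≠ c) (hbc : b ≠ c)
    (ea : s(C.v, a) ∈ C.H.es) (eb : s(C.v, b) ∈ C.H.es) (ec : s(C.v, c) ∈ C.H.es)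
    {X Y : Finset V} (hX : C.isV a b X) (hY : C.isV a c Y) : False := by
  obtain ⟨hXok, hXinv, haX, hbX, hXk⟩ := hX
  obtain ⟨hYok, hYinv, haY, hcY, hYk⟩ := hY
  have hU : C.Ok (X ∪ Y) := C.ok_union hXok hYok
  have hexact := C.H.kval_union_inter X Y
  have h0 : 0 ≤ C.H.kval (X ∩ Y) :=
    LGraph.kval_nonneg C.hsp ((Finset.inter_subset_left).trans hXok.1)
  have hd := C.dcast_nonneg X Y
  have hUinv := C.inv_union hXinv hYinv
  have hF2 := C.F2 ea eb ec hab hac hbc hU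
    (Finset.mem_union.2 (Or.inl haX)) (Finset.mem_union.2 (Or.inl hbX))
    (Finset.mem_union.2 (Or.inr hcY))
    (hUinv a (Finset.mem_union.2 (Or.inl haX)))
    (hUinv b (Finset.mem_union.2 (Or.inl hbX)))
    (hUinv c (Finset.mem_union.2 (Or.inr hcY)))
  linarith [hF2.2]

/-- two B3 obstacles on pairs sharing `a`: the intersection is `{a}`. -/
lemma B3B3 {a b c : V} (hab : a ≠ b) (hac : a ≠ c) (hbc : b ≠ c)
    (ea : s(C.v, a) ∈ C.H.es) (eb : s(C.v, b) ∈ C.H.es) (ec : s(C.v, c) ∈ C.H.es)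
    {X Y : Finset V} (hX : C.isB3 a b X) (hY : C.isB3 a c Y) :
    X ∩ Y = {a} ∧ C.H.kbar (X ∪ Y) = 4 ∧ C.H.dAB X Y = 0 := by
  obtain ⟨hXok, haX, hbX, hXk⟩ := hX
  obtain ⟨hYok, haY, hcY, hYk⟩ := hY
  have hUsub : X ∪ Y ⊆ C.H.vs := Finset.union_subset hXok.1 hYok.1
  have hUv : C.v ∉ X ∪ Y := by simp [hXok.2.1, hYok.2.1]
  have hF1 := (C.F1 C.hv ea eb ec hab hac hbc hUsub hUv
    (Finset.mem_union.2 (Or.inl haX)) (Finset.mem_union.2 (Or.inl hbX))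
    (Finset.mem_union.2 (Or.inr hcY))).1
  have hexact := C.H.kbar_union_inter X Y
  have h2 : 2 ≤ C.H.kbar (X ∩ Y) :=
    LGraph.kbar_ge_two C.hsp ((Finset.inter_subset_left).trans hXok.1)
      ⟨a, Finset.mem_inter.2 ⟨haX, haY⟩⟩
  have hd := C.dcast_nonneg X Y
  have hks : C.H.kbar (X ∩ Y) ≤ 2 := by linarith
  refine ⟨LGraph.eq_singleton_of_kbar_le_two C.hsp
    ((Finset.inter_subset_left).trans hXok.1) hks (Finset.mem_inter.2 ⟨haX, haY⟩), ?_, ?_⟩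
  · linarith
  · have : (C.H.dAB X Y : ℤ) ≤ 0 := by linarith
    omega

/-- a triangle on the three neighbours contradicts sparsity -/
lemma all_edges_contra {a b c : V} (hab : a ≠ b) (hac : a ≠ c) (hbc : b ≠ c)
    (ea : s(C.v, a) ∈ C.H.es) (eb : s(C.v, b) ∈ C.H.es) (ec : s(C.v, c) ∈ C.H.es)
    (e1 : s(a, b) ∈ C.H.es) (e2 : s(a, c) ∈ C.H.es) (e3 : s(b, c) ∈ C.H.es) : False := by
  have hva : C.v ≠ a := Ne.symm (C.nbr_ne_v ea)
  have hvb : C.v ≠ b := Ne.symm (C.nbr_ne_v eb)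
  have hvc : C.v ≠ c := Ne.symm (C.nbr_ne_v ec)
  have ha_vs : a ∈ C.H.vs := C.H.es_mem _ ea a (by simp)
  have hb_vs : b ∈ C.H.vs := C.H.es_mem _ eb b (by simp)
  have hc_vs : c ∈ C.H.vs := C.H.es_mem _ ec c (by simp)
  have n1 : s(C.v, a) ≠ s(C.v, b) := by
    rw [Ne, Sym2.eq_iff]; rintro (⟨h1, h2⟩ | ⟨h1, h2⟩)
    · exact hab h2
    · exact hvb h1
  have n2 : s(C.v, a) ≠ s(C.v, c) := by
    rw [Ne, Sym2.eq_iff]; rintro (⟨h1, h2⟩ | ⟨h1, h2⟩)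
    · exact hac h2
    · exact hvc h1
  have n3 : s(C.v, a) ≠ s(a, b) := by
    rw [Ne, Sym2.eq_iff]; rintro (⟨h1, h2⟩ | ⟨h1, h2⟩)
    · exact hva h1
    · exact hvb h1
  have n4 : s(C.v, a) ≠ s(a, c) := by
    rw [Ne, Sym2.eq_iff]; rintro (⟨h1, h2⟩ | ⟨h1, h2⟩)
    · exact hva h1
    · exact hvc h1
  have n5 : s(C.v, a) ≠ s(b, c) := by
    rw [Ne, Sym2.eq_iff]; rintro (⟨h1, h2⟩ | ⟨h1, h2⟩)
    · exact hvb h1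
    · exact hvc h1
  have n6 : s(C.v, b) ≠ s(C.v, c) := by
    rw [Ne, Sym2.eq_iff]; rintro (⟨h1, h2⟩ | ⟨h1, h2⟩)
    · exact hbc h2
    · exact hvc h1
  have n7 : s(C.v, b) ≠ s(a, b) := by
    rw [Ne, Sym2.eq_iff]; rintro (⟨h1, h2⟩ | ⟨h1, h2⟩)
    · exact hva h1
    · exact hvb h1
  have n8 : s(C.v, b) ≠ s(a, c) := by
    rw [Ne, Sym2.eq_iff]; rintro (⟨h1, h2⟩ | ⟨h1, h2⟩)
    · exact hva h1
    · exact hvc h1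
  have n9 : s(C.v, b) ≠ s(b, c) := by
    rw [Ne, Sym2.eq_iff]; rintro (⟨h1, h2⟩ | ⟨h1, h2⟩)
    · exact hvb h1
    · exact hvc h1
  have n10 : s(C.v, c) ≠ s(a, b) := by
    rw [Ne, Sym2.eq_iff]; rintro (⟨h1, h2⟩ | ⟨h1, h2⟩)
    · exact hva h1
    · exact hvb h1
  have n11 : s(C.v, c) ≠ s(a, c) := by
    rw [Ne, Sym2.eq_iff]; rintro (⟨h1, h2⟩ | ⟨h1, h2⟩)
    · exact hva h1
    · exact hvc h1
  have n12 : s(C.v, c) ≠ s(b, c) := by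
    rw [Ne, Sym2.eq_iff]; rintro (⟨h1, h2⟩ | ⟨h1, h2⟩)
    · exact hvb h1
    · exact hvc h1
  have n13 : s(a, b) ≠ s(a, c) := by
    rw [Ne, Sym2.eq_iff]; rintro (⟨h1, h2⟩ | ⟨h1, h2⟩)
    · exact hbc h2
    · exact hac h1
  have n14 : s(a, b) ≠ s(b, c) := by
    rw [Ne, Sym2.eq_iff]; rintro (⟨h1, h2⟩ | ⟨h1, h2⟩)
    · exact hab h1
    · exact hac h1
  have n15 : s(a, c) ≠ s(b, c) := by
    rw [Ne, Sym2.eq_iff]; rintro (⟨h1, h2⟩ | ⟨h1, h2⟩)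
    · exact hab h1
    · exact hac h1
  set S : Finset V := {C.v, a, b, c} with hS
  have hSsub : S ⊆ C.H.vs := by
    intro u hu
    simp only [hS, Finset.mem_insert, Finset.mem_singleton] at hu
    rcases hu with rfl | rfl | rfl | rfl
    · exact C.hv
    · exact ha_vs
    · exact hb_vs
    · exact hc_vs
  set F : Finset (Sym2 V) :=
    {s(C.v, a), s(C.v, b), s(C.v, c), s(a, b), s(a, c), s(b, c)} with hF
  have hFcard : F.card = 6 := by
    rw [hF]
    rw [Finset.card_insert_of_notMem (by
      simp only [Finset.mem_insert, Finset.mem_singleton]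
      push_neg
      exact ⟨n1, n2, n3, n4, n5⟩)]
    rw [Finset.card_insert_of_notMem (by
      simp only [Finset.mem_insert, Finset.mem_singleton]
      push_neg
      exact ⟨n6, n7, n8, n9⟩)]
    rw [Finset.card_insert_of_notMem (by
      simp only [Finset.mem_insert, Finset.mem_singleton]
      push_neg
      exact ⟨n10, n11, n12⟩)]
    rw [Finset.card_insert_of_notMem (by
      simp only [Finset.mem_insert, Finset.mem_singleton]
      push_neg
      exact ⟨n13, n14⟩)]
    rw [Finset.card_insert_of_notMem (by
      simp only [Finset.mem_singleton]
      exact n15)]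
    rw [Finset.card_singleton]
  have hvS : C.v ∈ S := by simp [hS]
  have haS : a ∈ S := by simp [hS]
  have hbS : b ∈ S := by simp [hS]
  have hcS : c ∈ S := by simp [hS]
  have h6 : C.H.iE ∅ + F.card ≤ C.H.iE S := by
    apply C.H.iE_add_card_le (Finset.empty_subset S)
    · intro e he
      simp only [hF, Finset.mem_insert, Finset.mem_singleton] at he
      rcases he with rfl | rfl | rfl | rfl | rfl | rfl <;> assumption
    · intro e he
      simp only [hF, Finset.mem_insert, Finset.mem_singleton] at he
      rcases he with rfl | rfl | rfl | rfl | rfl | rfl <;>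
        · intro u hu
          rw [Sym2.mem_iff] at hu
          rcases hu with rfl | rfl <;> assumption
    · intro e he
      simp only [hF, Finset.mem_insert, Finset.mem_singleton] at he
      rcases he with rfl | rfl | rfl | rfl | rfl | rfl <;>
        · intro hall2
          exact Finset.notMem_empty _ (hall2 _ (Sym2.mem_mk_left _ _))
  rw [C.H.iE_empty, hFcard] at h6
  have hScard : S.card = 4 := by
    rw [hS]
    rw [Finset.card_insert_of_notMem (by simp [hva, hvb, hvc]),
      Finset.card_insert_of_notMem (by simp [hab, hac]),
      Finset.card_insert_of_notMem (by simp [hbc]), Finset.card_singleton]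
  have hkb : C.H.kbar S ≤ 2 := by
    unfold LGraph.kbar
    rw [hScard]
    push_cast
    omega
  have := LGraph.kbar_ge_three C.hsp hSsub (by omega)
  linarith

/-- three B3 obstacles, with the outer pair `{b,c}` a non-edge -/
lemma LB3aux {a b c : V} (hab : a ≠ b) (hac : a ≠ c) (hbc : b ≠ c)
    (ea : s(C.v, a) ∈ C.H.es) (eb : s(C.v, b) ∈ C.H.es) (ec : s(C.v, c) ∈ C.H.es)
    {X₁ X₂ X₃ : Finset V} (h1 : C.isB3 a b X₁) (h2 : C.isB3 a c X₂) (h3 : C.isB3 b c X₃)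
    (hbc_ne : s(b, c) ∉ C.H.es) : False := by
  obtain ⟨hI12, hk12, _⟩ := C.B3B3 hab hac hbc ea eb ec h1 h2
  obtain ⟨hI13, _, _⟩ := C.B3B3 hab.symm hbc hac eb ea ec (C.isB3_swap h1) h3
  obtain ⟨hI23, _, _⟩ := C.B3B3 (Ne.symm hac) (Ne.symm hbc) hab ec ea eb
    (C.isB3_swap h2) (C.isB3_swap h3)
  have hdist : (X₁ ∪ X₂) ∩ X₃ = {b, c} := by
    rw [Finset.union_inter_distrib_right, hI13, hI23]
    ext u; simp
  have hexact := C.H.kbar_union_inter (X₁ ∪ X₂) X₃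
  rw [hdist] at hexact
  have hbcpair : C.H.kbar {b, c} = 4 := LGraph.kbar_pair hbc hbc_ne
  have hUsub : (X₁ ∪ X₂) ∪ X₃ ⊆ C.H.vs :=
    Finset.union_subset (Finset.union_subset h1.1.1 h2.1.1) h3.1.1
  have hUv : C.v ∉ (X₁ ∪ X₂) ∪ X₃ := by
    simp [h1.1.2.1, h2.1.2.1, h3.1.2.1]
  have hF1 := (C.F1 C.hv ea eb ec hab hac hbc hUsub hUv
    (by simp [h1.2.1]) (by simp [h1.2.2.1]) (by simp [h2.2.2.1])).1
  have hd := C.dcast_nonneg (X₁ ∪ X₂) X₃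
  have hX3k := h3.2.2.2
  linarith

/-- three B3 obstacles are impossible -/
lemma LB3 {a b c : V} (hab : a ≠ b) (hac : a ≠ c) (hbc : b ≠ c)
    (ea : s(C.v, a) ∈ C.H.es) (eb : s(C.v, b) ∈ C.H.es) (ec : s(C.v, c) ∈ C.H.es)
    {X₁ X₂ X₃ : Finset V} (h1 : C.isB3 a b X₁) (h2 : C.isB3 a c X₂) (h3 : C.isB3 b c X₃) :
    False := by
  by_cases ne3 : s(b, c) ∈ C.H.es
  · by_cases ne2 : s(a, c) ∈ C.H.es
    · by_cases ne1 : s(a, b) ∈ C.H.es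
      · exact C.all_edges_contra hab hac hbc ea eb ec ne1 ne2 ne3
      · -- a b is the non-edge: triple (c, a, b)
        exact C.LB3aux (Ne.symm hac) (Ne.symm hbc) hab ec ea eb
          (C.isB3_swap h2) (C.isB3_swap h3) h1 ne1
    · -- a c non-edge: triple (b, a, c)
      exact C.LB3aux hab.symm hbc hac eb ea ec
        (C.isB3_swap h1) h3 h2 ne2
  · exact C.LB3aux hab hac hbc ea eb ec h1 h2 h3 ne3

/-- V obstacle + B4 obstacle sharing `a`: forces `a` fixed, intersection `{a}` -/
lemma VB4_fix {a b c : V} (hab : a ≠ b) (hac : a ≠ c) (hbc : b ≠ c)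
    (ea : s(C.v, a) ∈ C.H.es) (eb : s(C.v, b) ∈ C.H.es) (ec : s(C.v, c) ∈ C.H.es)
    {X Y : Finset V} (hX : C.isV a b X) (hY : C.isB4 a c Y) :
    C.sg a = a ∧ X ∩ Y = {a} := by
  obtain ⟨hXok, hXinv, haX, hbX, hXk⟩ := hX
  obtain ⟨hYok, hYinv, haY, hcY, hYk⟩ := hY
  have hU : C.Ok (X ∪ Y) := C.ok_union hXok hYok
  have hUinv := C.inv_union hXinv hYinv
  have hmixed := C.H.kval_union_le_mixed X Y
  have hF2 := (C.F2 ea eb ec hab hac hbc hU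
    (Finset.mem_union.2 (Or.inl haX)) (Finset.mem_union.2 (Or.inl hbX))
    (Finset.mem_union.2 (Or.inr hcY))
    (hUinv a (Finset.mem_union.2 (Or.inl haX)))
    (hUinv b (Finset.mem_union.2 (Or.inl hbX)))
    (hUinv c (Finset.mem_union.2 (Or.inr hcY)))).2
  have hks : C.H.kbar (X ∩ Y) ≤ 2 := by linarith
  have hsing := LGraph.eq_singleton_of_kbar_le_two C.hsp
    ((Finset.inter_subset_left).trans hXok.1) hks (Finset.mem_inter.2 ⟨haX, haY⟩)
  have hsa : C.sg a ∈ X ∩ Y :=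
    Finset.mem_inter.2 ⟨hXinv a haX, hYinv a haY⟩
  rw [hsing, Finset.mem_singleton] at hsa
  exact ⟨hsa, hsing⟩

/-- two B4 obstacles sharing `a`: forces `a` fixed, plus exact data -/
lemma B4B4_fix {a b c : V} (hab : a ≠ b) (hac : a ≠ c) (hbc : b ≠ c)
    (ea : s(C.v, a) ∈ C.H.es) (eb : s(C.v, b) ∈ C.H.es) (ec : s(C.v, c) ∈ C.H.es)
    {X Y : Finset V} (hX : C.isB4 a b X) (hY : C.isB4 a c Y) :
    C.sg a = a ∧ X ∩ Y = {a} ∧ C.H.kbar (X ∪ Y) = 6 ∧ C.H.dAB X Y = 0 := by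
  obtain ⟨hXok, hXinv, haX, hbX, hXk⟩ := hX
  obtain ⟨hYok, hYinv, haY, hcY, hYk⟩ := hY
  have hU : C.Ok (X ∪ Y) := C.ok_union hXok hYok
  have hUinv := C.inv_union hXinv hYinv
  have hexact := C.H.kbar_union_inter X Y
  have hF2 := C.F2inv ea eb ec hab hac hbc hU hUinv
    (Finset.mem_union.2 (Or.inl haX)) (Finset.mem_union.2 (Or.inl hbX))
    (Finset.mem_union.2 (Or.inr hcY))
  have h2 : 2 ≤ C.H.kbar (X ∩ Y) :=
    LGraph.kbar_ge_two C.hsp ((Finset.inter_subset_left).trans hXok.1)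
      ⟨a, Finset.mem_inter.2 ⟨haX, haY⟩⟩
  have hd := C.dcast_nonneg X Y
  have hks : C.H.kbar (X ∩ Y) ≤ 2 := by linarith
  have hsing := LGraph.eq_singleton_of_kbar_le_two C.hsp
    ((Finset.inter_subset_left).trans hXok.1) hks (Finset.mem_inter.2 ⟨haX, haY⟩)
  have hsa : C.sg a ∈ X ∩ Y :=
    Finset.mem_inter.2 ⟨hXinv a haX, hYinv a haY⟩
  rw [hsing, Finset.mem_singleton] at hsa
  refine ⟨hsa, hsing, by linarith, ?_⟩
  have : (C.H.dAB X Y : ℤ) ≤ 0 := by linarith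
  omega

/-- V + two B4s -/
lemma LVB4B4 {a b c : V} (hab : a ≠ b) (hac : a ≠ c) (hbc : b ≠ c)
    (ea : s(C.v, a) ∈ C.H.es) (eb : s(C.v, b) ∈ C.H.es) (ec : s(C.v, c) ∈ C.H.es)
    {X Y Z : Finset V} (hX : C.isV a b X) (hY : C.isB4 a c Y) (hZ : C.isB4 b c Z) :
    False := by
  have h1 := (C.VB4_fix hab hac hbc ea eb ec hX hY).1
  have h2 := (C.VB4_fix hab.symm hbc hac eb ea ec (C.isV_swap hX) hZ).1
  exact hab (C.fix_unique (hX.1.1 hX.2.2.1) (hX.1.1 hX.2.2.2.1) h1 h2)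

/-- three B4s -/
lemma LC5 {a b c : V} (hab : a ≠ b) (hac : a ≠ c) (hbc : b ≠ c)
    (ea : s(C.v, a) ∈ C.H.es) (eb : s(C.v, b) ∈ C.H.es) (ec : s(C.v, c) ∈ C.H.es)
    {X₁ X₂ X₃ : Finset V} (h1 : C.isB4 a b X₁) (h2 : C.isB4 a c X₂) (h3 : C.isB4 b c X₃) :
    False := by
  have ha := (C.B4B4_fix hab hac hbc ea eb ec h1 h2).1
  have hb := (C.B4B4_fix hab.symm hbc hac eb ea ec (C.isB4_swap h1) h3).1
  exact hab (C.fix_unique (h1.1.1 h1.2.2.1) (h1.1.1 h1.2.2.2.1) ha hb)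

end Setup
namespace Setup

variable {Γ V L : Type} [Group Γ] (C : Setup Γ V L)

/-- V + two B3s -/
lemma LVB3B3 {a b c : V} (hab : a ≠ b) (hac : a ≠ c) (hbc : b ≠ c)
    (ea : s(C.v, a) ∈ C.H.es) (eb : s(C.v, b) ∈ C.H.es) (ec : s(C.v, c) ∈ C.H.es)
    {X Y₁ Y₂ : Finset V} (hX : C.isV a b X) (h1 : C.isB3 a c Y₁) (h2 : C.isB3 b c Y₂) :
    False := by
  obtain ⟨hI, hkA, _⟩ := C.B3B3 (Ne.symm hac) (Ne.symm hbc) hab ec ea eb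
    (C.isB3_swap h1) (C.isB3_swap h2)
  set A := Y₁ ∪ Y₂ with hA
  have hAok : C.Ok A := C.ok_union h1.1 h2.1
  have haA : a ∈ A := Finset.mem_union.2 (Or.inl h1.2.1)
  have hbA : b ∈ A := Finset.mem_union.2 (Or.inr h2.2.1)
  have hcA : c ∈ A := Finset.mem_union.2 (Or.inr h2.2.2.1)
  obtain ⟨hXok, hXinv, haX, hbX, hXk⟩ := hX
  have hXA3 : 3 ≤ C.H.kbar (X ∩ A) := by
    apply C.twoNbrAt C.hv ea eb hab ((Finset.inter_subset_left).trans hXok.1)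
    · simp only [Finset.mem_inter, not_and]
      intro h
      exact absurd h hXok.2.1
    · exact Finset.mem_inter.2 ⟨haX, haA⟩
    · exact Finset.mem_inter.2 ⟨hbX, hbA⟩
  have hmixed1 := C.H.kval_union_le_mixed X A
  by_cases h4 : 4 ≤ C.H.kbar (X ∩ A)
  · -- kval (X ∪ A) ≤ 0, then union with gs A
    have hk1 : C.H.kval (X ∪ A) ≤ 0 := by linarith
    have hanchor : 3 ≤ C.H.kbar ((X ∪ A) ∩ C.gs A) := by
      apply C.twoNbrAt (w := C.sg C.v) C.vp_mem (C.edge_sg ea) (C.edge_sg eb)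
        (fun h => hab (C.sg_inj h))
      · exact (Finset.inter_subset_left).trans
          (Finset.union_subset hXok.1 hAok.1)
      · intro hmem
        exact (C.ok_union hXok hAok).2.2 (Finset.mem_inter.1 hmem).1
      · exact Finset.mem_inter.2 ⟨Finset.mem_union.2 (Or.inl (hXinv a haX)),
          C.mem_gs.2 (by rw [C.sg_sg]; exact haA)⟩
      · exact Finset.mem_inter.2 ⟨Finset.mem_union.2 (Or.inl (hXinv b hbX)),
          C.mem_gs.2 (by rw [C.sg_sg]; exact hbA)⟩
    have hmixed2 := C.H.kval_union_le_mixed (X ∪ A) (C.gs A)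
    have hgsA : C.H.kbar (C.gs A) = 4 := by rw [C.kbar_gs, hkA]
    have hWok : C.Ok ((X ∪ A) ∪ C.gs A) := C.ok_union (C.ok_union hXok hAok) (C.ok_gs hAok)
    have hF2 := (C.F2 ea eb ec hab hac hbc hWok
      (by simp [haX]) (by simp [hbX]) (by simp [hcA])
      (by simp [hXinv a haX]) (by simp [hXinv b hbX])
      (Finset.mem_union.2 (Or.inr (C.mem_gs.2 (by rw [C.sg_sg]; exact hcA))))).2
    linarith
  · -- the intersection is a B3 obstacle for a b
    have hM : C.isB3 a b (X ∩ A) := by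
      refine ⟨C.ok_interL hXok, Finset.mem_inter.2 ⟨haX, haA⟩,
        Finset.mem_inter.2 ⟨hbX, hbA⟩, ?_⟩
      omega
    exact C.LB3 hab hac hbc ea eb ec hM h1 h2

/-- B4 + two B3s -/
lemma LC3 {a b c : V} (hab : a ≠ b) (hac : a ≠ c) (hbc : b ≠ c)
    (ea : s(C.v, a) ∈ C.H.es) (eb : s(C.v, b) ∈ C.H.es) (ec : s(C.v, c) ∈ C.H.es)
    {X₁ X₂ X₃ : Finset V} (h1 : C.isB4 a b X₁) (h2 : C.isB3 a c X₂) (h3 : C.isB3 b c X₃) :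
    False := by
  obtain ⟨hI, hkA, _⟩ := C.B3B3 (Ne.symm hac) (Ne.symm hbc) hab ec ea eb
    (C.isB3_swap h2) (C.isB3_swap h3)
  set A := X₂ ∪ X₃ with hA
  have hAok : C.Ok A := C.ok_union h2.1 h3.1
  have haA : a ∈ A := Finset.mem_union.2 (Or.inl h2.2.1)
  have hbA : b ∈ A := Finset.mem_union.2 (Or.inr h3.2.1)
  have hcA : c ∈ A := Finset.mem_union.2 (Or.inl h2.2.2.1)
  obtain ⟨h1ok, h1inv, haX1, hbX1, h1k⟩ := h1
  have hXA3 : 3 ≤ C.H.kbar (X₁ ∩ A) := by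
    apply C.twoNbrAt C.hv ea eb hab ((Finset.inter_subset_left).trans h1ok.1)
    · simp only [Finset.mem_inter, not_and]
      intro h
      exact absurd h h1ok.2.1
    · exact Finset.mem_inter.2 ⟨haX1, haA⟩
    · exact Finset.mem_inter.2 ⟨hbX1, hbA⟩
  have hexact := C.H.kbar_union_inter X₁ A
  have hUsub : X₁ ∪ A ⊆ C.H.vs := Finset.union_subset h1ok.1 hAok.1
  have hUv : C.v ∉ X₁ ∪ A := by simp [h1ok.2.1, hAok.2.1]
  have hF1 := (C.F1 C.hv ea eb ec hab hac hbc hUsub hUv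
    (by simp [haX1]) (by simp [hbX1]) (by simp [hcA])).1
  have hd := C.dcast_nonneg X₁ A
  by_cases h4 : 4 ≤ C.H.kbar (X₁ ∩ A)
  · -- kbar (X₁ ∪ A) = 4; compare with its image
    set U := X₁ ∪ A with hU
    have haU : a ∈ U := by rw [hU]; exact Finset.mem_union.2 (Or.inl haX1)
    have hbU : b ∈ U := by rw [hU]; exact Finset.mem_union.2 (Or.inl hbX1)
    have hcU : c ∈ U := by rw [hU]; exact Finset.mem_union.2 (Or.inr hcA)
    have hsaU : C.sg a ∈ U := by rw [hU]; exact Finset.mem_union.2 (Or.inl (h1inv a haX1))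
    have hsbU : C.sg b ∈ U := by rw [hU]; exact Finset.mem_union.2 (Or.inl (h1inv b hbX1))
    have hkU : C.H.kbar U = 4 := by
      have hle : C.H.kbar U ≤ 4 := by linarith
      linarith
    have hexact2 := C.H.kbar_union_inter U (C.gs U)
    have hgsU : C.H.kbar (C.gs U) = 4 := by rw [C.kbar_gs, hkU]
    have hUok : C.Ok U := by rw [hU]; exact C.ok_union h1ok hAok
    have hWok : C.Ok (U ∪ C.gs U) := C.ok_union hUok (C.ok_gs hUok)
    have hWinv : C.Inv (U ∪ C.gs U) := C.inv_gs U
    have hF2 := C.F2inv ea eb ec hab hac hbc hWok hWinv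
      (Finset.mem_union.2 (Or.inl haU)) (Finset.mem_union.2 (Or.inl hbU))
      (Finset.mem_union.2 (Or.inl hcU))
    have hanchor : 3 ≤ C.H.kbar (U ∩ C.gs U) := by
      apply C.twoNbrAt C.hv ea eb hab ((Finset.inter_subset_left).trans hUsub)
      · intro hmem
        exact hUv (Finset.mem_inter.1 hmem).1
      · exact Finset.mem_inter.2 ⟨haU, C.mem_gs.2 hsaU⟩
      · exact Finset.mem_inter.2 ⟨hbU, C.mem_gs.2 hsbU⟩
    have hd2 := C.dcast_nonneg U (C.gs U)
    linarith
  · -- the intersection is a B3 obstacle for a b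
    have hM : C.isB3 a b (X₁ ∩ A) := by
      refine ⟨C.ok_interL h1ok, Finset.mem_inter.2 ⟨haX1, haA⟩,
        Finset.mem_inter.2 ⟨hbX1, hbA⟩, ?_⟩
      omega
    exact C.LB3 hab hac hbc ea eb ec hM h2 h3

end Setup
namespace Setup

variable {Γ V L : Type} [Group Γ] (C : Setup Γ V L)

/-- two B4s + B3 -/
lemma LC4 {a b c : V} (hab : a ≠ b) (hac : a ≠ c) (hbc : b ≠ c)
    (ea : s(C.v, a) ∈ C.H.es) (eb : s(C.v, b) ∈ C.H.es) (ec : s(C.v, c) ∈ C.H.es)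
    {X₁ X₂ X₃ : Finset V} (h1 : C.isB4 a b X₁) (h2 : C.isB4 a c X₂) (h3 : C.isB3 b c X₃) :
    False := by
  obtain ⟨hfixa, hI12, hkY, hd12⟩ := C.B4B4_fix hab hac hbc ea eb ec h1 h2
  have hYok : C.Ok (X₁ ∪ X₂) := C.ok_union h1.1 h2.1
  have hYinv : C.Inv (X₁ ∪ X₂) := C.inv_union h1.2.1 h2.2.1
  have haY : a ∈ X₁ ∪ X₂ := Finset.mem_union.2 (Or.inl h1.2.2.1)
  have hbY : b ∈ X₁ ∪ X₂ := Finset.mem_union.2 (Or.inl h1.2.2.2.1)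
  have hcY : c ∈ X₁ ∪ X₂ := Finset.mem_union.2 (Or.inr h2.2.2.2.1)
  have hbT : b ∈ (X₁ ∪ X₂) ∩ X₃ := Finset.mem_inter.2 ⟨hbY, h3.2.1⟩
  have hcT : c ∈ (X₁ ∪ X₂) ∩ X₃ := Finset.mem_inter.2 ⟨hcY, h3.2.2.1⟩
  have hT3 : 3 ≤ C.H.kbar ((X₁ ∪ X₂) ∩ X₃) := by
    apply C.twoNbrAt C.hv eb ec hbc ((Finset.inter_subset_left).trans hYok.1) ?_ hbT hcT
    intro hmem
    exact hYok.2.1 (Finset.mem_inter.1 hmem).1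
  have hexactYX := C.H.kbar_union_inter (X₁ ∪ X₂) X₃
  have hOok : C.Ok ((X₁ ∪ X₂) ∪ X₃) := C.ok_union hYok h3.1
  have hF2a := (C.F2 ea eb ec hab hac hbc hOok
    (Finset.mem_union.2 (Or.inl haY)) (Finset.mem_union.2 (Or.inl hbY))
    (Finset.mem_union.2 (Or.inl hcY))
    (Finset.mem_union.2 (Or.inl (hYinv a haY)))
    (Finset.mem_union.2 (Or.inl (hYinv b hbY)))
    (Finset.mem_union.2 (Or.inl (hYinv c hcY)))).1
  have hdYX := C.dcast_nonneg (X₁ ∪ X₂) X₃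
  have hkX3 := h3.2.2.2
  by_cases h4 : 4 ≤ C.H.kbar ((X₁ ∪ X₂) ∩ X₃)
  · -- kbar Ω = 5 where Ω = X₁ ∪ X₂ ∪ X₃
    have hkΩ : C.H.kbar ((X₁ ∪ X₂) ∪ X₃) = 5 := by linarith
    have hexact2 := C.H.kbar_union_inter ((X₁ ∪ X₂) ∪ X₃) (C.gs ((X₁ ∪ X₂) ∪ X₃))
    have hgsΩ : C.H.kbar (C.gs ((X₁ ∪ X₂) ∪ X₃)) = 5 := by rw [C.kbar_gs, hkΩ]
    have hWok : C.Ok (((X₁ ∪ X₂) ∪ X₃) ∪ C.gs ((X₁ ∪ X₂) ∪ X₃)) :=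
      C.ok_union hOok (C.ok_gs hOok)
    have haΩ : a ∈ (X₁ ∪ X₂) ∪ X₃ := Finset.mem_union.2 (Or.inl haY)
    have hbΩ : b ∈ (X₁ ∪ X₂) ∪ X₃ := Finset.mem_union.2 (Or.inl hbY)
    have hcΩ : c ∈ (X₁ ∪ X₂) ∪ X₃ := Finset.mem_union.2 (Or.inl hcY)
    have hsaΩ : C.sg a ∈ (X₁ ∪ X₂) ∪ X₃ := Finset.mem_union.2 (Or.inl (hYinv a haY))
    have hsbΩ : C.sg b ∈ (X₁ ∪ X₂) ∪ X₃ := Finset.mem_union.2 (Or.inl (hYinv b hbY))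
    have hscΩ : C.sg c ∈ (X₁ ∪ X₂) ∪ X₃ := Finset.mem_union.2 (Or.inl (hYinv c hcY))
    have hF2b := C.F2inv ea eb ec hab hac hbc hWok (C.inv_gs _)
      (Finset.mem_union.2 (Or.inl haΩ)) (Finset.mem_union.2 (Or.inl hbΩ))
      (Finset.mem_union.2 (Or.inl hcΩ))
    have hIok : C.Ok (((X₁ ∪ X₂) ∪ X₃) ∩ C.gs ((X₁ ∪ X₂) ∪ X₃)) := C.ok_interL hOok
    have hamem : a ∈ ((X₁ ∪ X₂) ∪ X₃) ∩ C.gs ((X₁ ∪ X₂) ∪ X₃) :=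
      Finset.mem_inter.2 ⟨haΩ, C.mem_gs.2 hsaΩ⟩
    have hbmem : b ∈ ((X₁ ∪ X₂) ∪ X₃) ∩ C.gs ((X₁ ∪ X₂) ∪ X₃) :=
      Finset.mem_inter.2 ⟨hbΩ, C.mem_gs.2 hsbΩ⟩
    have hcmem : c ∈ ((X₁ ∪ X₂) ∪ X₃) ∩ C.gs ((X₁ ∪ X₂) ∪ X₃) :=
      Finset.mem_inter.2 ⟨hcΩ, C.mem_gs.2 hscΩ⟩
    have hF2c := C.F2inv ea eb ec hab hac hbc hIok (C.inv_gs_inter _) hamem hbmem hcmem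
    have hd2 := C.dcast_nonneg ((X₁ ∪ X₂) ∪ X₃) (C.gs ((X₁ ∪ X₂) ∪ X₃))
    linarith
  · have hT3e : C.H.kbar ((X₁ ∪ X₂) ∩ X₃) = 3 := by linarith
    by_cases haT : a ∈ (X₁ ∪ X₂) ∩ X₃
    · have hF1 := (C.F1 C.hv ea eb ec hab hac hbc
        ((Finset.inter_subset_left).trans hYok.1)
        (fun hmem => hYok.2.1 (Finset.mem_inter.1 hmem).1) haT hbT hcT).1
      linarith
    · -- decompose T into T∩X₁ and T∩X₂ and find a crossing edge
      set T := (X₁ ∪ X₂) ∩ X₃ with hTdef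
      have hTsub : T ⊆ X₁ ∪ X₂ := Finset.inter_subset_left
      have hTeq : (T ∩ X₁) ∪ (T ∩ X₂) = T := by
        rw [← Finset.inter_union_distrib_left]
        exact Finset.inter_eq_left.2 hTsub
      have hAB : (T ∩ X₁) ∩ (T ∩ X₂) = ∅ := by
        rw [Finset.eq_empty_iff_forall_notMem]
        intro u hu
        simp only [Finset.mem_inter] at hu
        have : u ∈ X₁ ∩ X₂ := Finset.mem_inter.2 ⟨hu.1.2, hu.2.2⟩
        rw [hI12, Finset.mem_singleton] at this
        exact haT (this ▸ hu.1.1)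
      have hexact3 := C.H.kbar_union_inter (T ∩ X₁) (T ∩ X₂)
      rw [hTeq, hAB, C.H.kbar_empty] at hexact3
      have ha1 : 2 ≤ C.H.kbar (T ∩ X₁) := by
        apply LGraph.kbar_ge_two C.hsp
          ((Finset.inter_subset_right).trans h1.1.1)
        exact ⟨b, Finset.mem_inter.2 ⟨hbT, h1.2.2.2.1⟩⟩
      have hb1 : 2 ≤ C.H.kbar (T ∩ X₂) := by
        apply LGraph.kbar_ge_two C.hsp
          ((Finset.inter_subset_right).trans h2.1.1)
        exact ⟨c, Finset.mem_inter.2 ⟨hcT, h2.2.2.2.1⟩⟩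
      have hdpos : 0 < C.H.dAB (T ∩ X₁) (T ∩ X₂) := by
        have : (1 : ℤ) ≤ (C.H.dAB (T ∩ X₁) (T ∩ X₂) : ℤ) := by linarith
        omega
      obtain ⟨e, he, p, hp, q, hq, hpq, ⟨hpA, hpB⟩, ⟨hqB, hqA⟩⟩ := LGraph.dAB_pos_elim hdpos
      have hpX1 : p ∈ X₁ := (Finset.mem_inter.1 hpA).2
      have hpT : p ∈ T := (Finset.mem_inter.1 hpA).1
      have hpX2 : p ∉ X₂ := fun h => hpB (Finset.mem_inter.2 ⟨hpT, h⟩)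
      have hqX2 : q ∈ X₂ := (Finset.mem_inter.1 hqB).2
      have hqT : q ∈ T := (Finset.mem_inter.1 hqB).1
      have hqX1 : q ∉ X₁ := fun h => hqA (Finset.mem_inter.2 ⟨hqT, h⟩)
      have : 0 < C.H.dAB X₁ X₂ :=
        LGraph.dAB_pos_intro he hp hq hpq hpX1 hpX2 hqX2 hqX1
      omega

/-- V + B3 + B4 -/
lemma LVB3B4 {a b c : V} (hab : a ≠ b) (hac : a ≠ c) (hbc : b ≠ c)
    (ea : s(C.v, a) ∈ C.H.es) (eb : s(C.v, b) ∈ C.H.es) (ec : s(C.v, c) ∈ C.H.es)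
    {X Y Z : Finset V} (hX : C.isV a b X) (hY : C.isB3 a c Y) (hZ : C.isB4 b c Z)
    (hbc_ne : s(b, c) ∉ C.H.es) : False := by
  obtain ⟨hfixb, hXZ⟩ := C.VB4_fix hab.symm hbc hac eb ea ec (C.isV_swap hX) hZ
  by_cases hYg : (Y ∩ C.gs Y).Nonempty
  · -- Y ∪ gs Y is an invariant B4 obstacle for a c
    have hexact := C.H.kbar_union_inter Y (C.gs Y)
    have h2 : 2 ≤ C.H.kbar (Y ∩ C.gs Y) :=
      LGraph.kbar_ge_two C.hsp ((Finset.inter_subset_left).trans hY.1.1) hYg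
    have hd := C.dcast_nonneg Y (C.gs Y)
    have hgsY : C.H.kbar (C.gs Y) = 3 := by rw [C.kbar_gs, hY.2.2.2]
    have hU2ok : C.Ok (Y ∪ C.gs Y) := C.ok_union hY.1 (C.ok_gs hY.1)
    have hU2inv : C.Inv (Y ∪ C.gs Y) := C.inv_gs Y
    have haU2 : a ∈ Y ∪ C.gs Y := Finset.mem_union.2 (Or.inl hY.2.1)
    have hcU2 : c ∈ Y ∪ C.gs Y := Finset.mem_union.2 (Or.inl hY.2.2.1)
    have h4le : 4 ≤ C.H.kbar (Y ∪ C.gs Y) :=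
      C.twoNbrInv ea ec hac hU2ok hU2inv haU2 hcU2
    have hU2B4 : C.isB4 a c (Y ∪ C.gs Y) := by
      refine ⟨hU2ok, hU2inv, haU2, hcU2, ?_⟩
      have := hY.2.2.2
      linarith
    exact C.LVB4B4 hab hac hbc ea eb ec hX hU2B4 hZ
  · have hYe : Y ∩ C.gs Y = ∅ := Finset.not_nonempty_iff_eq_empty.1 hYg
    obtain ⟨hYok, haY, hcY, hkY⟩ := hY
    obtain ⟨hZok, hZinv, hbZ, hcZ, hkZ⟩ := hZ
    obtain ⟨hXok, hXinv, haX, hbX, hXk⟩ := hX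
    have hscZ : C.sg c ∈ Z := hZinv c hcZ
    have hscgY : C.sg c ∈ C.gs Y := C.mem_gs.2 (by rw [C.sg_sg]; exact hcY)
    have hsagY : C.sg a ∈ C.gs Y := C.mem_gs.2 (by rw [C.sg_sg]; exact haY)
    have hgsYok : C.Ok (C.gs Y) := C.ok_gs hYok
    have hgsY : C.H.kbar (C.gs Y) = 3 := by rw [C.kbar_gs, hkY]
    -- exact counts for (Y ∪ Z) and (gs Y ∪ Z)
    have hexact1 := C.H.kbar_union_inter Y Z
    have hexact2 := C.H.kbar_union_inter (C.gs Y) Z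
    have hYZ2 : 2 ≤ C.H.kbar (Y ∩ Z) :=
      LGraph.kbar_ge_two C.hsp ((Finset.inter_subset_left).trans hYok.1)
        ⟨c, Finset.mem_inter.2 ⟨hcY, hcZ⟩⟩
    have hgYZ2 : 2 ≤ C.H.kbar (C.gs Y ∩ Z) :=
      LGraph.kbar_ge_two C.hsp ((Finset.inter_subset_left).trans hgsYok.1)
        ⟨C.sg c, Finset.mem_inter.2 ⟨hscgY, hscZ⟩⟩
    have hd1 := C.dcast_nonneg Y Z
    have hd2 := C.dcast_nonneg (C.gs Y) Z
    -- the big union P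
    have hPeq : (Y ∪ Z) ∪ (C.gs Y ∪ Z) = (Y ∪ C.gs Y) ∪ Z := by
      ext u
      simp only [Finset.mem_union]
      tauto
    have hIeq : (Y ∪ Z) ∩ (C.gs Y ∪ Z) = Z := by
      ext u
      simp only [Finset.mem_inter, Finset.mem_union]
      constructor
      · rintro ⟨h1 | h1, h2 | h2⟩
        · exact absurd (Finset.mem_inter.2 ⟨h1, h2⟩)
            (by rw [hYe]; exact Finset.notMem_empty u)
        · exact h2
        · exact h1
        · exact h1
      · intro h
        exact ⟨Or.inr h, Or.inr h⟩
    have hexact3 := C.H.kbar_union_inter (Y ∪ Z) (C.gs Y ∪ Z)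
    rw [hPeq, hIeq] at hexact3
    have hPok : C.Ok ((Y ∪ C.gs Y) ∪ Z) := C.ok_union (C.ok_union hYok hgsYok) hZok
    have hPinv : C.Inv ((Y ∪ C.gs Y) ∪ Z) := C.inv_union (C.inv_gs Y) hZinv
    have hF2P := C.F2inv ea eb ec hab hac hbc hPok hPinv
      (Finset.mem_union.2 (Or.inl (Finset.mem_union.2 (Or.inl haY))))
      (Finset.mem_union.2 (Or.inr hbZ))
      (Finset.mem_union.2 (Or.inl (Finset.mem_union.2 (Or.inl hcY))))
    have hd3 := C.dcast_nonneg (Y ∪ Z) (C.gs Y ∪ Z)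
    -- forced equalities
    have hYZk : C.H.kbar (Y ∩ Z) = 2 := by linarith
    have hgYZk : C.H.kbar (C.gs Y ∩ Z) = 2 := by linarith
    have hYZsing : Y ∩ Z = {c} := LGraph.eq_singleton_of_kbar_le_two C.hsp
      ((Finset.inter_subset_left).trans hYok.1) (by linarith)
      (Finset.mem_inter.2 ⟨hcY, hcZ⟩)
    have hgYZsing : C.gs Y ∩ Z = {C.sg c} := LGraph.eq_singleton_of_kbar_le_two C.hsp
      ((Finset.inter_subset_left).trans hgsYok.1) (by linarith)
      (Finset.mem_inter.2 ⟨hscgY, hscZ⟩)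
    -- build the small kval-0 set S
    have hvX : C.v ∉ X := hXok.2.1
    have hvpX : C.sg C.v ∉ X := hXok.2.2
    have hstep1 := C.step2 C.hv ea eb hab hXok.1 hvX haX hbX
    have hstep2 := C.step2 (w := C.sg C.v) (a := C.sg a) (b := C.sg b) C.vp_mem
      (C.edge_sg ea) (C.edge_sg eb) (fun h => hab (C.sg_inj h)) hstep1.1
      (by simp only [Finset.mem_insert, not_or]; exact ⟨C.vp_ne_v, hvpX⟩)
      (Finset.mem_insert_of_mem (hXinv a haX)) (Finset.mem_insert_of_mem (hXinv b hbX))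
    have hX2k : C.H.kval (insert (C.sg C.v) (insert C.v X)) ≤ 0 := by
      have := hstep1.2.2.2
      have := hstep2.2.2.2
      linarith
    have hstepY := C.step2 C.hv ea ec hac hYok.1 hYok.2.1 haY hcY
    have hstepgY := C.step2 (w := C.sg C.v) (a := C.sg a) (b := C.sg c) C.vp_mem
      (C.edge_sg ea) (C.edge_sg ec) (fun h => hac (C.sg_inj h)) hgsYok.1 hgsYok.2.2
      hsagY hscgY
    -- S₁ = X2 ∪ Y⁺
    have hmix1 := C.H.kval_union_le_mixed (insert (C.sg C.v) (insert C.v X)) (insert C.v Y)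
    have hanch1 : 3 ≤ C.H.kbar
        ((insert (C.sg C.v) (insert C.v X)) ∩ (insert C.v Y)) := by
      apply LGraph.kbar_ge_three C.hsp
      · intro u hu
        have h1 := (Finset.mem_inter.1 hu).1
        simp only [Finset.mem_insert] at h1
        rcases h1 with rfl | rfl | h1
        · exact C.vp_mem
        · exact C.hv
        · exact hXok.1 h1
      · apply C.H.iE_pos_of_edge ea
        · exact Finset.mem_inter.2 ⟨by simp, by simp⟩
        · exact Finset.mem_inter.2 ⟨by simp [haX], by simp [haY]⟩
    have hkS1 : C.H.kval ((insert (C.sg C.v) (insert C.v X)) ∪ (insert C.v Y)) ≤ 0 := by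
      have h3 := hstepY.2.2.1
      linarith
    -- S = S₁ ∪ gY⁺
    have hmix2 := C.H.kval_union_le_mixed
      ((insert (C.sg C.v) (insert C.v X)) ∪ (insert C.v Y)) (insert (C.sg C.v) (C.gs Y))
    have hanch2 : 3 ≤ C.H.kbar
        (((insert (C.sg C.v) (insert C.v X)) ∪ (insert C.v Y)) ∩
          (insert (C.sg C.v) (C.gs Y))) := by
      apply LGraph.kbar_ge_three C.hsp
      · intro u hu
        have h1 := (Finset.mem_inter.1 hu).2
        simp only [Finset.mem_insert] at h1
        rcases h1 with rfl | h1
        · exact C.vp_mem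
        · exact hgsYok.1 h1
      · apply C.H.iE_pos_of_edge (C.edge_sg ea)
        · exact Finset.mem_inter.2 ⟨by simp, by simp⟩
        · refine Finset.mem_inter.2 ⟨by simp [hXinv a haX], by simp [hsagY]⟩
    have hkS : C.H.kval (((insert (C.sg C.v) (insert C.v X)) ∪ (insert C.v Y)) ∪
        (insert (C.sg C.v) (C.gs Y))) ≤ 0 := by
      have h3 := hstepgY.2.2.1
      linarith
    -- S ∩ Z = {b, c, sg c}
    have hbsc : b ≠ C.sg c := by
      intro h
      have h2 := congrArg C.sg h
      rw [C.sg_sg, hfixb] at h2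
      exact hbc h2
    have hcsc : c ≠ C.sg c := by
      intro h
      have hcfix : C.sg c = c := h.symm
      have hcvs : c ∈ C.H.vs := hZok.1 hcZ
      have hbvs : b ∈ C.H.vs := hZok.1 hbZ
      exact hbc (C.fix_unique hbvs hcvs hfixb hcfix)
    have hbscne : s(b, C.sg c) ∉ C.H.es := by
      intro h
      apply hbc_ne
      have := C.edge_sg h
      rwa [hfixb, C.sg_sg] at this
    have hcscne : s(c, C.sg c) ∉ C.H.es := C.no_self_edge c
    have hSZ : (((insert (C.sg C.v) (insert C.v X)) ∪ (insert C.v Y)) ∪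
        (insert (C.sg C.v) (C.gs Y))) ∩ Z = {b, c, C.sg c} := by
      ext u
      simp only [Finset.mem_inter, Finset.mem_union, Finset.mem_insert, Finset.mem_singleton]
      constructor
      · rintro ⟨hu, huZ⟩
        have hunv : u ≠ C.v := fun h => hZok.2.1 (h ▸ huZ)
        have hunvp : u ≠ C.sg C.v := fun h => hZok.2.2 (h ▸ huZ)
        rcases hu with ((rfl | rfl | huX) | (rfl | huY)) | (rfl | hugY)
        · exact absurd rfl hunvp
        · exact absurd rfl hunv
        · have : u ∈ X ∩ Z := Finset.mem_inter.2 ⟨huX, huZ⟩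
          rw [hXZ, Finset.mem_singleton] at this
          exact Or.inl this
        · exact absurd rfl hunv
        · have : u ∈ Y ∩ Z := Finset.mem_inter.2 ⟨huY, huZ⟩
          rw [hYZsing, Finset.mem_singleton] at this
          exact Or.inr (Or.inl this)
        · exact absurd rfl hunvp
        · have : u ∈ C.gs Y ∩ Z := Finset.mem_inter.2 ⟨hugY, huZ⟩
          rw [hgYZsing, Finset.mem_singleton] at this
          exact Or.inr (Or.inr this)
      · rintro (rfl | rfl | rfl)
        · exact ⟨Or.inl (Or.inl (Or.inr (Or.inr hbX))), hbZ⟩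
        · exact ⟨Or.inl (Or.inr (Or.inr hcY)), hcZ⟩
        · exact ⟨Or.inr (Or.inr hscgY), hscZ⟩
    have hktriple : C.H.kbar {b, c, C.sg c} = 6 :=
      LGraph.kbar_triple hbc hbsc hcsc hbc_ne hbscne hcscne
    have hmix3 := C.H.kval_union_le_mixed
      (((insert (C.sg C.v) (insert C.v X)) ∪ (insert C.v Y)) ∪
        (insert (C.sg C.v) (C.gs Y))) Z
    rw [hSZ, hktriple] at hmix3
    have hfinal : 0 ≤ C.H.kval ((((insert (C.sg C.v) (insert C.v X)) ∪ (insert C.v Y)) ∪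
        (insert (C.sg C.v) (C.gs Y))) ∪ Z) := by
      apply LGraph.kval_nonneg C.hsp
      apply Finset.union_subset _ hZok.1
      apply Finset.union_subset _ (Finset.insert_subset C.vp_mem (C.gs_subset_vs hYok.1))
      apply Finset.union_subset hstep2.1 (Finset.insert_subset C.hv hYok.1)
    linarith

end Setup
namespace LGraph
variable {V L : Type} {H : LGraph V L}

lemma kbar_pair_edge {p q : V} (hpq : p ≠ q) (he : s(p, q) ∈ H.es) : H.kbar {p, q} = 3 := by
  unfold kbar
  rw [iE_pair_edge hpq he, Finset.card_insert_of_notMem (by simp [hpq]),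
    Finset.card_singleton]
  simp

end LGraph

namespace Setup

variable {Γ V L : Type} [Group Γ] (C : Setup Γ V L)

/-- a blocking certificate for the pair `{a,b}` -/
def Bad (a b : V) : Prop :=
  ∃ X : Finset V, C.Ok X ∧
    ((((a ∈ X ∧ b ∈ X) ∨ (C.sg a ∈ X ∧ C.sg b ∈ X)) ∧ C.H.kval X ≤ 0) ∨
     (((a ∈ X ∧ b ∈ X) ∧ (C.sg a ∈ X ∧ C.sg b ∈ X)) ∧ C.H.kval X ≤ 1) ∨
     ((((a ∈ X ∧ b ∈ X) ∨ (C.sg a ∈ X ∧ C.sg b ∈ X)) ∧ C.H.kbar X ≤ 3)) ∨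
     (((a ∈ X ∧ b ∈ X) ∧ (C.sg a ∈ X ∧ C.sg b ∈ X)) ∧ C.H.kbar X ≤ 4))

/-- classification of obstacles for a pair of neighbours of `v` -/
lemma classify {a b : V} (hab : a ≠ b)
    (ea : s(C.v, a) ∈ C.H.es) (eb : s(C.v, b) ∈ C.H.es)
    (h : s(a, b) ∈ C.H.es ∨ C.sg a = b ∨ C.Bad a b) :
    (∃ X, C.isV a b X) ∨ (∃ X, C.isB3 a b X) ∨
      ((∃ X, C.isB4 a b X) ∧ s(a, b) ∉ C.H.es) := by
  have ha_vs : a ∈ C.H.vs := C.H.es_mem _ ea a (by simp)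
  have hb_vs : b ∈ C.H.vs := C.H.es_mem _ eb b (by simp)
  have hokpair : C.Ok {a, b} := by
    refine ⟨?_, ?_, ?_⟩
    · intro u hu
      simp only [Finset.mem_insert, Finset.mem_singleton] at hu
      rcases hu with rfl | rfl <;> assumption
    · simp only [Finset.mem_insert, Finset.mem_singleton, not_or]
      exact ⟨Ne.symm (C.nbr_ne_v ea), Ne.symm (C.nbr_ne_v eb)⟩
    · simp only [Finset.mem_insert, Finset.mem_singleton, not_or]
      exact ⟨Ne.symm (C.nbr_ne_vp ea), Ne.symm (C.nbr_ne_vp eb)⟩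
  by_cases hedge : s(a, b) ∈ C.H.es
  · -- the pair {a,b} is a B3 obstacle
    exact Or.inr (Or.inl ⟨{a, b}, hokpair, by simp, by simp,
      LGraph.kbar_pair_edge hab hedge⟩)
  rcases h with h | h | h
  · exact absurd h hedge
  · -- swapped pair: {a,b} is a B4 obstacle
    refine Or.inr (Or.inr ⟨⟨{a, b}, hokpair, ?_, by simp, by simp,
      LGraph.kbar_pair hab hedge⟩, hedge⟩)
    intro u hu
    simp only [Finset.mem_insert, Finset.mem_singleton] at hu ⊢
    rcases hu with rfl | rfl
    · exact Or.inr h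
    · left
      rw [← h, C.sg_sg]
  · obtain ⟨X, hXok, hcase⟩ := h
    have hXsub := hXok.1
    have hgsok := C.ok_gs hXok
    have hUok : C.Ok (X ∪ C.gs X) := C.ok_union hXok hgsok
    have hIok : C.Ok (X ∩ C.gs X) := C.ok_interL hXok
    have hexactV := C.H.kval_union_inter X (C.gs X)
    have hexactB := C.H.kbar_union_inter X (C.gs X)
    have hgskval : C.H.kval (C.gs X) = C.H.kval X := C.kval_gs X
    have hgskbar : C.H.kbar (C.gs X) = C.H.kbar X := C.kbar_gs X
    have hd := C.dcast_nonneg X (C.gs X)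
    have hIkv : 0 ≤ C.H.kval (X ∩ C.gs X) := LGraph.kval_nonneg C.hsp hIok.1
    have hUkv : 0 ≤ C.H.kval (X ∪ C.gs X) := LGraph.kval_nonneg C.hsp hUok.1
    -- memberships in union / inter
    have hmemU : ∀ u : V, u ∈ X ∨ C.sg u ∈ X → u ∈ X ∪ C.gs X := by
      intro u hu
      rcases hu with hu | hu
      · exact Finset.mem_union.2 (Or.inl hu)
      · exact Finset.mem_union.2 (Or.inr (C.mem_gs.2 hu))
    rcases hcase with ⟨hm, hk⟩ | ⟨hm, hk⟩ | ⟨hm, hk⟩ | ⟨hm, hk⟩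
    · -- one pair, kval ≤ 0 : V obstacle X ∪ gs X
      left
      refine ⟨X ∪ C.gs X, hUok, C.inv_gs X, ?_, ?_, by linarith⟩
      · rcases hm with hm | hm
        · exact hmemU a (Or.inl hm.1)
        · exact hmemU a (Or.inr hm.1)
      · rcases hm with hm | hm
        · exact hmemU b (Or.inl hm.2)
        · exact hmemU b (Or.inr hm.2)
    · -- both pairs, kval ≤ 1 : parity
      left
      obtain ⟨⟨haX, hbX⟩, hsaX, hsbX⟩ := hm
      obtain ⟨m, hmeq⟩ := C.even_kval_of_inv (C.inv_gs X)
      by_cases hU0 : C.H.kval (X ∪ C.gs X) ≤ 0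
      · exact ⟨X ∪ C.gs X, hUok, C.inv_gs X, hmemU a (Or.inl haX),
          hmemU b (Or.inl hbX), hU0⟩
      · have hU2 : 2 ≤ C.H.kval (X ∪ C.gs X) := by omega
        refine ⟨X ∩ C.gs X, hIok, C.inv_gs_inter X,
          Finset.mem_inter.2 ⟨haX, C.mem_gs.2 hsaX⟩,
          Finset.mem_inter.2 ⟨hbX, C.mem_gs.2 hsbX⟩, by linarith⟩
    · -- one pair, kbar ≤ 3 : B3 obstacle (X or gs X)
      right; left
      rcases hm with hm | hm
      · refine ⟨X, hXok, hm.1, hm.2, ?_⟩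
        have := C.twoNbrAt C.hv ea eb hab hXsub hXok.2.1 hm.1 hm.2
        linarith
      · refine ⟨C.gs X, hgsok, C.mem_gs.2 hm.1, C.mem_gs.2 hm.2, ?_⟩
        have := C.twoNbrAt C.hv ea eb hab hgsok.1 hgsok.2.1
          (C.mem_gs.2 hm.1) (C.mem_gs.2 hm.2)
        linarith
    · -- both pairs, kbar ≤ 4 : B3 or invariant B4
      obtain ⟨⟨haX, hbX⟩, hsaX, hsbX⟩ := hm
      by_cases h3 : C.H.kbar X ≤ 3
      · right; left
        refine ⟨X, hXok, haX, hbX, ?_⟩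
        have := C.twoNbrAt C.hv ea eb hab hXsub hXok.2.1 haX hbX
        linarith
      · right; right
        refine ⟨⟨X ∩ C.gs X, hIok, C.inv_gs_inter X,
          Finset.mem_inter.2 ⟨haX, C.mem_gs.2 hsaX⟩,
          Finset.mem_inter.2 ⟨hbX, C.mem_gs.2 hsbX⟩, ?_⟩, hedge⟩
        -- kbar of inter is 4
        have hI3 : 3 ≤ C.H.kbar (X ∩ C.gs X) := C.twoNbrAt C.hv ea eb hab hIok.1 hIok.2.1
          (Finset.mem_inter.2 ⟨haX, C.mem_gs.2 hsaX⟩)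
          (Finset.mem_inter.2 ⟨hbX, C.mem_gs.2 hsbX⟩)
        have hU3 : 3 ≤ C.H.kbar (X ∪ C.gs X) := C.twoNbrAt C.hv ea eb hab hUok.1 hUok.2.1
          (hmemU a (Or.inl haX)) (hmemU b (Or.inl hbX))
        obtain ⟨m, hmeq⟩ := C.even_kbar_of_inv (C.inv_gs X)
        obtain ⟨m2, hmeq2⟩ := C.even_kbar_of_inv (C.inv_gs_inter X)
        omega

/-- obstacle package for a pair -/
def ObsP (a b : V) : Prop :=
  (∃ X, C.isV a b X) ∨ (∃ X, C.isB3 a b X) ∨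
    ((∃ X, C.isB4 a b X) ∧ s(a, b) ∉ C.H.es)

lemma master (O1 : C.ObsP C.x C.y) (O2 : C.ObsP C.x C.z) (O3 : C.ObsP C.y C.z) :
    False := by
  have ex := C.edge_vx
  have ey := C.edge_vy
  have ez := C.edge_vz
  have hxy := C.hxy
  have hxz := C.hxz
  have hyz := C.hyz
  have swne : ∀ {p q : V}, s(p, q) ∉ C.H.es → s(q, p) ∉ C.H.es := by
    intro p q h
    rwa [Sym2.eq_swap]
  rcases O1 with ⟨X1, h1⟩ | ⟨X1, h1⟩ | ⟨⟨X1, h1⟩, hne1⟩ <;>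
    rcases O2 with ⟨X2, h2⟩ | ⟨X2, h2⟩ | ⟨⟨X2, h2⟩, hne2⟩ <;>
      rcases O3 with ⟨X3, h3⟩ | ⟨X3, h3⟩ | ⟨⟨X3, h3⟩, hne3⟩
  -- (V,V,*)
  · exact C.LVV hxy hxz hyz ex ey ez h1 h2
  · exact C.LVV hxy hxz hyz ex ey ez h1 h2
  · exact C.LVV hxy hxz hyz ex ey ez h1 h2
  -- (V,3,V)
  · exact C.LVV hxy.symm hyz hxz ey ex ez (C.isV_swap h1) h3
  -- (V,3,3)
  · exact C.LVB3B3 hxy hxz hyz ex ey ez h1 h2 h3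
  -- (V,3,4)
  · exact C.LVB3B4 hxy hxz hyz ex ey ez h1 h2 h3 hne3
  -- (V,4,V)
  · exact C.LVV hxy.symm hyz hxz ey ex ez (C.isV_swap h1) h3
  -- (V,4,3)
  · exact C.LVB3B4 hxy.symm hyz hxz ey ex ez (C.isV_swap h1) h3 h2 hne2
  -- (V,4,4)
  · exact C.LVB4B4 hxy hxz hyz ex ey ez h1 h2 h3
  -- (3,V,V)
  · exact C.LVV (Ne.symm hxz) (Ne.symm hyz) hxy ez ex ey (C.isV_swap h2) (C.isV_swap h3)
  -- (3,V,3)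
  · exact C.LVB3B3 hxz hxy (Ne.symm hyz) ex ez ey h2 h1 (C.isB3_swap h3)
  -- (3,V,4)
  · exact C.LVB3B4 hxz hxy (Ne.symm hyz) ex ez ey h2 h1 (C.isB4_swap h3)
      (swne hne3)
  -- (3,3,V)
  · exact C.LVB3B3 hyz hxy.symm (Ne.symm hxz) ey ez ex h3 (C.isB3_swap h1)
      (C.isB3_swap h2)
  -- (3,3,3)
  · exact C.LB3 hxy hxz hyz ex ey ez h1 h2 h3
  -- (3,3,4)
  · exact C.LC3 hyz hxy.symm (Ne.symm hxz) ey ez ex h3 (C.isB3_swap h1) (C.isB3_swap h2)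
  -- (3,4,V)
  · exact C.LVB3B4 hyz hxy.symm (Ne.symm hxz) ey ez ex h3 (C.isB3_swap h1)
      (C.isB4_swap h2) (swne hne2)
  -- (3,4,3)
  · exact C.LC3 hxz hxy (Ne.symm hyz) ex ez ey h2 h1 (C.isB3_swap h3)
  -- (3,4,4)
  · exact C.LC4 (Ne.symm hxz) (Ne.symm hyz) hxy ez ex ey (C.isB4_swap h2)
      (C.isB4_swap h3) h1
  -- (4,V,V)
  · exact C.LVV (Ne.symm hxz) (Ne.symm hyz) hxy ez ex ey (C.isV_swap h2) (C.isV_swap h3)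
  -- (4,V,3)
  · exact C.LVB3B4 (Ne.symm hxz) (Ne.symm hyz) hxy ez ex ey (C.isV_swap h2)
      (C.isB3_swap h3) h1 hne1
  -- (4,V,4)
  · exact C.LVB4B4 hxz hxy (Ne.symm hyz) ex ez ey h2 h1 (C.isB4_swap h3)
  -- (4,3,V)
  · exact C.LVB3B4 (Ne.symm hyz) (Ne.symm hxz) hxy.symm ez ey ex (C.isV_swap h3)
      (C.isB3_swap h2) (C.isB4_swap h1) (swne hne1)
  -- (4,3,3)
  · exact C.LC3 hxy hxz hyz ex ey ez h1 h2 h3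
  -- (4,3,4)
  · exact C.LC4 hxy.symm hyz hxz ey ex ez (C.isB4_swap h1) h3 h2
  -- (4,4,V)
  · exact C.LVB4B4 hyz hxy.symm (Ne.symm hxz) ey ez ex h3 (C.isB4_swap h1)
      (C.isB4_swap h2)
  -- (4,4,3)
  · exact C.LC4 hxy hxz hyz ex ey ez h1 h2 h3
  -- (4,4,4)
  · exact C.LC5 hxy hxz hyz ex ey ez h1 h2 h3

/-- some pair of neighbours is good -/
lemma exists_good : ∃ a b : V,
    ((a = C.x ∧ b = C.y) ∨ (a = C.x ∧ b = C.z) ∨ (a = C.y ∧ b = C.z)) ∧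
      s(a, b) ∉ C.H.es ∧ C.sg a ≠ b ∧ ¬ C.Bad a b := by
  by_cases h1 : s(C.x, C.y) ∉ C.H.es ∧ C.sg C.x ≠ C.y ∧ ¬ C.Bad C.x C.y
  · exact ⟨C.x, C.y, Or.inl ⟨rfl, rfl⟩, h1.1, h1.2.1, h1.2.2⟩
  by_cases h2 : s(C.x, C.z) ∉ C.H.es ∧ C.sg C.x ≠ C.z ∧ ¬ C.Bad C.x C.z
  · exact ⟨C.x, C.z, Or.inr (Or.inl ⟨rfl, rfl⟩), h2.1, h2.2.1, h2.2.2⟩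
  by_cases h3 : s(C.y, C.z) ∉ C.H.es ∧ C.sg C.y ≠ C.z ∧ ¬ C.Bad C.y C.z
  · exact ⟨C.y, C.z, Or.inr (Or.inr ⟨rfl, rfl⟩), h3.1, h3.2.1, h3.2.2⟩
  exfalso
  have d1 : s(C.x, C.y) ∈ C.H.es ∨ C.sg C.x = C.y ∨ C.Bad C.x C.y := by
    by_contra hc
    push_neg at hc
    exact h1 ⟨hc.1, hc.2.1, hc.2.2⟩
  have d2 : s(C.x, C.z) ∈ C.H.es ∨ C.sg C.x = C.z ∨ C.Bad C.x C.z := by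
    by_contra hc
    push_neg at hc
    exact h2 ⟨hc.1, hc.2.1, hc.2.2⟩
  have d3 : s(C.y, C.z) ∈ C.H.es ∨ C.sg C.y = C.z ∨ C.Bad C.y C.z := by
    by_contra hc
    push_neg at hc
    exact h3 ⟨hc.1, hc.2.1, hc.2.2⟩
  exact C.master (C.classify C.hxy C.edge_vx C.edge_vy d1)
    (C.classify C.hxz C.edge_vx C.edge_vz d2)
    (C.classify C.hyz C.edge_vy C.edge_vz d3)

end Setup
namespace Setup

variable {Γ V L : Type} [Group Γ] (C : Setup Γ V L)

lemma sym2_ind_pair {p q : V} {X : Finset V} (hpq : p ≠ q) :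
    (∀ u ∈ s(p, q), u ∈ X) ↔ (p ∈ X ∧ q ∈ X) := by
  constructor
  · intro h
    exact ⟨h p (by simp), h q (by simp)⟩
  · rintro ⟨h1, h2⟩ u hu
    rw [Sym2.mem_iff] at hu
    rcases hu with rfl | rfl <;> assumption

lemma loopsAt_v_empty : C.H.loopsAt C.v = ∅ :=
  Finset.card_eq_zero.1 C.hloops

lemma loopAt_ne_v {l : L} (hl : l ∈ C.H.ls) : C.H.loopAt l ≠ C.v := by
  intro h
  have : l ∈ C.H.loopsAt C.v := Finset.mem_filter.2 ⟨hl, h⟩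
  rw [C.loopsAt_v_empty] at this
  exact absurd this (Finset.notMem_empty l)

lemma loopAt_ne_vp {l : L} (hl : l ∈ C.H.ls) : C.H.loopAt l ≠ C.sg C.v := by
  intro h
  have h2 : C.H.loopAt (C.tl l) = C.v := by
    have := C.act.loop_compat C.g l hl
    rw [show C.act.toL C.g l = C.tl l from rfl] at this
    rw [this, h]
    exact C.sg_sg C.v
  exact C.loopAt_ne_v (C.act.ls_inv C.g l hl) h2

lemma ls_filter_eq : (C.H.ls.filter fun l =>
    C.H.loopAt l ≠ C.v ∧ C.H.loopAt l ≠ C.sg C.v) = C.H.ls := by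
  apply Finset.filter_true_of_mem
  intro l hl
  exact ⟨C.loopAt_ne_v hl, C.loopAt_ne_vp hl⟩

lemma edgesAt_v_eq : C.H.edgesAt C.v = {s(C.v, C.x), s(C.v, C.y), s(C.v, C.z)} := by
  symm
  apply Finset.eq_of_subset_of_card_le
  · intro e he
    simp only [Finset.mem_insert, Finset.mem_singleton] at he
    rcases he with rfl | rfl | rfl <;>
      · refine Finset.mem_filter.2 ⟨?_, by simp⟩
        first
          | exact C.edge_vx
          | exact C.edge_vy
          | exact C.edge_vz
  · rw [C.hdeg, card_edges3 C.hxy C.hxz C.hyz]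

lemma edgesAt_vp_eq : C.H.edgesAt (C.sg C.v) = (C.H.edgesAt C.v).image (Sym2.map C.sg) := by
  ext e
  simp only [LGraph.edgesAt, Finset.mem_filter, Finset.mem_image]
  constructor
  · rintro ⟨he, hv⟩
    refine ⟨Sym2.map C.sg e, ⟨C.es_sg_iff.1 (by rwa [C.map_sg_sg]), ?_⟩, C.map_sg_sg e⟩
    rw [Sym2.mem_map]
    exact ⟨C.sg C.v, hv, C.sg_sg C.v⟩
  · rintro ⟨f, ⟨hf, hvf⟩, rfl⟩
    refine ⟨C.es_sg hf, ?_⟩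
    rw [Sym2.mem_map]
    exact ⟨C.v, hvf, rfl⟩

lemma card_edgesAt_vp : (C.H.edgesAt (C.sg C.v)).card = 3 := by
  rw [C.edgesAt_vp_eq, Finset.card_image_of_injective _
    (fun e f h => by
      have := congrArg (Sym2.map C.sg) h
      rwa [C.map_sg_sg, C.map_sg_sg] at this), C.hdeg]

lemma edgesAt_disj : Disjoint (C.H.edgesAt C.v) (C.H.edgesAt (C.sg C.v)) := by
  rw [Finset.disjoint_left]
  intro e he1 he2
  obtain ⟨hes, hv1⟩ := Finset.mem_filter.1 he1
  obtain ⟨_, hv2⟩ := Finset.mem_filter.1 he2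
  have heq : e = s(C.v, C.sg C.v) :=
    Sym2.eq_of_ne_mem (Ne.symm C.vp_ne_v) hv1 hv2 (by simp) (by simp)
  exact C.vp_not_nbr (heq ▸ hes)

lemma filter_es_eq : (C.H.es.filter fun e => ∀ u ∈ e, u ≠ C.v ∧ u ≠ C.sg C.v)
    = C.H.es \ (C.H.edgesAt C.v ∪ C.H.edgesAt (C.sg C.v)) := by
  ext e
  simp only [Finset.mem_filter, Finset.mem_sdiff, Finset.mem_union, LGraph.edgesAt, not_or]
  constructor
  · rintro ⟨he, h⟩
    exact ⟨he, fun hmem => (h C.v hmem.2).1 rfl, fun hmem => (h (C.sg C.v) hmem.2).2 rfl⟩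
  · rintro ⟨he, h1, h2⟩
    refine ⟨he, fun u hu => ⟨?_, ?_⟩⟩
    · rintro rfl
      exact h1 ⟨he, hu⟩
    · rintro rfl
      exact h2 ⟨he, hu⟩

lemma card_filter_es : (C.H.es.filter fun e => ∀ u ∈ e, u ≠ C.v ∧ u ≠ C.sg C.v).card
    = C.H.es.card - 6 ∧ 6 ≤ C.H.es.card := by
  have hsub : C.H.edgesAt C.v ∪ C.H.edgesAt (C.sg C.v) ⊆ C.H.es := by
    intro e he
    rcases Finset.mem_union.1 he with h | h <;> exact (Finset.mem_filter.1 h).1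
  have hcard : (C.H.edgesAt C.v ∪ C.H.edgesAt (C.sg C.v)).card = 6 := by
    rw [Finset.card_union_of_disjoint C.edgesAt_disj, C.hdeg, C.card_edgesAt_vp]
  constructor
  · rw [C.filter_es_eq, Finset.card_sdiff_of_subset hsub, hcard]
  · rw [← hcard]
    exact Finset.card_le_card hsub

end Setup
namespace Setup

variable {Γ V L : Type} [Group Γ] (C : Setup Γ V L)

section Construction

variable {a b : V} (hab : a ≠ b) (ea : s(C.v, a) ∈ C.H.es) (eb : s(C.v, b) ∈ C.H.es)

/-- the reduced graph -/
noncomputable def newG : LGraph V L where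
  vs := C.H.vs \ {C.v, C.sg C.v}
  es := (C.H.es.filter fun e => ∀ u ∈ e, u ≠ C.v ∧ u ≠ C.sg C.v) ∪
    {s(a, b), s(C.sg a, C.sg b)}
  ls := C.H.ls.filter fun l => C.H.loopAt l ≠ C.v ∧ C.H.loopAt l ≠ C.sg C.v
  loopAt := C.H.loopAt
  es_not_diag := by
    intro e he
    rcases Finset.mem_union.1 he with h | h
    · exact C.H.es_not_diag e (Finset.mem_filter.1 h).1
    · simp only [Finset.mem_insert, Finset.mem_singleton] at h
      rcases h with rfl | rfl
      · rw [Sym2.mk_isDiag_iff]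
        exact hab
      · rw [Sym2.mk_isDiag_iff]
        exact fun h => hab (C.sg_inj h)
  es_mem := by
    intro e he u hu
    have hav : a ≠ C.v := C.nbr_ne_v ea
    have hbv : b ≠ C.v := C.nbr_ne_v eb
    have havp : a ≠ C.sg C.v := C.nbr_ne_vp ea
    have hbvp : b ≠ C.sg C.v := C.nbr_ne_vp eb
    have ha_vs : a ∈ C.H.vs := C.H.es_mem _ ea a (by simp)
    have hb_vs : b ∈ C.H.vs := C.H.es_mem _ eb b (by simp)
    rcases Finset.mem_union.1 he with h | h
    · obtain ⟨h1, h2⟩ := Finset.mem_filter.1 h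
      have hc := h2 u hu
      exact Finset.mem_sdiff.2 ⟨C.H.es_mem e h1 u hu, by simp [hc.1, hc.2]⟩
    · simp only [Finset.mem_insert, Finset.mem_singleton] at h
      rcases h with rfl | rfl
      · rw [Sym2.mem_iff] at hu
        rcases hu with rfl | rfl
        · exact Finset.mem_sdiff.2 ⟨ha_vs, by simp [hav, havp]⟩
        · exact Finset.mem_sdiff.2 ⟨hb_vs, by simp [hbv, hbvp]⟩
      · rw [Sym2.mem_iff] at hu
        rcases hu with rfl | rfl
        · refine Finset.mem_sdiff.2 ⟨C.mem_vs_sg ha_vs, ?_⟩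
          simp only [Finset.mem_insert, Finset.mem_singleton, not_or]
          exact ⟨fun h => havp (by rw [← C.sg_sg a, h]), fun h => hav (C.sg_inj h)⟩
        · refine Finset.mem_sdiff.2 ⟨C.mem_vs_sg hb_vs, ?_⟩
          simp only [Finset.mem_insert, Finset.mem_singleton, not_or]
          exact ⟨fun h => hbvp (by rw [← C.sg_sg b, h]), fun h => hbv (C.sg_inj h)⟩
  ls_mem := by
    intro l hl
    obtain ⟨h1, h2⟩ := Finset.mem_filter.1 hl
    exact Finset.mem_sdiff.2 ⟨C.H.ls_mem l h1, by simp [h2.1, h2.2]⟩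

/-- the induced action on the reduced graph -/
noncomputable def newAct : LAction Γ (C.newG hab ea eb) where
  toV := C.act.toV
  toL := C.act.toL
  vs_inv := by
    intro γ u hu
    obtain ⟨huv, hun⟩ := Finset.mem_sdiff.1 hu
    simp only [Finset.mem_insert, Finset.mem_singleton, not_or] at hun
    rcases C.hall γ with rfl | rfl
    · have h1 : C.act.toV 1 u = u := by rw [map_one]; rfl
      rw [h1]
      exact hu
    · refine Finset.mem_sdiff.2 ⟨C.mem_vs_sg huv, ?_⟩
      simp only [Finset.mem_insert, Finset.mem_singleton, not_or]
      exact ⟨fun h => hun.2 (by rw [← C.sg_sg u]; exact congrArg C.sg h),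
        fun h => hun.1 (C.sg_inj h)⟩
  es_inv := by
    intro γ e he
    rcases C.hall γ with rfl | rfl
    · have h1 : Sym2.map (⇑(C.act.toV 1)) e = e := by
        rw [map_one]
        simp [Sym2.map_id]
      rwa [h1]
    · rcases Finset.mem_union.1 he with h | h
      · obtain ⟨h1, h2⟩ := Finset.mem_filter.1 h
        apply Finset.mem_union.2
        left
        refine Finset.mem_filter.2 ⟨C.es_sg h1, ?_⟩
        intro u hu
        rw [Sym2.mem_map] at hu
        obtain ⟨w, hw, rfl⟩ := hu
        have hc := h2 w hw
        exact ⟨fun h => hc.2 (by rw [← C.sg_sg w]; exact congrArg C.sg h),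
          fun h => hc.1 (C.sg_inj h)⟩
      · simp only [Finset.mem_insert, Finset.mem_singleton] at h
        apply Finset.mem_union.2
        right
        rcases h with rfl | rfl
        · simp only [Sym2.map_pair_eq, Finset.mem_insert, Finset.mem_singleton]
          right
          rfl
        · simp only [Sym2.map_pair_eq, Finset.mem_insert, Finset.mem_singleton]
          left
          rw [show (C.act.toV C.g) (C.sg a) = C.sg (C.sg a) from rfl, C.sg_sg,
            show (C.act.toV C.g) (C.sg b) = C.sg (C.sg b) from rfl, C.sg_sg]
  ls_inv := by
    intro γ l hl
    obtain ⟨h1, h2⟩ := Finset.mem_filter.1 hl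
    rcases C.hall γ with rfl | rfl
    · have : C.act.toL 1 l = l := by rw [map_one]; rfl
      rw [this]
      exact hl
    · refine Finset.mem_filter.2 ⟨C.act.ls_inv C.g l h1, ?_⟩
      have hc : C.H.loopAt (C.act.toL C.g l) = C.sg (C.H.loopAt l) :=
        C.act.loop_compat C.g l h1
      rw [hc]
      exact ⟨fun h => h2.2 (by rw [← C.sg_sg (C.H.loopAt l)]; exact congrArg C.sg h),
        fun h => h2.1 (C.sg_inj h)⟩
  loop_compat := by
    intro γ l hl
    exact C.act.loop_compat γ l (Finset.mem_filter.1 hl).1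
  loop_fix_order := by
    intro γ l hl hfix
    exact C.act.loop_fix_order γ l (Finset.mem_filter.1 hl).1 hfix

end Construction

end Setup
namespace Setup

variable {Γ V L : Type} [Group Γ] (C : Setup Γ V L)

lemma newG_C2Tight {a b : V} (hab : a ≠ b) (ea : s(C.v, a) ∈ C.H.es)
    (eb : s(C.v, b) ∈ C.H.es) (hne : s(a, b) ∉ C.H.es) (hsw : C.sg a ≠ b)
    (hbad : ¬ C.Bad a b) : C2Tight (C.newAct hab ea eb) := by
  classical
  have ha_vs : a ∈ C.H.vs := C.H.es_mem _ ea a (by simp)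
  have hb_vs : b ∈ C.H.vs := C.H.es_mem _ eb b (by simp)
  have hsab : a ≠ C.sg b := fun h => hsw (by rw [h, C.sg_sg])
  have hsasb : C.sg a ≠ C.sg b := fun h => hab (C.sg_inj h)
  have hne2 : s(C.sg a, C.sg b) ∉ C.H.es := by
    intro h
    have := C.edge_sg h
    rw [C.sg_sg, C.sg_sg] at this
    exact hne this
  have he12 : s(a, b) ≠ s(C.sg a, C.sg b) := by
    rw [Ne, Sym2.eq_iff]
    rintro (⟨h1, h2⟩ | ⟨h1, h2⟩)
    · exact hab (C.fix_unique ha_vs hb_vs h1.symm h2.symm)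
    · exact hsab h1
  have hE : (C.newG hab ea eb).es
      = (C.H.es.filter fun e => ∀ u ∈ e, u ≠ C.v ∧ u ≠ C.sg C.v) ∪
        {s(a, b), s(C.sg a, C.sg b)} := rfl
  have hL : (C.newG hab ea eb).ls = C.H.ls := by
    show (C.H.ls.filter fun l => C.H.loopAt l ≠ C.v ∧ C.H.loopAt l ≠ C.sg C.v) = C.H.ls
    exact C.ls_filter_eq
  have hVs : (C.newG hab ea eb).vs = C.H.vs \ {C.v, C.sg C.v} := rfl
  have hDisj : Disjoint (C.H.es.filter fun e => ∀ u ∈ e, u ≠ C.v ∧ u ≠ C.sg C.v)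
      ({s(a, b), s(C.sg a, C.sg b)} : Finset (Sym2 V)) := by
    rw [Finset.disjoint_right]
    intro e he hee
    simp only [Finset.mem_insert, Finset.mem_singleton] at he
    have := (Finset.mem_filter.1 hee).1
    rcases he with rfl | rfl
    · exact hne this
    · exact hne2 this
  have hpair2 : ({s(a, b), s(C.sg a, C.sg b)} : Finset (Sym2 V)).card = 2 := by
    rw [Finset.card_insert_of_notMem (by simp [he12]), Finset.card_singleton]
  -- cardinalities
  have hvpair : ({C.v, C.sg C.v} : Finset V) ⊆ C.H.vs := by
    intro u hu
    simp only [Finset.mem_insert, Finset.mem_singleton] at hu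
    rcases hu with rfl | rfl
    · exact C.hv
    · exact C.vp_mem
  have hvpair2 : ({C.v, C.sg C.v} : Finset V).card = 2 := by
    rw [Finset.card_insert_of_notMem (by simp [Ne.symm C.vp_ne_v]), Finset.card_singleton]
  have hvs_card : (C.newG hab ea eb).vs.card = C.H.vs.card - 2 := by
    rw [hVs, Finset.card_sdiff_of_subset hvpair, hvpair2]
  have hvs_ge : 2 ≤ C.H.vs.card := by
    rw [← hvpair2]
    exact Finset.card_le_card hvpair
  have hes_card : (C.newG hab ea eb).es.card = C.H.es.card - 6 + 2 := by
    rw [hE, Finset.card_union_of_disjoint hDisj, (C.card_filter_es).1, hpair2]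
  have hes_ge : 6 ≤ C.H.es.card := (C.card_filter_es).2
  have hcnt := C.hcount
  -- induced edge count formula
  have hiE : ∀ X : Finset V, C.v ∉ X → C.sg C.v ∉ X →
      (C.newG hab ea eb).iE X = C.H.iE X
        + (if a ∈ X ∧ b ∈ X then 1 else 0)
        + (if C.sg a ∈ X ∧ C.sg b ∈ X then 1 else 0) := by
    intro X hXv hXvp
    show (((C.H.es.filter fun e => ∀ u ∈ e, u ≠ C.v ∧ u ≠ C.sg C.v) ∪
        {s(a, b), s(C.sg a, C.sg b)}).filter fun e => ∀ u ∈ e, u ∈ X).card = _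
    rw [Finset.filter_union]
    have hD2 : Disjoint ((C.H.es.filter fun e => ∀ u ∈ e, u ≠ C.v ∧ u ≠ C.sg C.v).filter
        fun e => ∀ u ∈ e, u ∈ X)
        (({s(a, b), s(C.sg a, C.sg b)} : Finset (Sym2 V)).filter fun e => ∀ u ∈ e, u ∈ X) :=
      Finset.disjoint_filter_filter hDisj
    rw [Finset.card_union_of_disjoint hD2]
    have hpart1 : ((C.H.es.filter fun e => ∀ u ∈ e, u ≠ C.v ∧ u ≠ C.sg C.v).filter
        fun e => ∀ u ∈ e, u ∈ X) = C.H.es.filter fun e => ∀ u ∈ e, u ∈ X := by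
      rw [Finset.filter_filter]
      apply Finset.filter_congr
      intro e he
      constructor
      · rintro ⟨_, h2⟩
        exact h2
      · intro h
        refine ⟨fun u hu => ⟨?_, ?_⟩, h⟩
        · rintro rfl
          exact hXv (h C.v hu)
        · rintro rfl
          exact hXvp (h (C.sg C.v) hu)
    have hiff1 : (∀ u ∈ s(a, b), u ∈ X) ↔ (a ∈ X ∧ b ∈ X) := Setup.sym2_ind_pair hab
    have hiff2 : (∀ u ∈ s(C.sg a, C.sg b), u ∈ X) ↔ (C.sg a ∈ X ∧ C.sg b ∈ X) :=
      Setup.sym2_ind_pair hsasb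
    have hpart2 : (({s(a, b), s(C.sg a, C.sg b)} : Finset (Sym2 V)).filter
        fun e => ∀ u ∈ e, u ∈ X).card
        = (if a ∈ X ∧ b ∈ X then 1 else 0)
          + (if C.sg a ∈ X ∧ C.sg b ∈ X then 1 else 0) := by
      rw [Finset.filter_insert, Finset.filter_singleton]
      by_cases h1 : a ∈ X ∧ b ∈ X <;> by_cases h2 : C.sg a ∈ X ∧ C.sg b ∈ X
      · rw [if_pos (hiff1.2 h1), if_pos (hiff2.2 h2), if_pos h1, if_pos h2,
          Finset.card_insert_of_notMem (by simp [he12]), Finset.card_singleton]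
      · rw [if_pos (hiff1.2 h1), if_neg (fun h => h2 (hiff2.1 h)), if_pos h1, if_neg h2,
          Finset.card_insert_of_notMem (by simp), Finset.card_empty]
      · rw [if_neg (fun h => h1 (hiff1.1 h)), if_pos (hiff2.2 h2), if_neg h1, if_pos h2,
          Finset.card_singleton]
      · rw [if_neg (fun h => h1 (hiff1.1 h)), if_neg (fun h => h2 (hiff2.1 h)),
          if_neg h1, if_neg h2, Finset.card_empty]
    rw [hpart1, hpart2]
    have hiEdef : C.H.iE X = (C.H.es.filter fun e => ∀ u ∈ e, u ∈ X).card := rfl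
    omega
  have hiL : ∀ X : Finset V, (C.newG hab ea eb).iL X = C.H.iL X := by
    intro X
    show ((C.newG hab ea eb).ls.filter fun l => C.H.loopAt l ∈ X).card = _
    rw [hL]
    rfl
  -- Bad transfer
  have hb1 : ∀ X : Finset V, C.Ok X →
      ((a ∈ X ∧ b ∈ X) ∨ (C.sg a ∈ X ∧ C.sg b ∈ X)) →
      1 ≤ C.H.kval X ∧ 4 ≤ C.H.kbar X := by
    intro X hok hm
    constructor
    · by_contra h
      push_neg at h
      exact hbad ⟨X, hok, Or.inl ⟨hm, by linarith⟩⟩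
    · by_contra h
      push_neg at h
      exact hbad ⟨X, hok, Or.inr (Or.inr (Or.inl ⟨hm, by linarith⟩))⟩
  have hb2 : ∀ X : Finset V, C.Ok X → (a ∈ X ∧ b ∈ X) → (C.sg a ∈ X ∧ C.sg b ∈ X) →
      2 ≤ C.H.kval X ∧ 5 ≤ C.H.kbar X := by
    intro X hok hm1 hm2
    constructor
    · by_contra h
      push_neg at h
      exact hbad ⟨X, hok, Or.inr (Or.inl ⟨⟨hm1, hm2⟩, by linarith⟩)⟩
    · by_contra h
      push_neg at h
      exact hbad ⟨X, hok, Or.inr (Or.inr (Or.inr ⟨⟨hm1, hm2⟩, by linarith⟩))⟩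
  -- Sparsity
  have hOkX : ∀ X : Finset V, X ⊆ (C.newG hab ea eb).vs →
      C.Ok X ∧ C.v ∉ X ∧ C.sg C.v ∉ X := by
    intro X hX
    have h1 : X ⊆ C.H.vs := fun u hu => (Finset.mem_sdiff.1 (hX hu)).1
    have h2 : C.v ∉ X := by
      intro h
      have := (Finset.mem_sdiff.1 (hX h)).2
      simp at this
    have h3 : C.sg C.v ∉ X := by
      intro h
      have := (Finset.mem_sdiff.1 (hX h)).2
      simp at this
    exact ⟨⟨h1, h2, h3⟩, h2, h3⟩
  have hsparse : (C.newG hab ea eb).Sparse := by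
    constructor
    · intro X hX
      obtain ⟨hOk, hXv, hXvp⟩ := hOkX X hX
      have hiEX := hiE X hXv hXvp
      have hiLX := hiL X
      show (C.newG hab ea eb).iE X + (C.newG hab ea eb).iL X ≤ 2 * X.card
      rw [hiEX, hiLX]
      by_cases h1 : a ∈ X ∧ b ∈ X <;> by_cases h2 : C.sg a ∈ X ∧ C.sg b ∈ X
      · have := (hb2 X hOk h1 h2).1
        unfold LGraph.kval LGraph.iEL at this
        rw [if_pos h1, if_pos h2]
        omega
      · have := (hb1 X hOk (Or.inl h1)).1
        unfold LGraph.kval LGraph.iEL at this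
        rw [if_pos h1, if_neg h2]
        omega
      · have := (hb1 X hOk (Or.inr h2)).1
        unfold LGraph.kval LGraph.iEL at this
        rw [if_neg h1, if_pos h2]
        omega
      · have := C.hsp.1 X hOk.1
        unfold LGraph.iEL at this
        rw [if_neg h1, if_neg h2]
        omega
    · intro X hX hpos
      obtain ⟨hOk, hXv, hXvp⟩ := hOkX X hX
      have hiEX := hiE X hXv hXvp
      rw [hiEX] at hpos ⊢
      by_cases h1 : a ∈ X ∧ b ∈ X <;> by_cases h2 : C.sg a ∈ X ∧ C.sg b ∈ X
      · have := (hb2 X hOk h1 h2).2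
        unfold LGraph.kbar at this
        rw [if_pos h1, if_pos h2] at *
        omega
      · have := (hb1 X hOk (Or.inl h1)).2
        unfold LGraph.kbar at this
        rw [if_pos h1, if_neg h2] at *
        omega
      · have := (hb1 X hOk (Or.inr h2)).2
        unfold LGraph.kbar at this
        rw [if_neg h1, if_pos h2] at *
        omega
      · rw [if_neg h1, if_neg h2] at *
        have hp2 : 0 < C.H.iE X := by omega
        have := C.hsp.2 X hOk.1 hp2
        omega
  -- tight count
  have htight' : (C.newG hab ea eb).Tight := by
    refine ⟨hsparse, ?_⟩
    rw [hes_card, hvs_card, hL]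
    omega
  -- fixed elements
  have hfe : fixedE (C.newAct hab ea eb) C.g = ∅ := by
    rw [Finset.eq_empty_iff_forall_notMem]
    intro e he
    obtain ⟨he1, he2⟩ := Finset.mem_filter.1 he
    rcases Finset.mem_union.1 he1 with h | h
    · exact C.map_ne (Finset.mem_filter.1 h).1 he2
    · simp only [Finset.mem_insert, Finset.mem_singleton] at h
      rcases h with rfl | rfl
      · rw [Sym2.map_pair_eq] at he2
        exact he12 he2.symm
      · rw [Sym2.map_pair_eq] at he2
        apply he12
        rw [← he2, show ((C.newAct hab ea eb).toV C.g) (C.sg a) = C.sg (C.sg a) from rfl,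
          show ((C.newAct hab ea eb).toV C.g) (C.sg b) = C.sg (C.sg b) from rfl,
          C.sg_sg, C.sg_sg]
  have hfL : fixedL (C.newAct hab ea eb) C.g = fixedL C.act C.g := by
    unfold fixedL
    rw [hL]
    rfl
  have hfV : ∀ u, u ∈ fixedV (C.newAct hab ea eb) C.g ↔ u ∈ fixedV C.act C.g := by
    intro u
    unfold fixedV
    simp only [Finset.mem_filter, hVs, Finset.mem_sdiff, Finset.mem_insert,
      Finset.mem_singleton, not_or]
    constructor
    · rintro ⟨⟨h1, _⟩, h3⟩
      exact ⟨h1, h3⟩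
    · rintro ⟨h1, h3⟩
      have hfix : C.sg u = u := h3
      refine ⟨⟨h1, ?_, ?_⟩, h3⟩
      · rintro rfl
        exact C.vp_ne_v hfix
      · rintro rfl
        exact C.vp_ne_v ((C.sg_sg C.v).symm.trans hfix).symm
  -- final C2 condition
  have hcond : C2Cond (C.newAct hab ea eb) := by
    rcases C.htight.2 with hnf | hfix
    · left
      intro γ hγ
      have hγg : γ = C.g := (C.hall γ).resolve_left hγ
      subst hγg
      obtain ⟨hV, _, hLfix⟩ := hnf C.g C.hg1
      refine ⟨?_, hfe, ?_⟩
      · rw [Finset.eq_empty_iff_forall_notMem]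
        intro u hu
        have := (hfV u).1 hu
        rw [hV] at this
        exact Finset.notMem_empty u this
      · rw [hfL, hLfix]
    · right
      intro γ hγ
      have hγg : γ = C.g := (C.hall γ).resolve_left hγ
      subst hγg
      obtain ⟨hV, _, hLfix⟩ := hfix C.g C.hg1
      refine ⟨?_, hfe, ?_⟩
      · rw [show fixedV (C.newAct hab ea eb) C.g = fixedV C.act C.g from
          Finset.ext hfV, hV]
      · rw [hfL, hLfix]
  exact ⟨htight', hcond⟩

end Setup
/-- in a `C₂`-tight graph, a degree-3 vertex `v` with three distinct
neighbours and no incident loop admits a symmetrised 1-reduction preserving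
`C₂`-tightness. -/

theorem statement10 {Γ V L : Type} [Group Γ] (g : Γ)
    (hg1 : g ≠ 1) (hgg : g * g = 1) (hall : ∀ x : Γ, x = 1 ∨ x = g)
    (H : LGraph V L) (act : LAction Γ H) (htight : C2Tight act)
    (v x y z : V) (hv : v ∈ H.vs)
    (hxy : x ≠ y) (hxz : x ≠ z) (hyz : y ≠ z)
    (hN : H.nbrs v = {x, y, z})
    (hdeg : (H.edgesAt v).card = 3) (hloops : (H.loopsAt v).card = 0) :
    ∃ x₁ x₂ : V, x₁ ∈ ({x, y, z} : Finset V) ∧ x₂ ∈ ({x, y, z} : Finset V) ∧ x₁ ≠ x₂ ∧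
      s(x₁, x₂) ∉ H.es ∧
      ∃ H' : LGraph V L,
        H'.vs = H.vs \ {v, act.toV g v} ∧
        H'.es = (H.es.filter fun e => ∀ u ∈ e, u ≠ v ∧ u ≠ act.toV g v) ∪
            {s(x₁, x₂), s(act.toV g x₁, act.toV g x₂)} ∧
        H'.ls = (H.ls.filter fun l => H.loopAt l ≠ v ∧ H.loopAt l ≠ act.toV g v) ∧
        (∀ l ∈ H'.ls, H'.loopAt l = H.loopAt l) ∧
        ∃ act' : LAction Γ H', act'.toV = act.toV ∧ act'.toL = act.toL ∧ C2Tight act' := by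
  classical
  set C : Setup Γ V L :=
    ⟨g, hg1, hgg, hall, H, act, htight, v, hv, x, y, z, hxy, hxz, hyz, hN, hdeg, hloops⟩
    with hC
  obtain ⟨a, b, hmem, hne, hsw, hbad⟩ := C.exists_good
  rcases hmem with ⟨ha, hb⟩ | ⟨ha, hb⟩ | ⟨ha, hb⟩ <;> rw [ha, hb] at hne hsw hbad
  · exact ⟨C.x, C.y,
      Finset.mem_insert_self x {y, z},
      Finset.mem_insert_of_mem (Finset.mem_insert_self y {z}),
      hxy, hne,
      C.newG C.hxy C.edge_vx C.edge_vy, rfl, rfl, rfl, fun l _ => rfl,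
      C.newAct C.hxy C.edge_vx C.edge_vy, rfl, rfl,
      C.newG_C2Tight C.hxy C.edge_vx C.edge_vy hne hsw hbad⟩
  · exact ⟨C.x, C.z,
      Finset.mem_insert_self x {y, z},
      Finset.mem_insert_of_mem (Finset.mem_insert_of_mem (Finset.mem_singleton_self z)),
      hxz, hne,
      C.newG C.hxz C.edge_vx C.edge_vz, rfl, rfl, rfl, fun l _ => rfl,
      C.newAct C.hxz C.edge_vx C.edge_vz, rfl, rfl,
      C.newG_C2Tight C.hxz C.edge_vx C.edge_vz hne hsw hbad⟩
  · exact ⟨C.y, C.z,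
      Finset.mem_insert_of_mem (Finset.mem_insert_self y {z}),
      Finset.mem_insert_of_mem (Finset.mem_insert_of_mem (Finset.mem_singleton_self z)),
      hyz, hne,
      C.newG C.hyz C.edge_vy C.edge_vz, rfl, rfl, rfl, fun l _ => rfl,
      C.newAct C.hyz C.edge_vy C.edge_vz, rfl, rfl,
      C.newG_C2Tight C.hyz C.edge_vy C.edge_vz hne hsw hbad⟩
end
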